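/- arXiv:2309.02672 — 13 statements merged into one kernel-verified Lean document; each statement's English description precedes it below -/
import Mathlib

section
/- Let S ⊆ ℝ^d be a nonempty bounded set that is invariant under arbitrary sign changes of coordinates and under arbitrary permutations of coordinates. Then for every orthonormal basis (u_1,…,u_d) of ℝ^d and every vector of positive reals σ = (σ_1,…,σ_d) with ∑_{i=1}^d σ_i² = 1, the privacy loss L(U,σ,S) = sup_{s∈S} ∑_{i=1}^d ⟨s,u_i⟩²/σ_i² satisfies L(U,σ,S) ≥ d·sup_{s∈S} ‖s‖₂². Moreover, for every orthonormal basis U, choosing σ_1 = σ_2 = ⋯ = σ_d = 1/√d achieves equality: L(U,σ,S) = d·sup_{s∈S} ‖s‖₂². -/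
open Finset

lemma eps_sum (d : ℕ) (j k : Fin d) :
    ∑ z : Fin d → Bool, ((if z j then (1:ℝ) else -1) * (if z k then (1:ℝ) else -1))
      = if j = k then (2:ℝ)^d else 0 := by
  rcases eq_or_ne j k with rfl | hjk
  · rw [if_pos rfl]
    have h1 : ∀ z : Fin d → Bool,
        ((if z j then (1:ℝ) else -1) * (if z j then (1:ℝ) else -1)) = 1 := by
      intro z; cases z j <;> norm_num
    rw [Finset.sum_congr rfl (fun z _ => h1 z)]
    simp [Finset.card_univ]
  · rw [if_neg hjk]
    refine Finset.sum_involution (fun z _ => Function.update z j (!z j)) ?_ ?_ ?_ ?_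
    · intro z _
      have h1 : Function.update z j (!z j) j = !z j := Function.update_self _ _ _
      have h2 : Function.update z j (!z j) k = z k :=
        Function.update_of_ne (Ne.symm hjk) _ _
      simp only [h1, h2]; cases z j <;> cases z k <;> norm_num
    · intro z _ _ heq
      have := congrFun heq j
      simp only [Function.update_self] at this
      simp at this
    · intro z _; exact Finset.mem_univ _
    · intro z _
      funext i
      by_cases hi : i = j
      · subst hi; simp
      · simp [Function.update_of_ne hi]

lemma sign_sq_sum (d : ℕ) (a : Fin d → ℝ) :
    ∑ z : Fin d → Bool, (∑ j, (if z j then (1:ℝ) else -1) * a j) ^ 2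
      = 2 ^ d * ∑ j, a j ^ 2 := by
  have expand : ∀ z : Fin d → Bool, (∑ j, (if z j then (1:ℝ) else -1) * a j) ^ 2
      = ∑ j, ∑ k, ((if z j then (1:ℝ) else -1) * (if z k then (1:ℝ) else -1)) * (a j * a k) := by
    intro z
    rw [sq, Finset.sum_mul_sum]
    exact Finset.sum_congr rfl fun j _ => Finset.sum_congr rfl fun k _ => by ring
  calc ∑ z : Fin d → Bool, (∑ j, (if z j then (1:ℝ) else -1) * a j) ^ 2
      = ∑ j, ∑ k, (a j * a k) *
          ∑ z : Fin d → Bool, ((if z j then (1:ℝ) else -1) * (if z k then (1:ℝ) else -1)) := by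
        rw [Finset.sum_congr rfl (fun z _ => expand z), Finset.sum_comm]
        refine Finset.sum_congr rfl fun j _ => ?_
        rw [Finset.sum_comm]
        refine Finset.sum_congr rfl fun k _ => ?_
        rw [Finset.mul_sum]
        exact Finset.sum_congr rfl fun z _ => by ring
    _ = ∑ j, (a j * a j) * 2 ^ d := by
        refine Finset.sum_congr rfl fun j _ => ?_
        rw [Finset.sum_congr rfl (fun k (_ : k ∈ univ) => by rw [eps_sum d j k])]
        simp only [mul_ite, mul_zero]
        rw [Finset.sum_ite_eq univ j (fun k => a j * a k * 2 ^ d)]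
        simp
    _ = 2 ^ d * ∑ j, a j ^ 2 := by
        rw [Finset.mul_sum]
        exact Finset.sum_congr rfl fun j _ => by ring

lemma parseval_aux (d : ℕ) (u : Fin d → Fin d → ℝ)
    (hcol : ∀ j k, ∑ i, u i j * u i k = if j = k then (1:ℝ) else 0) (s : Fin d → ℝ) :
    ∑ i, (∑ j, s j * u i j) ^ 2 = ∑ j, s j ^ 2 := by
  have expand : ∀ i, (∑ j, s j * u i j) ^ 2
      = ∑ j, ∑ k, (s j * s k) * (u i j * u i k) := by
    intro i
    rw [sq, Finset.sum_mul_sum]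
    exact Finset.sum_congr rfl fun j _ => Finset.sum_congr rfl fun k _ => by ring
  calc ∑ i, (∑ j, s j * u i j) ^ 2
      = ∑ j, ∑ k, (s j * s k) * ∑ i, u i j * u i k := by
        rw [Finset.sum_congr rfl (fun i _ => expand i), Finset.sum_comm]
        refine Finset.sum_congr rfl fun j _ => ?_
        rw [Finset.sum_comm]
        refine Finset.sum_congr rfl fun k _ => ?_
        rw [Finset.mul_sum]
    _ = ∑ j, s j ^ 2 := by
        refine Finset.sum_congr rfl fun j _ => ?_
        rw [Finset.sum_congr rfl (fun k (_ : k ∈ univ) => by rw [hcol j k])]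
        simp only [mul_ite, mul_one, mul_zero]
        rw [Finset.sum_ite_eq univ j (fun k => s j * s k)]
        simp [sq]

/-- For a nonempty bounded sign- and permutation-invariant set `S ⊆ ℝ^d`,
for every orthonormal basis `u` and positive `σ` with `∑ σ i ^ 2 = 1`, the privacy loss
`L(U,σ,S) = sup_{s∈S} ∑ i, ⟨s,u i⟩²/σ i²` satisfies `L ≥ d · sup_{s∈S} ‖s‖₂²`, with
equality when `σ i = 1/√d` for all `i`. -/
theorem stmt_0 (d : ℕ) (hd : 0 < d) (S : Set (Fin d → ℝ))
    (hne : S.Nonempty) (hbdd : Bornology.IsBounded S)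
    (hsign : ∀ z : Fin d → ℝ, (∀ i, z i = 1 ∨ z i = -1) →
      ∀ s ∈ S, (fun i => z i * s i) ∈ S)
    (hperm : ∀ π : Equiv.Perm (Fin d), ∀ s ∈ S, (fun i => s (π i)) ∈ S)
    (u : Fin d → Fin d → ℝ)
    (hu : ∀ i j, ∑ k, u i k * u j k = if i = j then (1 : ℝ) else 0)
    (σ : Fin d → ℝ) (hσpos : ∀ i, 0 < σ i) (hσ : ∑ i, σ i ^ 2 = 1) :
    sSup ((fun s => ∑ i, (∑ j, s j * u i j) ^ 2 / σ i ^ 2) '' S)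
      ≥ d * sSup ((fun s => ∑ j, s j ^ 2) '' S)
    ∧ ((∀ i, σ i = 1 / Real.sqrt d) →
      sSup ((fun s => ∑ i, (∑ j, s j * u i j) ^ 2 / σ i ^ 2) '' S)
        = d * sSup ((fun s => ∑ j, s j ^ 2) '' S)) := by
  haveI : NeZero d := ⟨hd.ne'⟩
  set f : (Fin d → ℝ) → ℝ := fun s => ∑ i, (∑ j, s j * u i j) ^ 2 / σ i ^ 2 with hf
  set g : (Fin d → ℝ) → ℝ := fun s => ∑ j, s j ^ 2 with hg
  have hd' : (0:ℝ) < d := by exact_mod_cast hd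
  -- column orthonormality
  have hcol : ∀ j k, ∑ i, u i j * u i k = if j = k then (1:ℝ) else 0 := by
    have hA : (Matrix.of u) * (Matrix.of u).transpose = 1 := by
      ext i j
      simpa [Matrix.mul_apply, Matrix.one_apply] using hu i j
    have hA' : (Matrix.of u).transpose * (Matrix.of u) = 1 := mul_eq_one_comm.mp hA
    intro j k
    have h3 : ((Matrix.of u).transpose * (Matrix.of u)) j k = (1 : Matrix (Fin d) (Fin d) ℝ) j k := by
      rw [hA']
    simpa [Matrix.mul_apply, Matrix.one_apply] using h3
  -- Cauchy-Schwarz : d² ≤ ∑ 1/σ i²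
  have hinv : (d:ℝ)^2 ≤ ∑ i, (σ i ^ 2)⁻¹ := by
    have h := Finset.sum_mul_sq_le_sq_mul_sq Finset.univ σ (fun i => (σ i)⁻¹)
    have h1 : ∀ i : Fin d, σ i * (σ i)⁻¹ = 1 := fun i => mul_inv_cancel₀ (hσpos i).ne'
    have h2 : ∀ i : Fin d, ((σ i)⁻¹) ^ 2 = (σ i ^ 2)⁻¹ := fun i => inv_pow _ _
    rw [Finset.sum_congr rfl (fun i _ => h1 i), Finset.sum_congr rfl (fun i _ => h2 i), hσ,
      one_mul] at h
    simpa using h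
  -- boundedness
  obtain ⟨R, hR⟩ := isBounded_iff_forall_norm_le.mp hbdd
  have hRs : ∀ s ∈ S, ∀ j, |s j| ≤ R := by
    intro s hs j
    calc |s j| = ‖s j‖ := rfl
      _ ≤ ‖s‖ := norm_le_pi_norm s j
      _ ≤ R := hR s hs
  have hR0 : 0 ≤ R := by
    obtain ⟨s0, hs0⟩ := hne
    exact le_trans (abs_nonneg _) (hRs s0 hs0 ⟨0, hd⟩)
  have hu_abs : ∀ i j, |u i j| ≤ 1 := by
    intro i j
    have h1 : u i j * u i j ≤ ∑ k, u i k * u i k :=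
      Finset.single_le_sum (f := fun k => u i k * u i k) (fun k _ => mul_self_nonneg _)
        (Finset.mem_univ j)
    rw [hu i i, if_pos rfl] at h1
    nlinarith [abs_nonneg (u i j), sq_abs (u i j)]
  have hfB : ∀ s ∈ S, f s ≤ ∑ i, ((d:ℝ) * R) ^ 2 / σ i ^ 2 := by
    intro s hs
    refine Finset.sum_le_sum fun i _ => ?_
    have habs : |∑ j, s j * u i j| ≤ (d:ℝ) * R := by
      calc |∑ j, s j * u i j| ≤ ∑ j, |s j * u i j| := Finset.abs_sum_le_sum_abs _ _
        _ ≤ ∑ _j : Fin d, R := by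
            refine Finset.sum_le_sum fun j _ => ?_
            rw [abs_mul]
            calc |s j| * |u i j| ≤ R * 1 :=
              mul_le_mul (hRs s hs j) (hu_abs i j) (abs_nonneg _) hR0
              _ = R := mul_one R
        _ = (d:ℝ) * R := by simp [mul_comm]
    have hsq : (∑ j, s j * u i j) ^ 2 ≤ ((d:ℝ) * R) ^ 2 := by
      rw [← sq_abs]
      exact pow_le_pow_left₀ (abs_nonneg _) habs 2
    gcongr
  have hbddf : BddAbove (f '' S) := by
    refine ⟨∑ i, ((d:ℝ) * R) ^ 2 / σ i ^ 2, ?_⟩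
    rintro x ⟨s, hs, rfl⟩
    exact hfB s hs
  have hbddg : BddAbove (g '' S) := by
    refine ⟨(d:ℝ) * R ^ 2, ?_⟩
    rintro x ⟨s, hs, rfl⟩
    have : g s ≤ ∑ _j : Fin d, R ^ 2 := by
      refine Finset.sum_le_sum fun j _ => ?_
      rw [← sq_abs]
      exact pow_le_pow_left₀ (abs_nonneg _) (hRs s hs j) 2
    simpa [mul_comm] using this
  -- key averaging step
  have key : ∀ s ∈ S, (d:ℝ) * g s ≤ sSup (f '' S) := by
    intro s hs
    have hmem : ∀ z : Fin d → Bool, ∀ t : Fin d,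
        (fun i => (if z i then (1:ℝ) else -1) * s (t + i)) ∈ S := by
      intro z t
      have h1 : (fun i => s ((Equiv.addLeft t) i)) ∈ S := hperm (Equiv.addLeft t) s hs
      have h2 := hsign (fun i => if z i then (1:ℝ) else -1)
        (fun i => by by_cases h : z i <;> simp [h]) _ h1
      simpa [Equiv.coe_addLeft] using h2
    have hgs0 : 0 ≤ g s := Finset.sum_nonneg fun j _ => sq_nonneg _
    have hshift : ∀ j : Fin d, ∑ t : Fin d, s (t + j) ^ 2 = g s :=
      fun j => Fintype.sum_equiv (Equiv.addRight j) _ _ (fun t => rfl)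
    have hBt : ∀ i, ∑ t : Fin d, ∑ j, (s (t + j) * u i j) ^ 2 = g s := by
      intro i
      calc ∑ t : Fin d, ∑ j, (s (t + j) * u i j) ^ 2
          = ∑ j, ∑ t : Fin d, s (t + j) ^ 2 * (u i j * u i j) := by
            rw [Finset.sum_comm]
            exact Finset.sum_congr rfl fun j _ => Finset.sum_congr rfl fun t _ => by ring
        _ = ∑ j, g s * (u i j * u i j) := by
            refine Finset.sum_congr rfl fun j _ => ?_
            rw [← Finset.sum_mul, hshift j]
        _ = g s := by rw [← Finset.mul_sum, hu i i, if_pos rfl, mul_one]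
    have step1 : ∀ t : Fin d,
        ∑ z : Fin d → Bool, f (fun i => (if z i then (1:ℝ) else -1) * s (t + i))
          = 2 ^ d * ∑ i, (∑ j, (s (t + j) * u i j) ^ 2) * (σ i ^ 2)⁻¹ := by
      intro t
      calc ∑ z : Fin d → Bool, f (fun i => (if z i then (1:ℝ) else -1) * s (t + i))
          = ∑ z : Fin d → Bool,
              ∑ i, (∑ j, (if z j then (1:ℝ) else -1) * (s (t + j) * u i j)) ^ 2 / σ i ^ 2 := by
            refine Finset.sum_congr rfl fun z _ => ?_
            simp only [hf]
            refine Finset.sum_congr rfl fun i _ => ?_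
            rw [Finset.sum_congr rfl (fun j (_ : j ∈ univ) =>
              (by ring : (if z j then (1:ℝ) else -1) * s (t + j) * u i j
                = (if z j then (1:ℝ) else -1) * (s (t + j) * u i j)))]
        _ = ∑ i, (∑ z : Fin d → Bool,
              (∑ j, (if z j then (1:ℝ) else -1) * (s (t + j) * u i j)) ^ 2) / σ i ^ 2 := by
            rw [Finset.sum_comm]
            exact Finset.sum_congr rfl fun i _ => (Finset.sum_div _ _ _).symm
        _ = ∑ i, (2 ^ d * ∑ j, (s (t + j) * u i j) ^ 2) / σ i ^ 2 := by
            refine Finset.sum_congr rfl fun i _ => ?_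
            rw [sign_sq_sum d (fun j => s (t + j) * u i j)]
        _ = 2 ^ d * ∑ i, (∑ j, (s (t + j) * u i j) ^ 2) * (σ i ^ 2)⁻¹ := by
            rw [Finset.mul_sum]
            refine Finset.sum_congr rfl fun i _ => ?_
            rw [div_eq_mul_inv]
            ring
    have hsum : ∑ t : Fin d, ∑ z : Fin d → Bool,
        f (fun i => (if z i then (1:ℝ) else -1) * s (t + i))
          = 2 ^ d * ((∑ i, (σ i ^ 2)⁻¹) * g s) := by
      calc ∑ t : Fin d, ∑ z : Fin d → Bool,
            f (fun i => (if z i then (1:ℝ) else -1) * s (t + i))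
          = ∑ t : Fin d, 2 ^ d * ∑ i, (∑ j, (s (t + j) * u i j) ^ 2) * (σ i ^ 2)⁻¹ :=
            Finset.sum_congr rfl fun t _ => step1 t
        _ = 2 ^ d * ∑ i, (∑ t : Fin d, ∑ j, (s (t + j) * u i j) ^ 2) * (σ i ^ 2)⁻¹ := by
            rw [← Finset.mul_sum]
            congr 1
            rw [Finset.sum_comm]
            exact Finset.sum_congr rfl fun i _ => (Finset.sum_mul _ _ _).symm
        _ = 2 ^ d * ((∑ i, (σ i ^ 2)⁻¹) * g s) := by
            rw [Finset.sum_congr rfl (fun i (_ : i ∈ univ) => by rw [hBt i])]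
            rw [← Finset.mul_sum]
            ring
    have hexists : ∃ w : (Fin d → Bool) × Fin d,
        (d:ℝ) * g s ≤ f (fun i => (if w.1 i then (1:ℝ) else -1) * s (w.2 + i)) := by
      have hprod : ∑ w : (Fin d → Bool) × Fin d,
          f (fun i => (if w.1 i then (1:ℝ) else -1) * s (w.2 + i))
            = ∑ t : Fin d, ∑ z : Fin d → Bool,
              f (fun i => (if z i then (1:ℝ) else -1) * s (t + i)) := by
        rw [Fintype.sum_prod_type, Finset.sum_comm]
      have hconst : ∑ _w : (Fin d → Bool) × Fin d, (d:ℝ) * g s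
          ≤ ∑ w : (Fin d → Bool) × Fin d,
              f (fun i => (if w.1 i then (1:ℝ) else -1) * s (w.2 + i)) := by
        rw [hprod, hsum, Finset.sum_const, Finset.card_univ, nsmul_eq_mul]
        have hcard : (Fintype.card ((Fin d → Bool) × Fin d) : ℝ) = 2 ^ d * d := by
          rw [Fintype.card_prod, Fintype.card_fun]
          push_cast
          simp [mul_comm]
        rw [hcard]
        calc (2:ℝ) ^ d * d * ((d:ℝ) * g s) = 2 ^ d * ((d:ℝ) ^ 2 * g s) := by ring
          _ ≤ 2 ^ d * ((∑ i, (σ i ^ 2)⁻¹) * g s) := by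
              refine mul_le_mul_of_nonneg_left ?_ (by positivity)
              exact mul_le_mul_of_nonneg_right hinv hgs0
      obtain ⟨w, _, hw⟩ := Finset.exists_le_of_sum_le Finset.univ_nonempty hconst
      exact ⟨w, hw⟩
    obtain ⟨w, hw⟩ := hexists
    exact le_trans hw (le_csSup hbddf ⟨_, hmem w.1 w.2, rfl⟩)
  -- part 1
  have part1 : (d:ℝ) * sSup (g '' S) ≤ sSup (f '' S) := by
    have h1 : sSup (g '' S) ≤ sSup (f '' S) / d := by
      apply csSup_le (hne.image g)
      rintro x ⟨s, hs, rfl⟩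
      rw [le_div_iff₀ hd']
      calc g s * d = (d:ℝ) * g s := mul_comm _ _
        _ ≤ sSup (f '' S) := key s hs
    calc (d:ℝ) * sSup (g '' S) ≤ (d:ℝ) * (sSup (f '' S) / d) :=
          mul_le_mul_of_nonneg_left h1 hd'.le
      _ = sSup (f '' S) := by field_simp
  refine ⟨part1, fun hσeq => ?_⟩
  have hσ2 : ∀ i, σ i ^ 2 = 1 / (d:ℝ) := by
    intro i
    rw [hσeq i, div_pow, one_pow, Real.sq_sqrt (Nat.cast_nonneg d)]
  have hfg : ∀ s : Fin d → ℝ, f s = (d:ℝ) * g s := by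
    intro s
    simp only [hf, hg]
    calc ∑ i, (∑ j, s j * u i j) ^ 2 / σ i ^ 2
        = ∑ i, (∑ j, s j * u i j) ^ 2 * d := by
          refine Finset.sum_congr rfl fun i _ => ?_
          rw [hσ2 i, div_div_eq_mul_div, div_one]
      _ = (∑ i, (∑ j, s j * u i j) ^ 2) * d := (Finset.sum_mul _ _ _).symm
      _ = (∑ j, s j ^ 2) * d := by rw [parseval_aux d u hcol s]
      _ = (d:ℝ) * ∑ j, s j ^ 2 := mul_comm _ _
  apply le_antisymm
  · apply csSup_le (hne.image f)
    rintro x ⟨s, hs, rfl⟩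
    rw [hfg s]
    exact mul_le_mul_of_nonneg_left (le_csSup hbddg ⟨s, hs, rfl⟩) hd'.le
  · exact part1
end

section
/- Fix m positive reals p_1,…,p_m and positive reals c_{p_1},…,c_{p_m}, and let S = ∩_{j=1}^m { s ∈ ℝ^d : ∑_{i=1}^d |s_i|^{p_j} ≤ c_{p_j}^{p_j} } be the intersection of the corresponding l_{p_j}-balls. Then for every orthonormal basis (u_1,…,u_d) of ℝ^d and every vector of positive reals σ = (σ_1,…,σ_d) with ∑_{i=1}^d σ_i² = 1, the privacy loss L(U,σ,S) = sup_{s∈S} ∑_{i=1}^d ⟨s,u_i⟩²/σ_i² satisfies L(U,σ,S) ≥ d·max{‖s‖₂² : s ∈ S}, and choosing σ_1 = ⋯ = σ_d = 1/√d achieves equality L(U,σ,S) = d·max{‖s‖₂² : s ∈ S} for every orthonormal basis U. -/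
open Finset

open Finset

lemma sign_orth {d : ℕ} {j k : Fin d} (hjk : j ≠ k) :
    ∑ ε : Fin d → Bool, ((if ε j then (1:ℝ) else -1) * (if ε k then (1:ℝ) else -1)) = 0 := by
  refine Finset.sum_involution (fun ε _ => Function.update ε j (!ε j)) ?_ ?_ (fun ε _ => Finset.mem_univ _) ?_
  · intro ε _
    simp only [Function.update_self, Function.update_of_ne (Ne.symm hjk)]
    cases h1 : ε j <;> cases h2 : ε k <;> simp
  · intro ε _ hne
    intro h
    have := congrFun h j
    simp at this
  · intro ε _
    funext x
    by_cases hx : x = j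
    · subst hx; simp
    · simp [Function.update_of_ne hx]

lemma sign_orth' {d : ℕ} (j k : Fin d) :
    ∑ ε : Fin d → Bool, ((if ε j then (1:ℝ) else -1) * (if ε k then (1:ℝ) else -1))
      = if j = k then (2:ℝ)^d else 0 := by
  by_cases h : j = k
  · subst h
    rw [if_pos rfl]
    have : ∀ ε : Fin d → Bool, ((if ε j then (1:ℝ) else -1) * (if ε j then (1:ℝ) else -1)) = 1 := by
      intro ε; cases ε j <;> simp
    rw [Finset.sum_congr rfl (fun ε _ => this ε), Finset.sum_const, Finset.card_univ]
    simp [Fintype.card_fun]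
  · rw [if_neg h, sign_orth h]

lemma sign_sum_sq {d : ℕ} (a : Fin d → ℝ) :
    ∑ ε : Fin d → Bool, (∑ j, (if ε j then (1:ℝ) else -1) * a j) ^ 2
      = 2 ^ d * ∑ j, a j ^ 2 := by
  have expand : ∀ ε : Fin d → Bool, (∑ j, (if ε j then (1:ℝ) else -1) * a j) ^ 2
      = ∑ j, ∑ k, ((if ε j then (1:ℝ) else -1) * (if ε k then (1:ℝ) else -1)) * (a j * a k) := by
    intro ε
    rw [sq, Finset.sum_mul_sum]
    refine Finset.sum_congr rfl fun j _ => Finset.sum_congr rfl fun k _ => by ring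
  rw [Finset.sum_congr rfl (fun ε _ => expand ε), Finset.sum_comm]
  have : ∀ j : Fin d, ∑ ε : Fin d → Bool, ∑ k,
      ((if ε j then (1:ℝ) else -1) * (if ε k then (1:ℝ) else -1)) * (a j * a k)
      = 2 ^ d * a j ^ 2 := by
    intro j
    rw [Finset.sum_comm]
    have : ∀ k : Fin d, ∑ ε : Fin d → Bool,
        ((if ε j then (1:ℝ) else -1) * (if ε k then (1:ℝ) else -1)) * (a j * a k)
        = (if j = k then (2:ℝ)^d else 0) * (a j * a k) := by
      intro k
      rw [← Finset.sum_mul, sign_orth']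
    rw [Finset.sum_congr rfl (fun k _ => this k)]
    simp [Finset.sum_ite_eq, sq]
  rw [Finset.sum_congr rfl (fun j _ => this j), ← Finset.mul_sum]
open Finset Matrix

lemma parseval {d : ℕ} (u : Fin d → Fin d → ℝ)
    (hu2 : ∀ j k, ∑ i, u i j * u i k = if j = k then (1:ℝ) else 0)
    (s : Fin d → ℝ) :
    ∑ i, (∑ j, s j * u i j) ^ 2 = ∑ j, s j ^ 2 := by
  have expand : ∀ i : Fin d, (∑ j, s j * u i j) ^ 2
      = ∑ j, ∑ k, (u i j * u i k) * (s j * s k) := by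
    intro i
    rw [sq, Finset.sum_mul_sum]
    exact Finset.sum_congr rfl fun j _ => Finset.sum_congr rfl fun k _ => by ring
  rw [Finset.sum_congr rfl (fun i _ => expand i), Finset.sum_comm]
  have : ∀ j : Fin d, ∑ i, ∑ k, (u i j * u i k) * (s j * s k) = s j ^ 2 := by
    intro j
    rw [Finset.sum_comm]
    have : ∀ k : Fin d, ∑ i, (u i j * u i k) * (s j * s k)
        = (if j = k then (1:ℝ) else 0) * (s j * s k) := by
      intro k; rw [← Finset.sum_mul, hu2]
    rw [Finset.sum_congr rfl (fun k _ => this k)]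
    simp [Finset.sum_ite_eq, sq]
  rw [Finset.sum_congr rfl (fun j _ => this j)]

lemma transposed {d : ℕ} (u : Fin d → Fin d → ℝ)
    (hu : ∀ i j, ∑ k, u i k * u j k = if i = j then (1 : ℝ) else 0) :
    ∀ j k, ∑ i, u i j * u i k = if j = k then (1:ℝ) else 0 := by
  intro j k
  have h1 : (Matrix.of u) * (Matrix.of u)ᵀ = 1 := by
    ext i j
    simpa [Matrix.mul_apply, Matrix.one_apply] using hu i j
  have h2 : (Matrix.of u)ᵀ * (Matrix.of u) = 1 := mul_eq_one_comm.mp h1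
  have := congrFun (congrFun h2 j) k
  simpa [Matrix.mul_apply, Matrix.one_apply, mul_comm] using this

lemma shift_sum {d : ℕ} [NeZero d] (f : Fin d → ℝ) (k : Fin d) :
    ∑ j : Fin d, f (j + k) = ∑ j, f j :=
  Fintype.sum_equiv (Equiv.addRight k) _ _ (fun _ => rfl)

lemma shift_sum' {d : ℕ} [NeZero d] (f : Fin d → ℝ) (j : Fin d) :
    ∑ k : Fin d, f (j + k) = ∑ v, f v :=
  Fintype.sum_equiv (Equiv.addLeft j) _ _ (fun _ => rfl)


/-- For `S` the intersection of `m` many `l_{p_j}`-balls of radii `c_{p_j}`,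
for every orthonormal basis `u` and positive `σ` with `∑ σ i ^ 2 = 1`, the privacy loss
satisfies `L(U,σ,S) ≥ d · sup_{s∈S} ‖s‖₂²`, with equality when `σ i = 1/√d` for all `i`. -/
theorem stmt_1 (d m : ℕ) (hd : 0 < d) (hm : 0 < m)
    (p c : Fin m → ℝ) (hp : ∀ j, 0 < p j) (hc : ∀ j, 0 < c j)
    (S : Set (Fin d → ℝ))
    (hS : S = {s : Fin d → ℝ | ∀ j, ∑ i, |s i| ^ p j ≤ c j ^ p j})
    (u : Fin d → Fin d → ℝ)
    (hu : ∀ i j, ∑ k, u i k * u j k = if i = j then (1 : ℝ) else 0)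
    (σ : Fin d → ℝ) (hσpos : ∀ i, 0 < σ i) (hσ : ∑ i, σ i ^ 2 = 1) :
    sSup ((fun s => ∑ i, (∑ j, s j * u i j) ^ 2 / σ i ^ 2) '' S)
      ≥ d * sSup ((fun s => ∑ j, s j ^ 2) '' S)
    ∧ ((∀ i, σ i = 1 / Real.sqrt d) →
      sSup ((fun s => ∑ i, (∑ j, s j * u i j) ^ 2 / σ i ^ 2) '' S)
        = d * sSup ((fun s => ∑ j, s j ^ 2) '' S)) := by
  haveI : NeZero d := ⟨hd.ne'⟩
  haveI : Nonempty (Fin d) := Fin.pos_iff_nonempty.mp hd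
  have hd0 : (0:ℝ) < d := by exact_mod_cast hd
  set N : (Fin d → ℝ) → ℝ := fun s => ∑ j, s j ^ 2 with hNdef
  set L : (Fin d → ℝ) → ℝ := fun s => ∑ i, (∑ j, s j * u i j) ^ 2 / σ i ^ 2 with hLdef
  set j0 : Fin m := ⟨0, hm⟩ with hj0
  have hmem : ∀ s, s ∈ S ↔ ∀ j, ∑ i, |s i| ^ p j ≤ c j ^ p j := by
    intro s; rw [hS]; exact Iff.rfl
  have h0S : (0 : Fin d → ℝ) ∈ S := by
    rw [hmem]
    intro j
    have : ∀ i : Fin d, |(0 : Fin d → ℝ) i| ^ p j = 0 := by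
      intro i; simp [Real.zero_rpow (hp j).ne']
    rw [Finset.sum_congr rfl fun i _ => this i, Finset.sum_const_zero]
    exact (Real.rpow_pos_of_pos (hc j) _).le
  have hSne : S.Nonempty := ⟨0, h0S⟩
  have habs : ∀ s ∈ S, ∀ i, |s i| ≤ c j0 := by
    intro s hs i
    have h1 : |s i| ^ p j0 ≤ c j0 ^ p j0 :=
      le_trans (Finset.single_le_sum
        (fun i _ => Real.rpow_nonneg (abs_nonneg _) _) (Finset.mem_univ i)) ((hmem s).mp hs j0)
    exact (Real.rpow_le_rpow_iff (abs_nonneg _) (hc j0).le (hp j0)).mp h1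
  have hN0 : ∀ s, 0 ≤ N s := fun s => Finset.sum_nonneg fun j _ => sq_nonneg _
  have hNle : ∀ s ∈ S, N s ≤ d * c j0 ^ 2 := by
    intro s hs
    calc N s ≤ ∑ _j : Fin d, c j0 ^ 2 := Finset.sum_le_sum fun j _ => by
          rw [← sq_abs]; exact pow_le_pow_left₀ (abs_nonneg _) (habs s hs j) 2
      _ = d * c j0 ^ 2 := by
          rw [Finset.sum_const, Finset.card_univ, Fintype.card_fin, nsmul_eq_mul]
  have hNbdd : BddAbove (N '' S) := by
    refine ⟨d * c j0 ^ 2, ?_⟩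
    rintro _ ⟨s, hs, rfl⟩
    exact hNle s hs
  have hNne : (N '' S).Nonempty := ⟨N 0, Set.mem_image_of_mem _ h0S⟩
  have hu2 := transposed u hu
  have huii : ∀ i, ∑ j, u i j ^ 2 = 1 := by
    intro i
    have := hu i i
    rw [if_pos rfl] at this
    rw [← this]
    exact Finset.sum_congr rfl fun j _ => sq (u i j) ▸ rfl
  have hCS : ∀ (s : Fin d → ℝ) (i : Fin d), (∑ j, s j * u i j) ^ 2 ≤ N s := by
    intro s i
    calc (∑ j, s j * u i j) ^ 2 ≤ (∑ j, s j ^ 2) * ∑ j, u i j ^ 2 :=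
          Finset.sum_mul_sq_le_sq_mul_sq _ _ _
      _ = N s := by rw [huii i, mul_one]
  have hσ2pos : ∀ i, (0:ℝ) < σ i ^ 2 := fun i => pow_pos (hσpos i) 2
  have hLle : ∀ s ∈ S, L s ≤ ∑ i, (d * c j0 ^ 2) / σ i ^ 2 := by
    intro s hs
    refine Finset.sum_le_sum fun i _ => ?_
    exact (div_le_div_iff_of_pos_right (hσ2pos i)).mpr (le_trans (hCS s i) (hNle s hs))
  have hLbdd : BddAbove (L '' S) := by
    refine ⟨∑ i, (d * c j0 ^ 2) / σ i ^ 2, ?_⟩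
    rintro _ ⟨s, hs, rfl⟩
    exact hLle s hs
  have hLne : (L '' S).Nonempty := ⟨L 0, Set.mem_image_of_mem _ h0S⟩
  have hinv : (d:ℝ) ^ 2 ≤ ∑ i, 1 / σ i ^ 2 := by
    have h1 : (∑ i, σ i * (1 / σ i)) ^ 2 ≤ (∑ i, σ i ^ 2) * ∑ i, (1 / σ i) ^ 2 :=
      Finset.sum_mul_sq_le_sq_mul_sq _ _ _
    have h2 : ∑ i : Fin d, σ i * (1 / σ i) = d := by
      have : ∀ i : Fin d, σ i * (1 / σ i) = 1 := by
        intro i; rw [mul_one_div, div_self (hσpos i).ne']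
      rw [Finset.sum_congr rfl fun i _ => this i, Finset.sum_const, Finset.card_univ,
        Fintype.card_fin, nsmul_eq_mul, mul_one]
    rw [h2, hσ, one_mul] at h1
    calc (d:ℝ) ^ 2 ≤ ∑ i, (1 / σ i) ^ 2 := h1
      _ = ∑ i, 1 / σ i ^ 2 := Finset.sum_congr rfl fun i _ => by rw [div_pow, one_pow]
  have key : ∀ s ∈ S, ∃ t ∈ S, (d:ℝ) * N s ≤ L t := by
    intro s hs
    set act : (Fin d → Bool) × Fin d → (Fin d → ℝ) :=
      fun g j => (if g.1 j then (1:ℝ) else -1) * s (j + g.2) with hact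
    have hactS : ∀ g, act g ∈ S := by
      intro g
      rw [hmem]
      intro j
      have h1 : ∀ i : Fin d, |act g i| ^ p j = |s (i + g.2)| ^ p j := by
        intro i
        cases h : g.1 i <;> simp [hact, h]
      rw [Finset.sum_congr rfl fun i _ => h1 i, shift_sum (fun v => |s v| ^ p j) g.2]
      exact (hmem s).mp hs j
    have step1 : ∀ (k : Fin d) (i : Fin d),
        ∑ ε : Fin d → Bool, (∑ j, (act (ε, k)) j * u i j) ^ 2
          = 2 ^ d * ∑ j, (s (j + k) * u i j) ^ 2 := by
      intro k i
      have h1 : ∀ ε : Fin d → Bool, (∑ j, (act (ε, k)) j * u i j)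
          = ∑ j, (if ε j then (1:ℝ) else -1) * (s (j + k) * u i j) := by
        intro ε
        exact Finset.sum_congr rfl fun j _ => by simp only [hact]; ring
      rw [Finset.sum_congr rfl fun ε _ => by rw [h1 ε]]
      exact sign_sum_sq _
    have step2 : ∀ i : Fin d, ∑ k : Fin d, ∑ j, (s (j + k) * u i j) ^ 2 = N s := by
      intro i
      rw [Finset.sum_comm]
      have h1 : ∀ j : Fin d, ∑ k : Fin d, (s (j + k) * u i j) ^ 2 = N s * u i j ^ 2 := by
        intro j
        have h2 : ∀ k : Fin d, (s (j + k) * u i j) ^ 2 = (fun v => s v ^ 2) (j + k) * u i j ^ 2 := by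
          intro k; simp only; ring
        rw [Finset.sum_congr rfl fun k _ => h2 k, ← Finset.sum_mul,
          shift_sum' (fun v => s v ^ 2) j]
      rw [Finset.sum_congr rfl fun j _ => h1 j, ← Finset.mul_sum, huii i, mul_one]
    have step3 : ∀ k : Fin d, ∑ ε : Fin d → Bool, L (act (ε, k))
        = ∑ i, (2 ^ d * ∑ j, (s (j + k) * u i j) ^ 2) / σ i ^ 2 := by
      intro k
      simp only [hLdef]
      rw [Finset.sum_comm]
      exact Finset.sum_congr rfl fun i _ => by rw [← Finset.sum_div, step1 k i]
    have hsum : ∑ g : (Fin d → Bool) × Fin d, L (act g)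
        = ∑ i, (2 ^ d * N s) / σ i ^ 2 := by
      calc ∑ g : (Fin d → Bool) × Fin d, L (act g)
          = ∑ ε : Fin d → Bool, ∑ k : Fin d, L (act (ε, k)) := by
            rw [← Finset.univ_product_univ, Finset.sum_product]
        _ = ∑ k : Fin d, ∑ ε : Fin d → Bool, L (act (ε, k)) := Finset.sum_comm
        _ = ∑ k : Fin d, ∑ i, (2 ^ d * ∑ j, (s (j + k) * u i j) ^ 2) / σ i ^ 2 :=
            Finset.sum_congr rfl fun k _ => step3 k
        _ = ∑ i, ∑ k : Fin d, (2 ^ d * ∑ j, (s (j + k) * u i j) ^ 2) / σ i ^ 2 :=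
            Finset.sum_comm
        _ = ∑ i, (2 ^ d * N s) / σ i ^ 2 := by
            refine Finset.sum_congr rfl fun i _ => ?_
            rw [← Finset.sum_div, ← Finset.mul_sum, step2 i]
    have hlow : ((2:ℝ) ^ d * d) * ((d:ℝ) * N s) ≤ ∑ g : (Fin d → Bool) × Fin d, L (act g) := by
      rw [hsum]
      have h1 : ∑ i, (2 ^ d * N s) / σ i ^ 2 = (2 ^ d * N s) * ∑ i, 1 / σ i ^ 2 := by
        simp only [div_eq_mul_inv, one_mul]
        rw [← Finset.mul_sum]
      rw [h1]
      calc ((2:ℝ) ^ d * d) * ((d:ℝ) * N s) = (2 ^ d * N s) * (d:ℝ) ^ 2 := by ring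
        _ ≤ (2 ^ d * N s) * ∑ i, 1 / σ i ^ 2 :=
            mul_le_mul_of_nonneg_left hinv (mul_nonneg (by positivity) (hN0 s))
    have hconst : ∑ _g : (Fin d → Bool) × Fin d, ((d:ℝ) * N s)
        = ((2:ℝ) ^ d * d) * ((d:ℝ) * N s) := by
      rw [Finset.sum_const, Finset.card_univ, nsmul_eq_mul]
      congr 1
      rw [Fintype.card_prod, Fintype.card_fun, Fintype.card_fin, Fintype.card_bool]
      push_cast
      ring
    obtain ⟨g, -, hg⟩ := Finset.exists_le_of_sum_le (Finset.univ_nonempty)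
      (le_trans (le_of_eq hconst) hlow)
    exact ⟨act g, hactS g, hg⟩
  have hLsup_ub : ∀ s ∈ S, (d:ℝ) * N s ≤ sSup (L '' S) := by
    intro s hs
    obtain ⟨t, ht, hlt⟩ := key s hs
    exact hlt.trans (le_csSup hLbdd (Set.mem_image_of_mem _ ht))
  have part1 : (d:ℝ) * sSup (N '' S) ≤ sSup (L '' S) := by
    rw [mul_comm, ← le_div_iff₀ hd0]
    apply csSup_le hNne
    rintro _ ⟨s, hs, rfl⟩
    rw [le_div_iff₀ hd0]
    have := hLsup_ub s hs
    linarith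
  refine ⟨part1, ?_⟩
  intro hσd
  have hσ2 : ∀ i, σ i ^ 2 = 1 / d := by
    intro i
    rw [hσd i, div_pow, one_pow, Real.sq_sqrt hd0.le]
  have hLN : ∀ s, L s = (d:ℝ) * N s := by
    intro s
    simp only [hLdef, hNdef]
    have h1 : ∀ i : Fin d, (∑ j, s j * u i j) ^ 2 / σ i ^ 2
        = (d:ℝ) * (∑ j, s j * u i j) ^ 2 := by
      intro i
      rw [hσ2 i, div_div_eq_mul_div, div_one, mul_comm]
    rw [Finset.sum_congr rfl fun i _ => h1 i, ← Finset.mul_sum, parseval u hu2 s]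
  have himg : L '' S = (fun s => (d:ℝ) * N s) '' S :=
    Set.image_congr fun s _ => hLN s
  rw [himg]
  have hlub : IsLUB (N '' S) (sSup (N '' S)) := isLUB_csSup hNne hNbdd
  have hlub2 : IsLUB ((fun s => (d:ℝ) * N s) '' S) ((d:ℝ) * sSup (N '' S)) := by
    constructor
    · rintro _ ⟨s, hs, rfl⟩
      exact mul_le_mul_of_nonneg_left (hlub.1 (Set.mem_image_of_mem _ hs)) hd0.le
    · intro C hC
      rw [mul_comm, ← le_div_iff₀ hd0]
      apply hlub.2
      rintro _ ⟨s, hs, rfl⟩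
      rw [le_div_iff₀ hd0]
      have h3 : (d:ℝ) * N s ≤ C := hC ⟨s, hs, rfl⟩
      linarith
  exact hlub2.csSup_eq ⟨_, Set.mem_image_of_mem _ h0S⟩
end

section
/- Fix positive integers r_1,…,r_m with ∑_{j=1}^m r_j = d and positive reals c_{21},…,c_{2m}. Let S = { s = (s_1,…,s_m) : s_j ∈ ℝ^{r_j} and ‖s_j‖₂ ≤ c_{2j} for all j } ⊆ ℝ^d, where s is partitioned into m consecutive blocks of sizes r_1,…,r_m. Then for every orthonormal basis (u_1,…,u_d) of ℝ^d and every vector of positive reals σ = (σ_1,…,σ_d) with ∑_{i=1}^d σ_i² = 1, the privacy loss L(U,σ,S) = sup_{s∈S} ∑_{i=1}^d ⟨s,u_i⟩²/σ_i² satisfies L(U,σ,S) ≥ (∑_{j=1}^m c_{2j}√r_j)². Moreover, equality is achieved by taking U to be the standard basis and, for every index i belonging to the j-th block, σ_i = √( c_{2j} / ( √r_j · ∑_{k=1}^m c_{2k}√r_k ) ). -/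
open Finset Matrix

private lemma sign_orth_s3 {ι : Type*} [Fintype ι] [DecidableEq ι] (k k' : ι) (hkk : k ≠ k') :
    ∑ ε : ι → ℤˣ, ((ε k : ℤ) : ℝ) * ((ε k' : ℤ) : ℝ) = 0 := by
  set g : ι → ℤˣ := Function.update (1 : ι → ℤˣ) k (-1) with hg
  have key : ∀ ε : ι → ℤˣ, (((g * ε) k : ℤ) : ℝ) * (((g * ε) k' : ℤ) : ℝ)
      = -(((ε k : ℤ) : ℝ) * ((ε k' : ℤ) : ℝ)) := by
    intro ε
    have h1 : (g * ε) k = -(ε k) := by simp [hg, Pi.mul_apply]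
    have h2 : (g * ε) k' = ε k' := by
      simp [hg, Pi.mul_apply, Function.update_of_ne (Ne.symm hkk)]
    rw [h1, h2]; push_cast; ring
  have e := Equiv.sum_comp (Equiv.mulLeft g)
    (fun ε : ι → ℤˣ => ((ε k : ℤ) : ℝ) * ((ε k' : ℤ) : ℝ))
  simp only [Equiv.coe_mulLeft] at e
  have e2 : ∑ ε : ι → ℤˣ, (((g * ε) k : ℤ) : ℝ) * (((g * ε) k' : ℤ) : ℝ)
      = -∑ ε : ι → ℤˣ, ((ε k : ℤ) : ℝ) * ((ε k' : ℤ) : ℝ) := by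
    rw [← Finset.sum_neg_distrib]
    exact Finset.sum_congr rfl fun ε _ => key ε
  have := e2.symm.trans e
  linarith

private lemma sign_diag {ι : Type*} [Fintype ι] [DecidableEq ι] (k : ι) :
    ∑ ε : ι → ℤˣ, ((ε k : ℤ) : ℝ) * ((ε k : ℤ) : ℝ) = Fintype.card (ι → ℤˣ) := by
  have h : ∀ ε : ι → ℤˣ, ((ε k : ℤ) : ℝ) * ((ε k : ℤ) : ℝ) = 1 := by
    intro ε
    rcases Int.units_eq_one_or (ε k) with h | h <;> simp [h]
  simp [h]

private lemma sign_expand {ι : Type*} [Fintype ι] [DecidableEq ι] (v : ι → ℝ) :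
    ∑ ε : ι → ℤˣ, (∑ k, v k * ((ε k : ℤ) : ℝ)) ^ 2
      = (Fintype.card (ι → ℤˣ) : ℝ) * ∑ k, v k ^ 2 := by
  have expand : ∀ ε : ι → ℤˣ, (∑ k, v k * ((ε k : ℤ) : ℝ)) ^ 2
      = ∑ k, ∑ k', (v k * v k') * (((ε k : ℤ) : ℝ) * ((ε k' : ℤ) : ℝ)) := by
    intro ε
    rw [sq, Finset.sum_mul_sum]
    refine Finset.sum_congr rfl fun k _ => Finset.sum_congr rfl fun k' _ => by ring
  simp_rw [expand]
  rw [Finset.sum_comm]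
  have hk : ∀ k : ι, ∑ ε : ι → ℤˣ, ∑ k',
      (v k * v k') * (((ε k : ℤ) : ℝ) * ((ε k' : ℤ) : ℝ))
      = (Fintype.card (ι → ℤˣ) : ℝ) * v k ^ 2 := by
    intro k
    rw [Finset.sum_comm]
    have hk' : ∀ k' : ι, ∑ ε : ι → ℤˣ,
        (v k * v k') * (((ε k : ℤ) : ℝ) * ((ε k' : ℤ) : ℝ))
        = if k' = k then (Fintype.card (ι → ℤˣ) : ℝ) * v k ^ 2 else 0 := by
      intro k'
      rw [← Finset.mul_sum]
      by_cases h : k' = k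
      · subst h
        rw [sign_diag, if_pos rfl, sq]
        ring
      · rw [sign_orth_s3 k k' (Ne.symm h), if_neg h, mul_zero]
    simp_rw [hk']
    simp
  simp_rw [hk]
  rw [← Finset.mul_sum]

/-- For `S` a product of `l₂`-balls of radii `c j` over `m` blocks of sizes
`r j` (coordinates indexed by the sigma type `(j : Fin m) × Fin (r j)`), for every
orthonormal basis `u` and positive `σ` with `∑ σ i ^ 2 = 1`, the privacy loss satisfies
`L(U,σ,S) ≥ (∑ j, c j √(r j))²`, with equality for the standard basis and
`σ i = √(c_{i.1} / (√(r_{i.1}) · ∑ k, c k √(r k)))`. -/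
theorem stmt_3 (d m : ℕ) (hm : 0 < m)
    (r : Fin m → ℕ) (hr : ∀ j, 0 < r j) (hd : ∑ j, r j = d)
    (c : Fin m → ℝ) (hc : ∀ j, 0 < c j)
    (S : Set (((j : Fin m) × Fin (r j)) → ℝ))
    (hS : S = {s : ((j : Fin m) × Fin (r j)) → ℝ |
      ∀ j : Fin m, Real.sqrt (∑ l : Fin (r j), s ⟨j, l⟩ ^ 2) ≤ c j})
    (u : ((j : Fin m) × Fin (r j)) → ((j : Fin m) × Fin (r j)) → ℝ)
    (hu : ∀ i i', ∑ k, u i k * u i' k = if i = i' then (1 : ℝ) else 0)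
    (σ : ((j : Fin m) × Fin (r j)) → ℝ) (hσpos : ∀ i, 0 < σ i)
    (hσ : ∑ i, σ i ^ 2 = 1) :
    sSup ((fun s => ∑ i, (∑ k, s k * u i k) ^ 2 / σ i ^ 2) '' S)
      ≥ (∑ j, c j * Real.sqrt (r j)) ^ 2
    ∧ ((∀ i, u i = Pi.single i 1) →
       (∀ i : (j : Fin m) × Fin (r j),
          σ i = Real.sqrt (c i.1 / (Real.sqrt (r i.1) * ∑ k, c k * Real.sqrt (r k)))) →
      sSup ((fun s => ∑ i, (∑ k, s k * u i k) ^ 2 / σ i ^ 2) '' S)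
        = (∑ j, c j * Real.sqrt (r j)) ^ 2) := by
  classical
  set T : ℝ := ∑ j, c j * Real.sqrt (r j) with hTdef
  set Q : (((j : Fin m) × Fin (r j)) → ℝ) → ℝ := fun s => ∑ i, (∑ k, s k * u i k) ^ 2 / σ i ^ 2 with hQdef
  have hsqrtr_pos : ∀ j, (0:ℝ) < Real.sqrt (r j) := by
    intro j
    apply Real.sqrt_pos.2
    exact_mod_cast hr j
  have hT : 0 < T := by
    apply Finset.sum_pos _ ⟨⟨0, hm⟩, Finset.mem_univ _⟩
    intro j _
    exact mul_pos (hc j) (hsqrtr_pos j)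
  -- block bound for members of S
  have hblock : ∀ s ∈ S, ∀ j, ∑ l : Fin (r j), s ⟨j, l⟩ ^ 2 ≤ c j ^ 2 := by
    intro s hs j
    rw [hS] at hs
    have h1 := hs j
    have h2 : 0 ≤ ∑ l : Fin (r j), s ⟨j, l⟩ ^ 2 :=
      Finset.sum_nonneg fun l _ => sq_nonneg _
    calc ∑ l : Fin (r j), s ⟨j, l⟩ ^ 2
        = Real.sqrt (∑ l : Fin (r j), s ⟨j, l⟩ ^ 2) ^ 2 := (Real.sq_sqrt h2).symm
      _ ≤ c j ^ 2 := pow_le_pow_left₀ (Real.sqrt_nonneg _) h1 2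
  have hnorm : ∀ s ∈ S, ∑ k : ((j : Fin m) × Fin (r j)), s k ^ 2 ≤ ∑ j, c j ^ 2 := by
    intro s hs
    rw [← Finset.univ_sigma_univ, Finset.sum_sigma]
    exact Finset.sum_le_sum fun j _ => hblock s hs j
  -- nonempty
  have hSne : (0 : ((j : Fin m) × Fin (r j)) → ℝ) ∈ S := by
    rw [hS]
    intro j
    simp [Real.sqrt_zero, le_of_lt (hc j)]
  have hne : ((fun s => ∑ i, (∑ k, s k * u i k) ^ 2 / σ i ^ 2) '' S).Nonempty :=
    ⟨_, Set.mem_image_of_mem _ hSne⟩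
  -- bounded above
  have hbdd : BddAbove ((fun s => ∑ i, (∑ k, s k * u i k) ^ 2 / σ i ^ 2) '' S) := by
    refine ⟨(∑ j, c j ^ 2) * ∑ i : ((j : Fin m) × Fin (r j)), 1 / σ i ^ 2, ?_⟩
    rintro x ⟨s, hs, rfl⟩
    simp only
    rw [Finset.mul_sum]
    refine Finset.sum_le_sum fun i _ => ?_
    have hcs : (∑ k, s k * u i k) ^ 2 ≤ (∑ k, s k ^ 2) * ∑ k, u i k ^ 2 :=
      Finset.sum_mul_sq_le_sq_mul_sq _ _ _
    have hui : ∑ k, u i k ^ 2 = 1 := by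
      have h := hu i i
      rw [if_pos rfl] at h
      rw [← h]
      exact Finset.sum_congr rfl fun k _ => pow_two (u i k)
    have hσi : (0:ℝ) < σ i ^ 2 := pow_pos (hσpos i) 2
    rw [div_le_iff₀ hσi] at *
    calc (∑ k, s k * u i k) ^ 2 ≤ (∑ k, s k ^ 2) * ∑ k, u i k ^ 2 := hcs
      _ = ∑ k, s k ^ 2 := by rw [hui, mul_one]
      _ ≤ ∑ j, c j ^ 2 := hnorm s hs
      _ = (∑ j, c j ^ 2) * (1 / σ i ^ 2) * σ i ^ 2 := by field_simp [(hσpos i).ne']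
  -- column orthonormality
  have hcol : ∀ k : ((j : Fin m) × Fin (r j)), ∑ i : ((j : Fin m) × Fin (r j)), u i k ^ 2 = 1 := by
    have hM : (Matrix.of u) * (Matrix.of u)ᵀ = 1 := by
      ext i i'
      rw [Matrix.mul_apply, Matrix.one_apply]
      simp only [Matrix.of_apply, Matrix.transpose_apply]
      exact hu i i'
    have hM' : (Matrix.of u)ᵀ * (Matrix.of u) = 1 := mul_eq_one_comm.mp hM
    intro k
    have h2 : ((Matrix.of u)ᵀ * Matrix.of u) k k = (1 : Matrix _ _ ℝ) k k := by rw [hM']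
    rw [Matrix.mul_apply, Matrix.one_apply_eq] at h2
    simp only [Matrix.transpose_apply, Matrix.of_apply] at h2
    rw [← h2]
    exact Finset.sum_congr rfl fun i _ => pow_two (u i k)
  -- the test vectors
  set a : ((j : Fin m) × Fin (r j)) → ℝ := fun k => c k.1 / Real.sqrt (r k.1) with hadef
  have ha_pos : ∀ k, 0 < a k := fun k => div_pos (hc k.1) (hsqrtr_pos k.1)
  have ha_sq : ∀ j : Fin m, ∀ l : Fin (r j), (a ⟨j, l⟩) ^ 2 = c j ^ 2 / r j := by
    intro j l
    rw [hadef]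
    simp only
    rw [div_pow, Real.sq_sqrt (by positivity : (0:ℝ) ≤ (r j : ℝ))]
  have hmem : ∀ ε : ((j : Fin m) × Fin (r j)) → ℤˣ, (fun k => a k * ((ε k : ℤ) : ℝ)) ∈ S := by
    intro ε
    rw [hS]
    intro j
    have hblocksum : ∑ l : Fin (r j), (a ⟨j, l⟩ * ((ε ⟨j, l⟩ : ℤ) : ℝ)) ^ 2 = c j ^ 2 := by
      have : ∀ l : Fin (r j), (a ⟨j, l⟩ * ((ε ⟨j, l⟩ : ℤ) : ℝ)) ^ 2 = c j ^ 2 / r j := by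
        intro l
        rcases Int.units_eq_one_or (ε ⟨j, l⟩) with h | h <;>
          · rw [h]; push_cast; rw [mul_pow, ha_sq j l]; norm_num
      rw [Finset.sum_congr rfl fun l _ => this l]
      rw [Finset.sum_const, Finset.card_univ, Fintype.card_fin, nsmul_eq_mul]
      have : (r j : ℝ) ≠ 0 := by exact_mod_cast (hr j).ne'
      field_simp
    rw [hblocksum, Real.sqrt_sq (le_of_lt (hc j))]
  -- the averaged value
  set b : ((j : Fin m) × Fin (r j)) → ℝ := fun i => ∑ k, a k ^ 2 * u i k ^ 2 with hbdef
  have hb_nonneg : ∀ i, 0 ≤ b i :=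
    fun i => Finset.sum_nonneg fun k _ => mul_nonneg (sq_nonneg _) (sq_nonneg _)
  -- step: per ε, Q value, summed over all ε
  have hsum_eps : ∑ ε : ((j : Fin m) × Fin (r j)) → ℤˣ, Q (fun k => a k * ((ε k : ℤ) : ℝ))
      = (Fintype.card (((j : Fin m) × Fin (r j)) → ℤˣ) : ℝ) * ∑ i, b i / σ i ^ 2 := by
    rw [hQdef]
    simp only
    rw [Finset.sum_comm]
    rw [Finset.mul_sum]
    refine Finset.sum_congr rfl fun i _ => ?_
    have hexp : ∀ ε : ((j : Fin m) × Fin (r j)) → ℤˣ, ∑ k, (a k * ((ε k : ℤ) : ℝ)) * u i k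
        = ∑ k, (a k * u i k) * ((ε k : ℤ) : ℝ) :=
      fun ε => Finset.sum_congr rfl fun k _ => by ring
    calc ∑ ε : ((j : Fin m) × Fin (r j)) → ℤˣ, (∑ k, (a k * ((ε k : ℤ) : ℝ)) * u i k) ^ 2 / σ i ^ 2
        = (∑ ε : ((j : Fin m) × Fin (r j)) → ℤˣ, (∑ k, (a k * u i k) * ((ε k : ℤ) : ℝ)) ^ 2) / σ i ^ 2 := by
          rw [← Finset.sum_div]
          congr 1
          exact Finset.sum_congr rfl fun ε _ => by rw [hexp ε]
      _ = ((Fintype.card (((j : Fin m) × Fin (r j)) → ℤˣ) : ℝ) * ∑ k, (a k * u i k) ^ 2) / σ i ^ 2 := by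
          rw [sign_expand (fun k => a k * u i k)]
      _ = (Fintype.card (((j : Fin m) × Fin (r j)) → ℤˣ) : ℝ) * (b i / σ i ^ 2) := by
          rw [hbdef]
          simp only
          rw [mul_div_assoc]
          congr 2
          exact Finset.sum_congr rfl fun k _ => by ring
  -- each Q(sε) ≤ sSup
  have havg_le : ∑ i, b i / σ i ^ 2
      ≤ sSup ((fun s => ∑ i, (∑ k, s k * u i k) ^ 2 / σ i ^ 2) '' S) := by
    set M := sSup ((fun s => ∑ i, (∑ k, s k * u i k) ^ 2 / σ i ^ 2) '' S) with hM
    have hle : ∀ ε : ((j : Fin m) × Fin (r j)) → ℤˣ, Q (fun k => a k * ((ε k : ℤ) : ℝ)) ≤ M :=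
      fun ε => le_csSup hbdd (Set.mem_image_of_mem _ (hmem ε))
    have hsum_le : ∑ ε : ((j : Fin m) × Fin (r j)) → ℤˣ, Q (fun k => a k * ((ε k : ℤ) : ℝ))
        ≤ (Fintype.card (((j : Fin m) × Fin (r j)) → ℤˣ) : ℝ) * M := by
      calc ∑ ε : ((j : Fin m) × Fin (r j)) → ℤˣ, Q (fun k => a k * ((ε k : ℤ) : ℝ))
          ≤ ∑ _ε : ((j : Fin m) × Fin (r j)) → ℤˣ, M := Finset.sum_le_sum fun ε _ => hle ε
        _ = (Fintype.card (((j : Fin m) × Fin (r j)) → ℤˣ) : ℝ) * M := by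
            rw [Finset.sum_const, Finset.card_univ, nsmul_eq_mul]
    rw [hsum_eps] at hsum_le
    have hcard : (0:ℝ) < (Fintype.card (((j : Fin m) × Fin (r j)) → ℤˣ) : ℝ) := by
      exact_mod_cast Fintype.card_pos
    exact le_of_mul_le_mul_left hsum_le hcard
  -- T ≤ ∑ √(b i)
  have hT_le : T ≤ ∑ i, Real.sqrt (b i) := by
    have hstep : ∀ i : ((j : Fin m) × Fin (r j)), ∑ k, a k * u i k ^ 2 ≤ Real.sqrt (b i) := by
      intro i
      rw [Real.le_sqrt (Finset.sum_nonneg fun k _ => mul_nonneg (le_of_lt (ha_pos k)) (sq_nonneg _)) (hb_nonneg i)]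
      have hcs := Finset.sum_mul_sq_le_sq_mul_sq Finset.univ
        (fun k => u i k) (fun k => a k * u i k)
      have hui : ∑ k, u i k ^ 2 = 1 := by
        have h := hu i i
        rw [if_pos rfl] at h
        rw [← h]
        exact Finset.sum_congr rfl fun k _ => pow_two (u i k)
      calc (∑ k, a k * u i k ^ 2) ^ 2
          = (∑ k, u i k * (a k * u i k)) ^ 2 := by
            congr 1; exact Finset.sum_congr rfl fun k _ => by ring
        _ ≤ (∑ k, u i k ^ 2) * ∑ k, (a k * u i k) ^ 2 := hcs
        _ = ∑ k, (a k * u i k) ^ 2 := by rw [hui, one_mul]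
        _ = b i := by
            rw [hbdef]; exact Finset.sum_congr rfl fun k _ => by ring
    calc T = ∑ k : ((j : Fin m) × Fin (r j)), a k := by
          rw [hTdef, ← Finset.univ_sigma_univ, Finset.sum_sigma]
          refine Finset.sum_congr rfl fun j _ => ?_
          rw [hadef]
          simp only
          rw [Finset.sum_const, Finset.card_univ, Fintype.card_fin, nsmul_eq_mul]
          field_simp [ne_of_gt (hsqrtr_pos j)]
          linear_combination c j * Real.mul_self_sqrt (by positivity : (0:ℝ) ≤ (r j : ℝ))
      _ = ∑ k : ((j : Fin m) × Fin (r j)), a k * (∑ i, u i k ^ 2) := by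
          refine Finset.sum_congr rfl fun k _ => ?_
          rw [hcol k, mul_one]
      _ = ∑ i, ∑ k, a k * u i k ^ 2 := by
          rw [Finset.sum_comm]
          exact Finset.sum_congr rfl fun k _ => by rw [Finset.mul_sum]
      _ ≤ ∑ i, Real.sqrt (b i) := Finset.sum_le_sum fun i _ => hstep i
  -- (∑ √b)² ≤ ∑ b/σ²
  have hCS2 : (∑ i, Real.sqrt (b i)) ^ 2 ≤ ∑ i, b i / σ i ^ 2 := by
    have hcs := Finset.sum_mul_sq_le_sq_mul_sq Finset.univ
      (fun i => σ i) (fun i => Real.sqrt (b i) / σ i)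
    have h1 : ∑ i, σ i * (Real.sqrt (b i) / σ i) = ∑ i, Real.sqrt (b i) := by
      refine Finset.sum_congr rfl fun i _ => ?_
      rw [mul_comm, div_mul_cancel₀ _ (ne_of_gt (hσpos i))]
    have h2 : ∑ i, (Real.sqrt (b i) / σ i) ^ 2 = ∑ i, b i / σ i ^ 2 := by
      refine Finset.sum_congr rfl fun i _ => ?_
      rw [div_pow, Real.sq_sqrt (hb_nonneg i)]
    rw [h1, hσ, one_mul, h2] at hcs
    exact hcs
  have part1 : sSup ((fun s => ∑ i, (∑ k, s k * u i k) ^ 2 / σ i ^ 2) '' S) ≥ T ^ 2 := by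
    calc T ^ 2 ≤ (∑ i, Real.sqrt (b i)) ^ 2 :=
          pow_le_pow_left₀ (le_of_lt hT) hT_le 2
      _ ≤ ∑ i, b i / σ i ^ 2 := hCS2
      _ ≤ _ := havg_le
  refine ⟨part1, ?_⟩
  intro hu1 hσ1
  -- equality case
  have hσsq : ∀ i : ((j : Fin m) × Fin (r j)), σ i ^ 2 = c i.1 / (Real.sqrt (r i.1) * T) := by
    intro i
    rw [hσ1 i, Real.sq_sqrt]
    exact le_of_lt (div_pos (hc i.1) (mul_pos (hsqrtr_pos i.1) hT))
  have hub : ∀ s ∈ S, ∑ i, (∑ k, s k * u i k) ^ 2 / σ i ^ 2 ≤ T ^ 2 := by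
    intro s hs
    have hinner : ∀ i : ((j : Fin m) × Fin (r j)), ∑ k, s k * u i k = s i := by
      intro i
      rw [hu1 i]
      simp [Pi.single_apply, mul_ite]
    calc ∑ i, (∑ k, s k * u i k) ^ 2 / σ i ^ 2
        = ∑ i : ((j : Fin m) × Fin (r j)), s i ^ 2 * (Real.sqrt (r i.1) * T) / c i.1 := by
          refine Finset.sum_congr rfl fun i _ => ?_
          rw [hinner i, hσsq i, div_div_eq_mul_div]
      _ = ∑ j, ∑ l : Fin (r j), s ⟨j, l⟩ ^ 2 * (Real.sqrt (r j) * T) / c j := by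
          rw [← Finset.univ_sigma_univ, Finset.sum_sigma]
      _ = ∑ j, (Real.sqrt (r j) * T / c j) * ∑ l : Fin (r j), s ⟨j, l⟩ ^ 2 := by
          refine Finset.sum_congr rfl fun j _ => ?_
          simp only [Finset.mul_sum]
          refine Finset.sum_congr rfl fun l _ => ?_
          ring
      _ ≤ ∑ j, (Real.sqrt (r j) * T / c j) * c j ^ 2 := by
          refine Finset.sum_le_sum fun j _ => ?_
          exact mul_le_mul_of_nonneg_left (hblock s hs j)
            (le_of_lt (div_pos (mul_pos (hsqrtr_pos j) hT) (hc j)))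
      _ = T * ∑ j, c j * Real.sqrt (r j) := by
          rw [Finset.mul_sum]
          refine Finset.sum_congr rfl fun j _ => ?_
          field_simp [ne_of_gt (hc j)]
      _ = T ^ 2 := by rw [← hTdef, sq]
  have hle2 : sSup ((fun s => ∑ i, (∑ k, s k * u i k) ^ 2 / σ i ^ 2) '' S) ≤ T ^ 2 := by
    apply csSup_le hne
    rintro x ⟨s, hs, rfl⟩
    exact hub s hs
  exact le_antisymm hle2 part1
end

section
/- Fix an integer α ≥ 2, reals q ∈ (0,1), σ > 0, p ∈ (0,2], c_∞ > 0, and a positive integer d_0 ≤ d, and set c_p = c_∞ · d_0^{1/p}. Define g : ℝ → ℝ by g(x) = log( (1−q)^α + ∑_{v=1}^{α} C(α,v)(1−q)^{α−v} q^v · exp( v(v−1)x² / (2σ²) ) ), where C(α,v) is the binomial coefficient. Then the supremum of ∑_{l=1}^d g(s_l) over all s = (s_1,…,s_d) ∈ ℝ^d satisfying ∑_{l=1}^d |s_l|^p ≤ c_p^p and max_l |s_l| ≤ c_∞ equals d_0 · g(c_∞), and it is attained at the vector s* whose first d_0 coordinates equal c_∞ and whose remaining d − d_0 coordinates equal 0.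 -/
open Finset

/-- The dominating sensitivity for the coordinate-wise subsampled Gaussian
mechanism with mixed `l_p`/`l_∞` clipping: the supremum of `∑ l, g (s l)` over the
intersection of the `l_p`-ball of radius `c_p = c_∞ d₀^{1/p}` and the `l_∞`-ball of
radius `c_∞` equals `d₀ · g c_∞` and is attained at the vector whose first `d₀`
coordinates are `c_∞` and whose remaining coordinates vanish. -/
theorem stmt_5 (d d0 α : ℕ) (hα : 2 ≤ α) (hd0 : 0 < d0) (hd0d : d0 ≤ d)
    (q σ p cinfty : ℝ)
    (hq0 : 0 < q) (hq1 : q < 1) (hσ : 0 < σ) (hp0 : 0 < p) (hp2 : p ≤ 2)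
    (hc : 0 < cinfty)
    (cp : ℝ) (hcp : cp = cinfty * (d0 : ℝ) ^ ((1 : ℝ) / p))
    (g : ℝ → ℝ)
    (hg : ∀ x, g x = Real.log ((1 - q) ^ α +
      ∑ v ∈ Finset.Icc 1 α, (α.choose v : ℝ) * (1 - q) ^ (α - v) * q ^ v *
        Real.exp ((v : ℝ) * ((v : ℝ) - 1) * x ^ 2 / (2 * σ ^ 2))))
    (sstar : Fin d → ℝ)
    (hsstar : sstar = fun l : Fin d => if l.val < d0 then cinfty else 0) :
    (∀ s : Fin d → ℝ, (∑ l, |s l| ^ p ≤ cp ^ p) → (∀ l, |s l| ≤ cinfty) →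
      ∑ l, g (s l) ≤ (d0 : ℝ) * g cinfty)
    ∧ (∑ l, |sstar l| ^ p ≤ cp ^ p)
    ∧ (∀ l, |sstar l| ≤ cinfty)
    ∧ (∑ l, g (sstar l) = (d0 : ℝ) * g cinfty) := by
  have hq1' : (0:ℝ) < 1 - q := by linarith
  -- weights
  set a : ℕ → ℝ := fun v => (α.choose v : ℝ) * (1 - q) ^ (α - v) * q ^ v with ha_def
  have ha : ∀ v, 0 ≤ a v := fun v => by
    have := hq0.le; have := hq1'.le; positivity
  -- the total mass is 1
  have hsum1 : ∑ v ∈ Finset.range (α + 1), a v = 1 := by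
    have h := add_pow q (1 - q) α
    simp only [add_sub_cancel, one_pow] at h
    calc ∑ v ∈ Finset.range (α + 1), a v
        = ∑ v ∈ Finset.range (α + 1), q ^ v * (1 - q) ^ (α - v) * (α.choose v : ℝ) :=
          Finset.sum_congr rfl fun v _ => by simp only [ha_def]; ring
      _ = 1 := h.symm
  -- F formulation
  set b : ℕ → ℝ → ℝ := fun v x => (v : ℝ) * ((v : ℝ) - 1) * x ^ 2 / (2 * σ ^ 2) with hb_def
  set F : ℝ → ℝ := fun x => ∑ v ∈ Finset.range (α + 1), a v * Real.exp (b v x) with hF_def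
  have hins : Finset.range (α + 1) = insert 0 (Finset.Icc 1 α) := by
    ext n; simp only [Finset.mem_range, Finset.mem_insert, Finset.mem_Icc]; omega
  have h0notin : (0:ℕ) ∉ Finset.Icc 1 α := by simp
  have hgF : ∀ x, g x = Real.log (F x) := by
    intro x
    rw [hg x]
    have hFx : F x = a 0 * Real.exp (b 0 x) + ∑ v ∈ Finset.Icc 1 α, a v * Real.exp (b v x) := by
      rw [show F x = ∑ v ∈ Finset.range (α + 1), a v * Real.exp (b v x) from rfl, hins,
        Finset.sum_insert h0notin]
    rw [hFx]
    congr 1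
    all_goals simp [ha_def, hb_def]
  have hbnn : ∀ v x, 0 ≤ b v x := by
    intro v x
    have h1 : 0 ≤ (v : ℝ) * ((v : ℝ) - 1) := by
      rcases Nat.eq_zero_or_pos v with h | h
      · simp [h]
      · have : (1:ℝ) ≤ (v:ℝ) := by exact_mod_cast h
        nlinarith
    have h2 : (0:ℝ) < 2 * σ ^ 2 := by positivity
    positivity
  have hF1 : ∀ x, 1 ≤ F x := by
    intro x
    rw [← hsum1]
    apply Finset.sum_le_sum
    intro v _
    exact le_mul_of_one_le_right (ha v) (Real.one_le_exp (hbnn v x))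
  have hFpos : ∀ x, 0 < F x := fun x => lt_of_lt_of_le one_pos (hF1 x)
  have hgc0 : 0 ≤ g cinfty := by rw [hgF]; exact Real.log_nonneg (hF1 _)
  have hg0 : g 0 = 0 := by
    rw [hgF]
    have : F 0 = 1 := by
      rw [hF_def, ← hsum1]
      refine Finset.sum_congr rfl fun v _ => ?_
      simp [hb_def]
    rw [this, Real.log_one]
  -- key pointwise bound
  have key : ∀ x : ℝ, |x| ≤ cinfty → g x ≤ |x| ^ p / cinfty ^ p * g cinfty := by
    intro x hx
    rcases eq_or_ne x 0 with rfl | hx0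
    · rw [hg0, abs_zero, Real.zero_rpow hp0.ne']
      simp
    · set t : ℝ := x ^ 2 / cinfty ^ 2 with ht_def
      have hxpos : 0 < |x| := abs_pos.mpr hx0
      have ht0 : 0 < t := by positivity
      have hx2 : x ^ 2 ≤ cinfty ^ 2 := by
        calc x ^ 2 = |x| ^ 2 := (sq_abs x).symm
        _ ≤ cinfty ^ 2 := by gcongr <;> first | exact abs_nonneg x | exact hx
      have ht1 : t ≤ 1 := by
        rw [ht_def, div_le_one (by positivity)]; exact hx2
      -- Step A : F x ≤ (F cinfty) ^ t
      have hA : F x ≤ (F cinfty) ^ t := by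
        have hc2 : cinfty ^ 2 ≠ 0 := by positivity
        have harg : ∀ v : ℕ, b v x = b v cinfty * t := by
          intro v
          show (v:ℝ) * ((v:ℝ) - 1) * x ^ 2 / (2 * σ ^ 2)
              = ((v:ℝ) * ((v:ℝ) - 1) * cinfty ^ 2 / (2 * σ ^ 2)) * (x ^ 2 / cinfty ^ 2)
          field_simp
        have hform : ∀ v, Real.exp (b v x) = (Real.exp (b v cinfty)) ^ t := by
          intro v
          rw [harg v, Real.exp_mul]
        have hmain := Real.arith_mean_le_rpow_mean (Finset.range (α + 1)) a
          (fun v => (Real.exp (b v cinfty)) ^ t)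
          (fun v _ => ha v) hsum1
          (fun v _ => Real.rpow_nonneg (Real.exp_pos _).le t)
          (p := 1 / t) (by rw [le_div_iff₀ ht0]; linarith)
        have hz : ∀ v, ((Real.exp (b v cinfty)) ^ t) ^ (1 / t)
            = Real.exp (b v cinfty) := by
          intro v
          rw [← Real.rpow_mul (Real.exp_pos _).le, mul_one_div, div_self ht0.ne',
            Real.rpow_one]
        calc F x = ∑ v ∈ Finset.range (α + 1), a v * (Real.exp (b v cinfty)) ^ t := by
              exact Finset.sum_congr rfl fun v _ => by rw [hform v]
          _ ≤ (∑ v ∈ Finset.range (α + 1), a v * ((Real.exp (b v cinfty)) ^ t) ^ (1/t))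
                ^ (1 / (1/t)) := hmain
          _ = (F cinfty) ^ t := by
              rw [one_div_one_div]
              congr 1
              exact Finset.sum_congr rfl fun v _ => by rw [hz v]
      -- Step B : g x ≤ t * g cinfty
      have hB : g x ≤ t * g cinfty := by
        rw [hgF, hgF]
        calc Real.log (F x) ≤ Real.log ((F cinfty) ^ t) :=
            Real.log_le_log (hFpos x) hA
          _ = t * Real.log (F cinfty) := Real.log_rpow (hFpos cinfty) t
      -- Step C : t ≤ |x|^p / cinfty^p
      have hC : t ≤ |x| ^ p / cinfty ^ p := by
        have h1 : t = (|x| / cinfty) ^ (2:ℝ) := by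
          rw [Real.rpow_two, div_pow, sq_abs]
        have h2 : (|x| / cinfty) ^ (2:ℝ) ≤ (|x| / cinfty) ^ p :=
          Real.rpow_le_rpow_of_exponent_ge (by positivity)
            (by rw [div_le_one hc]; exact hx) hp2
        have h3 : (|x| / cinfty) ^ p = |x| ^ p / cinfty ^ p :=
          Real.div_rpow (abs_nonneg x) hc.le p
        rw [h1]; rw [h3] at h2; exact h2
      calc g x ≤ t * g cinfty := hB
        _ ≤ |x| ^ p / cinfty ^ p * g cinfty :=
            mul_le_mul_of_nonneg_right hC hgc0
  have hcinfp : (0:ℝ) < cinfty ^ p := Real.rpow_pos_of_pos hc p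
  have hcpp : cp ^ p = (d0 : ℝ) * cinfty ^ p := by
    rw [hcp, Real.mul_rpow hc.le (Real.rpow_nonneg (Nat.cast_nonneg d0) _)]
    have hh : ((d0:ℝ) ^ ((1:ℝ)/p)) ^ p = (d0 : ℝ) := by
      rw [← Real.rpow_mul (Nat.cast_nonneg d0), one_div, inv_mul_cancel₀ hp0.ne',
        Real.rpow_one]
    rw [hh]; ring
  -- sums over sstar
  have hfilter : (Finset.range d).filter (· < d0) = Finset.range d0 := by
    ext n; simp only [Finset.mem_filter, Finset.mem_range]; omega
  have hsum_star : ∀ f : ℝ → ℝ, f 0 = 0 →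
      ∑ l : Fin d, f (sstar l) = (d0 : ℝ) * f cinfty := by
    intro f hf0
    rw [hsstar]
    have : ∀ l : Fin d, f (if l.val < d0 then cinfty else 0)
        = if l.val < d0 then f cinfty else 0 := by
      intro l; split <;> simp [hf0]
    simp only [this]
    rw [Fin.sum_univ_eq_sum_range (fun i => if i < d0 then f cinfty else 0) d]
    rw [← Finset.sum_filter, hfilter, Finset.sum_const, Finset.card_range,
      nsmul_eq_mul]
  refine ⟨?_, ?_, ?_, ?_⟩
  · intro s hs hsl
    calc ∑ l, g (s l) ≤ ∑ l, |s l| ^ p / cinfty ^ p * g cinfty :=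
        Finset.sum_le_sum fun l _ => key (s l) (hsl l)
      _ = (∑ l, |s l| ^ p) * (g cinfty / cinfty ^ p) := by
          rw [Finset.sum_mul]
          exact Finset.sum_congr rfl fun l _ => by ring
      _ ≤ cp ^ p * (g cinfty / cinfty ^ p) := by
          apply mul_le_mul_of_nonneg_right hs (by positivity)
      _ = (d0 : ℝ) * g cinfty := by
          rw [hcpp]; field_simp
  · have h0 : |(0:ℝ)| ^ p = 0 := by rw [abs_zero, Real.zero_rpow hp0.ne']
    rw [hsum_star (fun x => |x| ^ p) h0, abs_of_pos hc, hcpp]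
  · intro l
    rw [hsstar]
    dsimp only
    split
    · rw [abs_of_pos hc]
    · rw [abs_zero]; exact hc.le
  · exact hsum_star g hg0
end

section
/- Fix an integer α ≥ 2, reals q ∈ (0,1), σ > 0, p ∈ (0,2], c_∞ > 0, and a positive integer d_0 ≤ d with c_p = c_∞ · d_0^{1/p}. For m ∈ ℝ let φ_m(x) = (1/(√(2π)σ)) exp(−(x−m)²/(2σ²)) denote the density of N(m,σ²). For any κ ∈ ℝ^d and any s ∈ ℝ^d with ∑_{l=1}^d |s_l|^p ≤ c_p^p and max_l |s_l| ≤ c_∞, define densities on ℝ^d by Q(x) = ∏_{l=1}^d φ_{κ_l}(x_l) and P(x) = ∏_{l=1}^d [ (1−q)φ_{κ_l}(x_l) + q φ_{κ_l + s_l}(x_l) ]. Then (1/(α−1)) · log ∫_{ℝ^d} P(x)^α Q(x)^{1−α} dx ≤ (d_0/(α−1)) · log( (1−q)^α + ∑_{v=1}^{α} C(α,v)(1−q)^{α−v} q^v · exp( v(v−1)c_∞² / (2σ²) ) ). -/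
open Finset MeasureTheory

private lemma gauss_integrable {σ : ℝ} (hσ : 0 < σ) (c : ℝ) :
    Integrable (fun x : ℝ => Real.exp (-(x - c) ^ 2 / (2 * σ ^ 2))) := by
  have h : ∀ x : ℝ, -(x - c) ^ 2 / (2 * σ ^ 2) = -(1 / (2 * σ ^ 2)) * (x - c) ^ 2 := by
    intro x; ring
  simp_rw [h]
  exact (integrable_exp_neg_mul_sq (by positivity)).comp_sub_right c

private lemma gauss_integral {σ : ℝ} (hσ : 0 < σ) (c : ℝ) :
    ∫ x : ℝ, Real.exp (-(x - c) ^ 2 / (2 * σ ^ 2)) = Real.sqrt (2 * Real.pi) * σ := by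
  have h : ∀ x : ℝ, -(x - c) ^ 2 / (2 * σ ^ 2) = -(1 / (2 * σ ^ 2)) * (x - c) ^ 2 := by
    intro x; ring
  simp_rw [h]
  rw [integral_sub_right_eq_self (fun x : ℝ => Real.exp (-(1 / (2 * σ ^ 2)) * x ^ 2)) c,
    integral_gaussian,
    show Real.pi / (1 / (2 * σ ^ 2)) = 2 * Real.pi * σ ^ 2 by field_simp,
    Real.sqrt_mul (by positivity), Real.sqrt_sq hσ.le]

private lemma gauss_term_eq {σ : ℝ} (hσ : 0 < σ) (m t x : ℝ) {v α : ℕ} (hv : v ≤ α) :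
    ((1 / (Real.sqrt (2 * Real.pi) * σ)) * Real.exp (-(x - (m + t)) ^ 2 / (2 * σ ^ 2))) ^ v *
      ((1 / (Real.sqrt (2 * Real.pi) * σ)) * Real.exp (-(x - m) ^ 2 / (2 * σ ^ 2))) ^ (α - v) *
      ((1 / (Real.sqrt (2 * Real.pi) * σ)) * Real.exp (-(x - m) ^ 2 / (2 * σ ^ 2)))
        ^ (1 - (α : ℝ)) =
    Real.exp ((v : ℝ) * ((v : ℝ) - 1) * t ^ 2 / (2 * σ ^ 2)) *
      ((1 / (Real.sqrt (2 * Real.pi) * σ)) *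
        Real.exp (-(x - (m + (v : ℝ) * t)) ^ 2 / (2 * σ ^ 2))) := by
  set C : ℝ := 1 / (Real.sqrt (2 * Real.pi) * σ) with hCdef
  have hC : 0 < C := by positivity
  set E1 : ℝ := -(x - (m + t)) ^ 2 / (2 * σ ^ 2)
  set E0 : ℝ := -(x - m) ^ 2 / (2 * σ ^ 2)
  have h1 : (C * Real.exp E1) ^ v = C ^ (v : ℝ) * Real.exp ((v : ℝ) * E1) := by
    rw [mul_pow, Real.rpow_natCast, ← Real.exp_nat_mul]
  have h2 : (C * Real.exp E0) ^ (α - v) = C ^ ((α : ℝ) - (v : ℝ)) * Real.exp (((α : ℝ) - (v : ℝ)) * E0) := by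
    rw [mul_pow, ← Real.rpow_natCast C, ← Real.exp_nat_mul, Nat.cast_sub hv]
  have h3 : (C * Real.exp E0) ^ (1 - (α : ℝ)) = C ^ (1 - (α : ℝ)) * Real.exp ((1 - (α : ℝ)) * E0) := by
    rw [Real.mul_rpow hC.le (Real.exp_nonneg _), ← Real.exp_mul, mul_comm E0]
  rw [h1, h2, h3]
  have hCc : C ^ (v : ℝ) * C ^ ((α : ℝ) - (v : ℝ)) * C ^ (1 - (α : ℝ)) = C := by
    rw [← Real.rpow_add hC, ← Real.rpow_add hC,
      show (v : ℝ) + ((α : ℝ) - (v : ℝ)) + (1 - (α : ℝ)) = 1 by ring, Real.rpow_one]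
  calc C ^ (v : ℝ) * Real.exp ((v : ℝ) * E1) *
        (C ^ ((α : ℝ) - (v : ℝ)) * Real.exp (((α : ℝ) - (v : ℝ)) * E0)) *
        (C ^ (1 - (α : ℝ)) * Real.exp ((1 - (α : ℝ)) * E0))
      = (C ^ (v : ℝ) * C ^ ((α : ℝ) - (v : ℝ)) * C ^ (1 - (α : ℝ))) *
        Real.exp ((v : ℝ) * E1 + (((α : ℝ) - (v : ℝ)) * E0 + (1 - (α : ℝ)) * E0)) := by
        rw [Real.exp_add, Real.exp_add]; ring
    _ = C * Real.exp ((v : ℝ) * ((v : ℝ) - 1) * t ^ 2 / (2 * σ ^ 2) +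
          -(x - (m + (v : ℝ) * t)) ^ 2 / (2 * σ ^ 2)) := by
        rw [hCc]
        congr 1
        congr 1
        simp only [E1, E0]
        field_simp
        ring
    _ = _ := by rw [Real.exp_add]; ring

private lemma coord_integral {σ q : ℝ} (hσ : 0 < σ)
    (α : ℕ) (m t : ℝ)
    (φ : ℝ → ℝ → ℝ)
    (hφ : ∀ m x, φ m x =
      (1 / (Real.sqrt (2 * Real.pi) * σ)) * Real.exp (-(x - m) ^ 2 / (2 * σ ^ 2))) :
    ∫ x : ℝ, ((1 - q) * φ m x + q * φ (m + t) x) ^ (α : ℝ) * (φ m x) ^ (1 - (α : ℝ))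
      = ∑ v ∈ Finset.range (α + 1), (α.choose v : ℝ) * (1 - q) ^ (α - v) * q ^ v *
          Real.exp ((v : ℝ) * ((v : ℝ) - 1) * t ^ 2 / (2 * σ ^ 2)) := by
  have key : ∀ x : ℝ,
      ((1 - q) * φ m x + q * φ (m + t) x) ^ (α : ℝ) * (φ m x) ^ (1 - (α : ℝ))
      = ∑ v ∈ Finset.range (α + 1),
          ((α.choose v : ℝ) * (1 - q) ^ (α - v) * q ^ v *
            Real.exp ((v : ℝ) * ((v : ℝ) - 1) * t ^ 2 / (2 * σ ^ 2))) *
          ((1 / (Real.sqrt (2 * Real.pi) * σ)) *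
            Real.exp (-(x - (m + (v : ℝ) * t)) ^ 2 / (2 * σ ^ 2))) := by
    intro x
    rw [Real.rpow_natCast, add_comm ((1 - q) * φ m x), add_pow, Finset.sum_mul]
    refine Finset.sum_congr rfl fun v hv => ?_
    rw [Finset.mem_range, Nat.lt_succ_iff] at hv
    have hg := gauss_term_eq hσ m t x hv
    calc (q * φ (m + t) x) ^ v * ((1 - q) * φ m x) ^ (α - v) * (α.choose v : ℝ) *
          (φ m x) ^ (1 - (α : ℝ))
        = ((α.choose v : ℝ) * (1 - q) ^ (α - v) * q ^ v) *
          ((φ (m + t) x) ^ v * (φ m x) ^ (α - v) * (φ m x) ^ (1 - (α : ℝ))) := by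
          rw [mul_pow, mul_pow]; ring
      _ = _ := by rw [hφ, hφ, hg]; ring
  simp_rw [key]
  rw [integral_finset_sum _ (fun v _ => ((gauss_integrable hσ _).const_mul _).const_mul _)]
  refine Finset.sum_congr rfl fun v hv => ?_
  rw [integral_const_mul, integral_const_mul, gauss_integral hσ]
  have h2π : Real.sqrt (2 * Real.pi) ≠ 0 := by positivity
  field_simp

/-- Rényi divergence bound for the coordinate-wise subsampled Gaussian
mechanism under mixed `l_p`/`l_∞` clipping: for `Q` a product of Gaussians `N(κ_l, σ²)`
and `P` the corresponding product of two-component Gaussian mixtures with shifts `s_l`,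
`(1/(α−1)) log ∫ P^α Q^{1−α} ≤ (d₀/(α−1)) log((1−q)^α + ∑_{v=1}^α C(α,v)(1−q)^{α−v} q^v
exp(v(v−1)c_∞²/(2σ²)))`. -/
theorem stmt_6 (d d0 α : ℕ) (hα : 2 ≤ α) (hd0 : 0 < d0) (hd0d : d0 ≤ d)
    (q σ p cinfty : ℝ)
    (hq0 : 0 < q) (hq1 : q < 1) (hσ : 0 < σ) (hp0 : 0 < p) (hp2 : p ≤ 2)
    (hc : 0 < cinfty)
    (cp : ℝ) (hcp : cp = cinfty * (d0 : ℝ) ^ ((1 : ℝ) / p))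
    (κ s : Fin d → ℝ)
    (hs1 : ∑ l, |s l| ^ p ≤ cp ^ p) (hs2 : ∀ l, |s l| ≤ cinfty)
    (φ : ℝ → ℝ → ℝ)
    (hφ : ∀ m x, φ m x =
      (1 / (Real.sqrt (2 * Real.pi) * σ)) * Real.exp (-(x - m) ^ 2 / (2 * σ ^ 2)))
    (P Q : (Fin d → ℝ) → ℝ)
    (hQ : ∀ x, Q x = ∏ l, φ (κ l) (x l))
    (hP : ∀ x, P x = ∏ l, ((1 - q) * φ (κ l) (x l) + q * φ (κ l + s l) (x l))) :
    (1 / ((α : ℝ) - 1)) *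
        Real.log (∫ x : Fin d → ℝ, P x ^ (α : ℝ) * Q x ^ (1 - (α : ℝ)))
      ≤ ((d0 : ℝ) / ((α : ℝ) - 1)) *
        Real.log ((1 - q) ^ α +
          ∑ v ∈ Finset.Icc 1 α, (α.choose v : ℝ) * (1 - q) ^ (α - v) * q ^ v *
            Real.exp ((v : ℝ) * ((v : ℝ) - 1) * cinfty ^ 2 / (2 * σ ^ 2))) := by
  have hq1' : 0 < 1 - q := by linarith
  have hφpos : ∀ m x, 0 < φ m x := by intro m x; rw [hφ]; positivity
  -- coefficients
  set a : ℕ → ℝ := fun v => (α.choose v : ℝ) * (1 - q) ^ (α - v) * q ^ v with ha_def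
  have ha_nonneg : ∀ v, 0 ≤ a v := by intro v; rw [ha_def]; positivity
  have ha_sum : ∑ v ∈ Finset.range (α + 1), a v = 1 := by
    have h := add_pow q (1 - q) α
    rw [show q + (1 - q) = 1 by ring, one_pow] at h
    rw [show (1 : ℝ) = ∑ k ∈ Finset.range (α + 1), q ^ k * (1 - q) ^ (α - k) * (α.choose k : ℝ)
      from h]
    exact Finset.sum_congr rfl fun v _ => by rw [ha_def]; ring
  set J : ℝ → ℝ := fun u => ∑ v ∈ Finset.range (α + 1), a v *
      Real.exp ((v : ℝ) * ((v : ℝ) - 1) * u ^ 2 / (2 * σ ^ 2)) with hJ_def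
  have hvv : ∀ v : ℕ, 0 ≤ (v : ℝ) * ((v : ℝ) - 1) := by
    intro v
    rcases Nat.eq_zero_or_pos v with h | h
    · simp [h]
    · have : (1 : ℝ) ≤ (v : ℝ) := by exact_mod_cast h
      nlinarith
  have hJ1 : ∀ u : ℝ, 1 ≤ J u := by
    intro u
    rw [hJ_def]
    calc (1 : ℝ) = ∑ v ∈ Finset.range (α + 1), a v * 1 := by simp [ha_sum]
      _ ≤ _ := by
        refine Finset.sum_le_sum fun v _ => ?_
        have : (0 : ℝ) ≤ (v : ℝ) * ((v : ℝ) - 1) * u ^ 2 / (2 * σ ^ 2) := by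
          have := hvv v; positivity
        exact mul_le_mul_of_nonneg_left (Real.one_le_exp this) (ha_nonneg v)
  have hJpos : ∀ u : ℝ, 0 < J u := fun u => lt_of_lt_of_le one_pos (hJ1 u)
  -- the RHS log-argument equals J cinfty
  have hBJ : (1 - q) ^ α +
      ∑ v ∈ Finset.Icc 1 α, (α.choose v : ℝ) * (1 - q) ^ (α - v) * q ^ v *
        Real.exp ((v : ℝ) * ((v : ℝ) - 1) * cinfty ^ 2 / (2 * σ ^ 2)) = J cinfty := by
    rw [hJ_def]
    beta_reduce
    rw [show Finset.range (α + 1) = insert 0 (Finset.Icc 1 α) by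
      ext n; simp [Nat.lt_succ_iff]; omega, Finset.sum_insert (by simp), ha_def]
    simp [mul_comm]
  -- value of the integral
  have hI : (∫ x : Fin d → ℝ, P x ^ (α : ℝ) * Q x ^ (1 - (α : ℝ))) = ∏ l, J (s l) := by
    have hfact : (fun x : Fin d → ℝ => P x ^ (α : ℝ) * Q x ^ (1 - (α : ℝ)))
        = fun x : Fin d → ℝ => ∏ l, (((1 - q) * φ (κ l) (x l) + q * φ (κ l + s l) (x l))
            ^ (α : ℝ) * (φ (κ l) (x l)) ^ (1 - (α : ℝ))) := by
      funext x
      rw [hP, hQ, ← Real.finset_prod_rpow _ _ (fun l _ => add_nonneg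
          (mul_nonneg hq1'.le (hφpos _ _).le) (mul_nonneg hq0.le (hφpos _ _).le)) (α : ℝ),
        ← Real.finset_prod_rpow _ _ (fun l _ => (hφpos _ _).le) (1 - (α : ℝ)),
        ← Finset.prod_mul_distrib]
    rw [hfact, MeasureTheory.volume_pi,
      MeasureTheory.integral_fintype_prod_eq_prod
        (fun l (y : ℝ) => ((1 - q) * φ (κ l) y + q * φ (κ l + s l) y) ^ (α : ℝ) *
          (φ (κ l) y) ^ (1 - (α : ℝ)))]
    refine Finset.prod_congr rfl fun l _ => ?_
    rw [coord_integral hσ α (κ l) (s l) φ hφ, hJ_def, ha_def]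
  -- per-coordinate log bound
  have hcoord : ∀ l : Fin d,
      Real.log (J (s l)) ≤ (|s l| / cinfty) ^ p * Real.log (J cinfty) := by
    intro l
    by_cases hsl : s l = 0
    · have hJ0 : J (s l) = 1 := by
        rw [hJ_def]; beta_reduce
        rw [hsl]
        simp only [ne_eq, OfNat.ofNat_ne_zero, not_false_eq_true, zero_pow, mul_zero,
          zero_div, Real.exp_zero, mul_one]
        exact ha_sum
      rw [hJ0, Real.log_one, hsl, abs_zero, zero_div, Real.zero_rpow hp0.ne', zero_mul]
    · set u := |s l| / cinfty with hu_def
      have hu0 : 0 < u := div_pos (abs_pos.mpr hsl) hc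
      have hu1 : u ≤ 1 := (div_le_one hc).mpr (hs2 l)
      set tt := u ^ p with htt_def
      have ht0 : 0 < tt := Real.rpow_pos_of_pos hu0 p
      have ht1 : tt ≤ 1 := Real.rpow_le_one hu0.le hu1 hp0.le
      have hsq : (s l) ^ 2 ≤ tt * cinfty ^ 2 := by
        have h2 : u ^ (2 : ℝ) ≤ u ^ p := Real.rpow_le_rpow_of_exponent_ge hu0 hu1 hp2
        rw [Real.rpow_two] at h2
        calc (s l) ^ 2 = (u * cinfty) ^ 2 := by
              rw [hu_def, div_mul_cancel₀ _ hc.ne']; exact (sq_abs _).symm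
          _ = u ^ 2 * cinfty ^ 2 := by ring
          _ ≤ tt * cinfty ^ 2 := mul_le_mul_of_nonneg_right h2 (sq_nonneg _)
      have h2σ : (0 : ℝ) < 2 * σ ^ 2 := by positivity
      have hstep1 : J (s l) ≤ ∑ v ∈ Finset.range (α + 1), a v *
          Real.exp ((v : ℝ) * ((v : ℝ) - 1) * cinfty ^ 2 / (2 * σ ^ 2)) ^ tt := by
        rw [hJ_def]; beta_reduce
        refine Finset.sum_le_sum fun v _ => ?_
        refine mul_le_mul_of_nonneg_left ?_ (ha_nonneg v)
        rw [← Real.exp_mul]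
        apply Real.exp_le_exp.mpr
        have hnn := hvv v
        calc (v : ℝ) * ((v : ℝ) - 1) * (s l) ^ 2 / (2 * σ ^ 2)
            ≤ (v : ℝ) * ((v : ℝ) - 1) * (tt * cinfty ^ 2) / (2 * σ ^ 2) := by gcongr
          _ = (v : ℝ) * ((v : ℝ) - 1) * cinfty ^ 2 / (2 * σ ^ 2) * tt := by ring
      have hstep2 : (∑ v ∈ Finset.range (α + 1), a v *
          Real.exp ((v : ℝ) * ((v : ℝ) - 1) * cinfty ^ 2 / (2 * σ ^ 2)) ^ tt)
          ≤ (J cinfty) ^ tt := by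
        have h1t : (1 : ℝ) ≤ 1 / tt := one_le_one_div ht0 ht1
        have hmean := Real.arith_mean_le_rpow_mean (Finset.range (α + 1)) a
          (fun v => Real.exp ((v : ℝ) * ((v : ℝ) - 1) * cinfty ^ 2 / (2 * σ ^ 2)) ^ tt)
          (fun v _ => ha_nonneg v) ha_sum
          (fun v _ => Real.rpow_nonneg (Real.exp_nonneg _) _) h1t
        have hsimp : ∀ v : ℕ, (Real.exp ((v : ℝ) * ((v : ℝ) - 1) * cinfty ^ 2 / (2 * σ ^ 2))
            ^ tt) ^ (1 / tt) = Real.exp ((v : ℝ) * ((v : ℝ) - 1) * cinfty ^ 2 / (2 * σ ^ 2)) :=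
          fun v => by
            rw [← Real.rpow_mul (Real.exp_nonneg _), mul_one_div_cancel ht0.ne', Real.rpow_one]
        simp_rw [hsimp, one_div_one_div] at hmean
        calc (∑ v ∈ Finset.range (α + 1), a v *
            Real.exp ((v : ℝ) * ((v : ℝ) - 1) * cinfty ^ 2 / (2 * σ ^ 2)) ^ tt) ≤ _ := hmean
          _ = (J cinfty) ^ tt := by rw [hJ_def]
      calc Real.log (J (s l)) ≤ Real.log ((J cinfty) ^ tt) :=
            Real.log_le_log (hJpos _) (hstep1.trans hstep2)
        _ = tt * Real.log (J cinfty) := Real.log_rpow (hJpos _) _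
  -- sum of exponents
  have hsum_t : ∑ l : Fin d, (|s l| / cinfty) ^ p ≤ (d0 : ℝ) := by
    have hcpp : cp ^ p = cinfty ^ p * (d0 : ℝ) := by
      rw [hcp, Real.mul_rpow hc.le (Real.rpow_nonneg (Nat.cast_nonneg _) _),
        ← Real.rpow_mul (Nat.cast_nonneg _), one_div_mul_cancel hp0.ne', Real.rpow_one]
    have hcpos : (0 : ℝ) < cinfty ^ p := Real.rpow_pos_of_pos hc p
    calc ∑ l : Fin d, (|s l| / cinfty) ^ p = (∑ l : Fin d, |s l| ^ p) / cinfty ^ p := by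
          rw [Finset.sum_div]
          exact Finset.sum_congr rfl fun l _ => Real.div_rpow (abs_nonneg _) hc.le p
      _ ≤ cp ^ p / cinfty ^ p := by gcongr
      _ = (d0 : ℝ) := by
          rw [hcpp, mul_comm, mul_div_assoc, div_self hcpos.ne', mul_one]
  have hlogB : 0 ≤ Real.log (J cinfty) := Real.log_nonneg (hJ1 _)
  have hmain : Real.log (∏ l, J (s l)) ≤ (d0 : ℝ) * Real.log (J cinfty) := by
    rw [Real.log_prod fun l _ => (hJpos (s l)).ne']
    calc ∑ l, Real.log (J (s l))
        ≤ ∑ l : Fin d, (|s l| / cinfty) ^ p * Real.log (J cinfty) :=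
          Finset.sum_le_sum fun l _ => hcoord l
      _ = (∑ l : Fin d, (|s l| / cinfty) ^ p) * Real.log (J cinfty) := by
          rw [Finset.sum_mul]
      _ ≤ (d0 : ℝ) * Real.log (J cinfty) := mul_le_mul_of_nonneg_right hsum_t hlogB
  have hα1 : (0 : ℝ) ≤ 1 / ((α : ℝ) - 1) := by
    have h2 : (2 : ℝ) ≤ (α : ℝ) := by exact_mod_cast hα
    apply div_nonneg zero_le_one
    linarith
  rw [hI, hBJ]
  calc (1 / ((α : ℝ) - 1)) * Real.log (∏ l, J (s l))
      ≤ (1 / ((α : ℝ) - 1)) * ((d0 : ℝ) * Real.log (J cinfty)) :=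
        mul_le_mul_of_nonneg_left hmain hα1
    _ = ((d0 : ℝ) / ((α : ℝ) - 1)) * Real.log (J cinfty) := by ring
end

section
/- Fix an integer α ≥ 2 and reals q ∈ (0,1) and τ > 0. For each positive integer m define ε_m(α) = (m/(α−1)) · log( (1−q)^α + ∑_{v=1}^{α} C(α,v)(1−q)^{α−v} q^v · exp( v(v−1)τ/m ) ). Then lim_{m→∞} ε_m(α) = α q² τ. -/
open Finset

lemma myrange_succ_eq_insert (α : ℕ) : Finset.range (α+1) = insert 0 (Finset.Icc 1 α) := by
  ext v
  simp [Nat.lt_succ_iff]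
  omega

lemma mybinom_sum (a : ℕ) (q : ℝ) :
    ∑ i ∈ Finset.range (a+1), (a.choose i : ℝ) * (1-q)^(a-i) * q^i = 1 := by
  have h := add_pow q (1-q) a
  rw [show q + (1-q) = 1 by ring, one_pow] at h
  conv_rhs => rw [h]
  exact Finset.sum_congr rfl fun i _ => by ring

lemma myS_zero (α : ℕ) (q : ℝ) :
    (1-q)^α + ∑ v ∈ Finset.Icc 1 α, (α.choose v : ℝ) * (1-q)^(α-v) * q^v = 1 := by
  have h := mybinom_sum α q
  rw [myrange_succ_eq_insert, Finset.sum_insert (by simp)] at h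
  simpa using h

lemma mychoose_key (a i : ℕ) :
    (((a+2).choose (i+2) : ℝ)) * ((i:ℝ)+2) * ((i:ℝ)+1)
      = ((a:ℝ)+2) * ((a:ℝ)+1) * (a.choose i : ℝ) := by
  have h1 := Nat.add_one_mul_choose_eq (a+1) (i+1)
  have h2 := Nat.add_one_mul_choose_eq a i
  have h1' : ((a:ℝ)+2) * ((a+1).choose (i+1) : ℝ) = ((a+2).choose (i+2) : ℝ) * ((i:ℝ)+2) := by
    exact_mod_cast congrArg (Nat.cast : ℕ → ℝ) h1
  have h2' : ((a:ℝ)+1) * (a.choose i : ℝ) = ((a+1).choose (i+1) : ℝ) * ((i:ℝ)+1) := by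
    exact_mod_cast congrArg (Nat.cast : ℕ → ℝ) h2
  linear_combination (-((i:ℝ)+1)) * h1' - ((a:ℝ)+2) * h2'

lemma myderiv_sum (α : ℕ) (hα : 2 ≤ α) (q τ : ℝ) :
    ∑ v ∈ Finset.Icc 1 α, (α.choose v : ℝ) * (1-q)^(α-v) * q^v * ((v:ℝ)*((v:ℝ)-1)*τ)
      = (α:ℝ) * ((α:ℝ)-1) * q^2 * τ := by
  obtain ⟨a, rfl⟩ : ∃ a, α = a + 2 := ⟨α - 2, by omega⟩
  have h0 : ∑ v ∈ Finset.Icc 1 (a+2), (((a+2).choose v : ℝ) * (1-q)^(a+2-v) * q^v * ((v:ℝ)*((v:ℝ)-1)*τ))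
      = ∑ v ∈ Finset.range (a+3), (((a+2).choose v : ℝ) * (1-q)^(a+2-v) * q^v * ((v:ℝ)*((v:ℝ)-1)*τ)) := by
    rw [show a+3 = (a+2)+1 from rfl, myrange_succ_eq_insert, Finset.sum_insert (by simp)]
    simp
  rw [h0, Finset.sum_range_succ', Finset.sum_range_succ']
  have hsum : ∑ i ∈ Finset.range (a+1),
      (((a+2).choose (i+1+1) : ℝ) * (1-q)^(a+2-(i+1+1)) * q^(i+1+1) * (((i+1+1:ℕ):ℝ)*(((i+1+1:ℕ):ℝ)-1)*τ))
      = ∑ i ∈ Finset.range (a+1),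
        (((a:ℝ)+2) * ((a:ℝ)+1) * q^2 * τ) * ((a.choose i : ℝ) * (1-q)^(a-i) * q^i) := by
    refine Finset.sum_congr rfl fun i _ => ?_
    have hk := mychoose_key a i
    have hsub : a+2-(i+1+1) = a-i := by omega
    rw [hsub]
    push_cast
    rw [show q^(i+1+1) = q^i * q^2 by ring]
    linear_combination ((1-q)^(a-i) * q^i * q^2 * τ) * hk
  rw [hsum, ← Finset.mul_sum, mybinom_sum]
  push_cast
  ring

/-- As the number `m` of `l_∞`-saturated coordinates tends to infinity,
the RDP bound `ε_m(α) = (m/(α−1)) log((1−q)^α + ∑_{v=1}^α C(α,v)(1−q)^{α−v} q^v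
exp(v(v−1)τ/m))` of the coordinate-wise subsampled Gaussian mechanism converges to
`α q² τ`. -/
theorem stmt_7 (α : ℕ) (hα : 2 ≤ α) (q τ : ℝ)
    (hq0 : 0 < q) (hq1 : q < 1) (hτ : 0 < τ) :
    Filter.Tendsto
      (fun m : ℕ => ((m : ℝ) / ((α : ℝ) - 1)) *
        Real.log ((1 - q) ^ α +
          ∑ v ∈ Finset.Icc 1 α, (α.choose v : ℝ) * (1 - q) ^ (α - v) * q ^ v *
            Real.exp ((v : ℝ) * ((v : ℝ) - 1) * τ / (m : ℝ))))
      Filter.atTop (nhds ((α : ℝ) * q ^ 2 * τ)) := by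
  have hα1 : (1:ℝ) < (α:ℝ) := by exact_mod_cast lt_of_lt_of_le one_lt_two hα
  have hαne : (α:ℝ) - 1 ≠ 0 := by linarith
  set S : ℝ → ℝ := fun x => (1-q)^α + ∑ v ∈ Finset.Icc 1 α,
      (α.choose v : ℝ) * (1-q)^(α-v) * q^v * Real.exp ((v:ℝ)*((v:ℝ)-1)*τ*x) with hSdef
  have hS0 : S 0 = 1 := by
    simp only [hSdef, mul_zero, Real.exp_zero, mul_one]
    exact myS_zero α q
  set D : ℝ := (α:ℝ) * ((α:ℝ)-1) * q^2 * τ with hDdef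
  have hDS : HasDerivAt S D 0 := by
    have h : ∀ v ∈ Finset.Icc 1 α, HasDerivAt
        (fun x => (α.choose v : ℝ) * (1-q)^(α-v) * q^v * Real.exp ((v:ℝ)*((v:ℝ)-1)*τ*x))
        ((α.choose v : ℝ) * (1-q)^(α-v) * q^v * ((v:ℝ)*((v:ℝ)-1)*τ)) 0 := by
      intro v _
      have h1 : HasDerivAt (fun x : ℝ => (v:ℝ)*((v:ℝ)-1)*τ*x) ((v:ℝ)*((v:ℝ)-1)*τ) 0 := by
        simpa using (hasDerivAt_id (0:ℝ)).const_mul ((v:ℝ)*((v:ℝ)-1)*τ)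
      have h2 := h1.exp
      simp only [mul_zero, Real.exp_zero, one_mul] at h2
      exact h2.const_mul _
    have := (HasDerivAt.fun_sum h).const_add ((1-q)^α)
    rwa [myderiv_sum α hα q τ] at this
  have hlog : HasDerivAt (fun x => Real.log (S x)) D 0 := by
    have := hDS.log (by rw [hS0]; exact one_ne_zero)
    rwa [hS0, div_one] at this
  have hslope := hasDerivAt_iff_tendsto_slope.mp hlog
  have hseq : Filter.Tendsto (fun m : ℕ => (1:ℝ)/(m:ℝ)) Filter.atTop (nhdsWithin 0 {(0:ℝ)}ᶜ) := by
    refine tendsto_nhdsWithin_of_tendsto_nhds_of_eventually_within _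
      tendsto_one_div_atTop_nhds_zero_nat ?_
    filter_upwards [Filter.eventually_atTop.mpr ⟨1, fun m hm => hm⟩] with m hm
    have : (0:ℝ) < (m:ℝ) := by exact_mod_cast hm
    simp [Set.mem_compl_iff]
    positivity
  have hcomp := hslope.comp hseq
  have hfinal := hcomp.div_const ((α:ℝ)-1)
  have hval : D / ((α:ℝ)-1) = (α:ℝ) * q^2 * τ := by
    rw [hDdef]; field_simp
  rw [hval] at hfinal
  refine hfinal.congr' ?_
  filter_upwards [Filter.eventually_atTop.mpr ⟨1, fun m hm => hm⟩] with m hm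
  have hm0 : (0:ℝ) < (m:ℝ) := by exact_mod_cast hm
  have hm0' : (m:ℝ) ≠ 0 := ne_of_gt hm0
  have hSeq : S ((1:ℝ)/(m:ℝ)) = (1 - q) ^ α +
      ∑ v ∈ Finset.Icc 1 α, (α.choose v : ℝ) * (1 - q) ^ (α - v) * q ^ v *
        Real.exp ((v : ℝ) * ((v : ℝ) - 1) * τ / (m : ℝ)) := by
    simp only [hSdef]
    congr 1
    refine Finset.sum_congr rfl fun v _ => ?_
    rw [mul_one_div, mul_div_assoc]
  show slope (fun x => Real.log (S x)) 0 ((1:ℝ)/(m:ℝ)) / ((α:ℝ)-1) = _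
  rw [slope_def_field]
  rw [hSeq]
  rw [show Real.log (S 0) = 0 by rw [hS0]; exact Real.log_one]
  rw [sub_zero, sub_zero, div_div_eq_mul_div, div_one]
  ring
end

section
/- Fix an integer α ≥ 2 and reals q ∈ (0,1) and τ > 0, and define ε(α) = (1/(α−1)) · log( (1−q)^α + ∑_{v=1}^{α} C(α,v)(1−q)^{α−v} q^v · exp( v(v−1)τ ) ). Then ε(α) ≥ (1/(α−1)) · log( 1 + (α(α−1)/2) · (1−q)^{α−2} q² (e^{τ} − 1) ). -/
open Finset

/-- Lower bound on the RDP parameter of the one-dimensional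
q-Poisson-subsampled Gaussian mechanism with sensitivity-to-noise ratio τ:
`ε(α) ≥ (1/(α−1)) log(1 + (α(α−1)/2) (1−q)^{α−2} q² (e^τ − 1))`. -/
theorem stmt_9 (α : ℕ) (hα : 2 ≤ α) (q τ : ℝ)
    (hq0 : 0 < q) (hq1 : q < 1) (hτ : 0 < τ) :
    (1 / ((α : ℝ) - 1)) *
        Real.log ((1 - q) ^ α +
          ∑ v ∈ Finset.Icc 1 α, (α.choose v : ℝ) * (1 - q) ^ (α - v) * q ^ v *
            Real.exp ((v : ℝ) * ((v : ℝ) - 1) * τ))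
      ≥ (1 / ((α : ℝ) - 1)) *
        Real.log (1 + ((α : ℝ) * ((α : ℝ) - 1) / 2) * (1 - q) ^ (α - 2) * q ^ 2 *
          (Real.exp τ - 1)) := by
  have h1q : 0 < 1 - q := by linarith
  set B : ℝ := ((α : ℝ) * ((α : ℝ) - 1) / 2) * (1 - q) ^ (α - 2) * q ^ 2 *
      (Real.exp τ - 1) with hB
  have hαR : (1 : ℝ) ≤ (α : ℝ) - 1 := by
    have : (2 : ℝ) ≤ (α : ℝ) := by exact_mod_cast hα
    linarith
  have hBpos : 0 ≤ B := by
    have h1 : 0 ≤ Real.exp τ - 1 := by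
      have := Real.one_le_exp hτ.le
      linarith
    have h2 : 0 ≤ ((α : ℝ) * ((α : ℝ) - 1) / 2) := by nlinarith
    positivity
  -- the plain binomial sum equals 1
  have hset : Finset.range (α + 1) = insert 0 (Finset.Icc 1 α) := by
    ext x; simp; omega
  have hbinom : (1 - q) ^ α +
      ∑ v ∈ Finset.Icc 1 α, (α.choose v : ℝ) * (1 - q) ^ (α - v) * q ^ v = 1 := by
    have h := add_pow q (1 - q) α
    have hone : q + (1 - q) = 1 := by ring
    rw [hone, one_pow, hset, Finset.sum_insert (by simp)] at h
    simp only [pow_zero, one_mul, Nat.sub_zero, Nat.choose_zero_right, Nat.cast_one,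
      mul_one] at h
    have hs : ∑ v ∈ Finset.Icc 1 α, q ^ v * (1 - q) ^ (α - v) * (α.choose v : ℝ)
        = ∑ v ∈ Finset.Icc 1 α, (α.choose v : ℝ) * (1 - q) ^ (α - v) * q ^ v :=
      Finset.sum_congr rfl (fun v _ => by ring)
    rw [hs] at h
    linarith
  -- extra from v = 2 term
  set E : ℝ := (α.choose 2 : ℝ) * (1 - q) ^ (α - 2) * q ^ 2 * (Real.exp (2 * τ) - 1)
    with hE
  have hsum : ∑ v ∈ Finset.Icc 1 α, (α.choose v : ℝ) * (1 - q) ^ (α - v) * q ^ v *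
        Real.exp ((v : ℝ) * ((v : ℝ) - 1) * τ)
      ≥ (∑ v ∈ Finset.Icc 1 α, (α.choose v : ℝ) * (1 - q) ^ (α - v) * q ^ v) + E := by
    have h2mem : (2 : ℕ) ∈ Finset.Icc 1 α := by simp; omega
    calc (∑ v ∈ Finset.Icc 1 α, (α.choose v : ℝ) * (1 - q) ^ (α - v) * q ^ v) + E
        = ∑ v ∈ Finset.Icc 1 α, ((α.choose v : ℝ) * (1 - q) ^ (α - v) * q ^ v +
            if v = 2 then E else 0) := by
          rw [Finset.sum_add_distrib, Finset.sum_ite_eq' _ 2 (fun _ => E)]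
          simp [h2mem]
      _ ≤ _ := by
          apply Finset.sum_le_sum
          intro v hv
          by_cases h2 : v = 2
          · subst h2
            simp only [if_true]
            have : ((2 : ℕ) : ℝ) * (((2 : ℕ) : ℝ) - 1) * τ = 2 * τ := by
              push_cast; ring
            rw [this, hE]
            ring_nf
            nlinarith [pow_pos h1q (α - 2), sq_nonneg q, hq0,
              mul_pos (pow_pos h1q (α - 2)) (mul_pos (mul_pos hq0 hq0) hq0)]
          · simp only [h2, if_false, add_zero]
            have hnn : 0 ≤ (α.choose v : ℝ) * (1 - q) ^ (α - v) * q ^ v := by positivity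
            have hexp : 1 ≤ Real.exp ((v : ℝ) * ((v : ℝ) - 1) * τ) := by
              apply Real.one_le_exp
              have hv1 : 1 ≤ v := (Finset.mem_Icc.mp hv).1
              have hv1' : (1 : ℝ) ≤ (v : ℝ) := by exact_mod_cast hv1
              have := mul_nonneg (mul_nonneg (by linarith : (0:ℝ) ≤ (v:ℝ))
                (by linarith : (0:ℝ) ≤ (v:ℝ) - 1)) hτ.le
              linarith
            nlinarith
  have hEB : B ≤ E := by
    rw [hE, hB, Nat.cast_choose_two]
    have h1 : Real.exp τ - 1 ≤ Real.exp (2 * τ) - 1 := by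
      have := Real.exp_le_exp.mpr (by linarith : τ ≤ 2 * τ)
      linarith
    have h2 : 0 ≤ ((α : ℝ) * ((α : ℝ) - 1) / 2) * (1 - q) ^ (α - 2) * q ^ 2 := by
      have : 0 ≤ ((α : ℝ) * ((α : ℝ) - 1) / 2) := by nlinarith
      positivity
    nlinarith
  have hmain : 1 + B ≤ (1 - q) ^ α +
      ∑ v ∈ Finset.Icc 1 α, (α.choose v : ℝ) * (1 - q) ^ (α - v) * q ^ v *
        Real.exp ((v : ℝ) * ((v : ℝ) - 1) * τ) := by
    nlinarith [hsum, hbinom, hEB]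
  have hpos : 0 < 1 + B := by linarith
  apply mul_le_mul_of_nonneg_left (Real.log_le_log hpos hmain)
  positivity
end

section
/- Fix an integer α ≥ 2 and reals q ∈ (0,1) and τ > 0, and define ε(α) = (1/(α−1)) · log( (1−q)^α + ∑_{v=1}^{α} C(α,v)(1−q)^{α−v} q^v · exp( v(v−1)τ ) ). If α(α−1)τ ≥ 2 and q ≥ e^{−(α−1)τ/2}, then ε(α) ≥ (1/(α−1)) · log( 1 + (1/2)·( q · e^{(α−1)τ} )^{α} ); in particular ε(α) ≥ (1/(α−1)) · log( 1 + (1/2) e^{α(α−1)τ/2} ). -/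
open Finset

/-- For relatively large sampling rate the amplification diminishes:
if `α(α−1)τ ≥ 2` and `q ≥ e^{−(α−1)τ/2}` then
`ε(α) ≥ (1/(α−1)) log(1 + (1/2)(q e^{(α−1)τ})^α)`, and in particular
`ε(α) ≥ (1/(α−1)) log(1 + (1/2) e^{α(α−1)τ/2})`. -/
theorem stmt_10 (α : ℕ) (hα : 2 ≤ α) (q τ : ℝ)
    (hq0 : 0 < q) (hq1 : q < 1) (hτ : 0 < τ)
    (hατ : (α : ℝ) * ((α : ℝ) - 1) * τ ≥ 2)
    (hq : q ≥ Real.exp (-(((α : ℝ) - 1) * τ / 2))) :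
    (1 / ((α : ℝ) - 1)) *
        Real.log ((1 - q) ^ α +
          ∑ v ∈ Finset.Icc 1 α, (α.choose v : ℝ) * (1 - q) ^ (α - v) * q ^ v *
            Real.exp ((v : ℝ) * ((v : ℝ) - 1) * τ))
      ≥ (1 / ((α : ℝ) - 1)) *
        Real.log (1 + (1 / 2) * (q * Real.exp (((α : ℝ) - 1) * τ)) ^ α)
    ∧ (1 / ((α : ℝ) - 1)) *
        Real.log ((1 - q) ^ α +
          ∑ v ∈ Finset.Icc 1 α, (α.choose v : ℝ) * (1 - q) ^ (α - v) * q ^ v *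
            Real.exp ((v : ℝ) * ((v : ℝ) - 1) * τ))
      ≥ (1 / ((α : ℝ) - 1)) *
        Real.log (1 + (1 / 2) * Real.exp ((α : ℝ) * ((α : ℝ) - 1) * τ / 2)) := by
  have hq1' : (0:ℝ) ≤ 1 - q := by linarith
  set f : ℕ → ℝ := fun v => (α.choose v : ℝ) * (1 - q) ^ (α - v) * q ^ v *
      Real.exp ((v : ℝ) * ((v : ℝ) - 1) * τ) with hf
  set g : ℕ → ℝ := fun v => (α.choose v : ℝ) * (1 - q) ^ (α - v) * q ^ v with hg
  have hgnn : ∀ v, 0 ≤ g v := fun v => by positivity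
  have hαmem : α ∈ Finset.Icc 1 α := by simp; omega
  set E : ℝ := Real.exp ((α : ℝ) * ((α : ℝ) - 1) * τ) with hE
  have hfα : f α = q ^ α * E := by
    simp [hf, hE, Nat.choose_self]
  have hE2 : (2:ℝ) ≤ E := by
    have := Real.add_one_le_exp ((α : ℝ) * ((α : ℝ) - 1) * τ)
    linarith
  have hX : (q * Real.exp (((α : ℝ) - 1) * τ)) ^ α = q ^ α * E := by
    rw [mul_pow, hE, ← Real.exp_nat_mul]
    ring_nf
  -- binomial identity
  have hbin : (1 - q) ^ α + ∑ v ∈ Finset.Icc 1 α, g v = 1 := by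
    have hins : Finset.range (α + 1) = insert 0 (Finset.Icc 1 α) := by
      ext x; simp [Nat.lt_succ_iff]; omega
    have h := add_pow q (1 - q) α
    rw [hins, Finset.sum_insert (by simp), Finset.sum_congr rfl
      (fun v _ => show q ^ v * (1-q) ^ (α - v) * (α.choose v : ℝ) = g v by
        simp [hg]; ring)] at h
    norm_num at h
    linarith
  -- lower bound on the total mass
  have hS : (1 - q) ^ α + ∑ v ∈ Finset.Icc 1 α, f v ≥ 1 - q ^ α + q ^ α * E := by
    have h1 : ∑ v ∈ Finset.Icc 1 α, f v
        = f α + ∑ v ∈ (Finset.Icc 1 α).erase α, f v :=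
      (Finset.add_sum_erase _ f hαmem).symm
    have h2 : ∑ v ∈ (Finset.Icc 1 α).erase α, g v
        ≤ ∑ v ∈ (Finset.Icc 1 α).erase α, f v := by
      apply Finset.sum_le_sum
      intro v hv
      have hv1 : 1 ≤ v := (Finset.mem_Icc.mp (Finset.mem_of_mem_erase hv)).1
      have hv1' : (1:ℝ) ≤ (v:ℝ) := by exact_mod_cast hv1
      have h1e : (1:ℝ) ≤ Real.exp ((v : ℝ) * ((v : ℝ) - 1) * τ) :=
        Real.one_le_exp (mul_nonneg (mul_nonneg (by linarith) (by linarith)) hτ.le)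
      calc g v = g v * 1 := (mul_one _).symm
        _ ≤ g v * Real.exp ((v : ℝ) * ((v : ℝ) - 1) * τ) :=
            mul_le_mul_of_nonneg_left h1e (hgnn v)
        _ = f v := rfl
    have h3 : ∑ v ∈ (Finset.Icc 1 α).erase α, g v
        = (∑ v ∈ Finset.Icc 1 α, g v) - g α := by
      have := Finset.add_sum_erase _ g hαmem
      linarith
    have hgα : g α = q ^ α := by simp [hg]
    rw [h1, hfα]
    linarith
  have hqα : 0 < q ^ α := by positivity
  have hmain : (1 - q) ^ α + ∑ v ∈ Finset.Icc 1 α, f v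
      ≥ 1 + (1/2) * (q ^ α * E) := by
    nlinarith
  have hα1 : (1:ℝ) ≤ (α : ℝ) - 1 := by
    have : (2:ℝ) ≤ (α : ℝ) := by exact_mod_cast hα
    linarith
  have hc : 0 ≤ 1 / ((α : ℝ) - 1) := by positivity
  constructor
  · apply mul_le_mul_of_nonneg_left _ hc
    apply Real.log_le_log
    · rw [hX]; nlinarith
    · rw [hX]; linarith
  · apply mul_le_mul_of_nonneg_left _ hc
    apply Real.log_le_log
    · positivity
    · have hqpow : Real.exp (-(((α : ℝ) - 1) * τ / 2)) ^ α ≤ q ^ α :=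
        pow_le_pow_left₀ (Real.exp_pos _).le hq α
      have heq : Real.exp ((α : ℝ) * ((α : ℝ) - 1) * τ / 2)
          = Real.exp (-(((α : ℝ) - 1) * τ / 2)) ^ α * E := by
        rw [hE, ← Real.exp_nat_mul, ← Real.exp_add]
        ring_nf
      have hEpos : 0 < E := Real.exp_pos _
      have : Real.exp ((α : ℝ) * ((α : ℝ) - 1) * τ / 2) ≤ q ^ α * E := by
        rw [heq]
        exact mul_le_mul_of_nonneg_right hqpow hEpos.le
      linarith
end

section
/- Fix σ > 0, q ∈ [0,1], κ = (κ_1,…,κ_d) ∈ ℝ^d and s = (s_1,…,s_d) ∈ ℝ^d. For m ∈ ℝ let φ_m(x) = (1/(√(2π)σ)) exp(−(x−m)²/(2σ²)). Define densities on ℝ^d by f(x) = ∏_{l=1}^d φ_{κ_l}(x_l) and g(x) = ∏_{l=1}^d [ (1−q)φ_{κ_l}(x_l) + q φ_{κ_l + s_l}(x_l) ]. Then for every positive integer v, ∫_{ℝ^d} f(x) · (2 − g(x)/f(x))^v dx ≤ ∫_{ℝ^d} f(x) · (g(x)/f(x))^v dx. -/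
open Finset MeasureTheory

namespace Stmt12

open Real Function


noncomputable def gphi (σ m x : ℝ) : ℝ :=
  (1 / (Real.sqrt (2 * Real.pi) * σ)) * Real.exp (-(x - m) ^ 2 / (2 * σ ^ 2))

lemma gphi_pos {σ : ℝ} (hσ : 0 < σ) (m x : ℝ) : 0 < gphi σ m x := by
  have := Real.pi_pos
  unfold gphi
  positivity

lemma gphi_eq {σ : ℝ} (hσ : 0 < σ) (m : ℝ) :
    gphi σ m = ProbabilityTheory.gaussianPDFReal m ⟨σ ^ 2, sq_nonneg σ⟩ := by
  funext x
  simp only [gphi, ProbabilityTheory.gaussianPDFReal, NNReal.coe_mk]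
  congr 1
  rw [one_div]
  congr 1
  change √(2 * π) * σ = √(2 * π * σ ^ 2)
  rw [Real.sqrt_mul (by positivity) (σ ^ 2), Real.sqrt_sq hσ.le]

lemma integrable_gphi {σ : ℝ} (hσ : 0 < σ) (m : ℝ) : Integrable (gphi σ m) := by
  rw [gphi_eq hσ]
  exact ProbabilityTheory.integrable_gaussianPDFReal _ _

lemma integral_gphi {σ : ℝ} (hσ : 0 < σ) (m : ℝ) : ∫ x, gphi σ m x = 1 := by
  rw [gphi_eq hσ]
  refine ProbabilityTheory.integral_gaussianPDFReal_eq_one m ?_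
  intro h
  exact (pow_pos hσ 2).ne' (congrArg NNReal.toReal h)

lemma gphi_mul_exp {σ : ℝ} (hσ : 0 < σ) (m a b t : ℝ) :
    gphi σ m t * Real.exp (a * t + b)
      = Real.exp (a * m + σ ^ 2 * a ^ 2 / 2 + b) * gphi σ (m + a * σ ^ 2) t := by
  have hσ2 : (σ : ℝ) ^ 2 ≠ 0 := by positivity
  have key : -(t - m) ^ 2 / (2 * σ ^ 2) + (a * t + b)
      = (a * m + σ ^ 2 * a ^ 2 / 2 + b) + -(t - (m + a * σ ^ 2)) ^ 2 / (2 * σ ^ 2) := by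
    field_simp
    ring
  simp only [gphi]
  rw [mul_assoc, ← Real.exp_add, key, Real.exp_add]
  ring

lemma integrable_gphi_exp {σ : ℝ} (hσ : 0 < σ) (m a b : ℝ) :
    Integrable (fun t => gphi σ m t * Real.exp (a * t + b)) := by
  simp only [gphi_mul_exp hσ]
  exact (integrable_gphi hσ _).const_mul _

lemma integral_gphi_exp {σ : ℝ} (hσ : 0 < σ) (m a b : ℝ) :
    ∫ t, gphi σ m t * Real.exp (a * t + b)
      = Real.exp (a * m + σ ^ 2 * a ^ 2 / 2 + b) := by
  simp only [gphi_mul_exp hσ]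
  rw [integral_const_mul, integral_gphi hσ, mul_one]



/-- A sequence all of whose iterated forward differences are nonnegative. -/
def AM (u : ℕ → ℝ) : Prop := ∀ k j, 0 ≤ (_root_.fwdDiff 1)^[k] u j

lemma AM.nonneg {u : ℕ → ℝ} (h : AM u) (j : ℕ) : 0 ≤ u j := h 0 j

lemma AM.fwd {u : ℕ → ℝ} (h : AM u) : AM (_root_.fwdDiff 1 u) := fun k j => by
  rw [← Function.iterate_succ_apply]
  exact h (k + 1) j

lemma fwdDiff_iter_zero_fun (k j : ℕ) : (_root_.fwdDiff 1)^[k] (fun _ : ℕ => (0 : ℝ)) j = 0 := by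
  induction k generalizing j with
  | zero => simp
  | succ k ih =>
    rw [Function.iterate_succ_apply]
    have : _root_.fwdDiff 1 (fun _ : ℕ => (0 : ℝ)) = fun _ : ℕ => (0 : ℝ) := by
      funext n; simp [fwdDiff]
    rw [this]; exact ih j

lemma AM.const {c : ℝ} (hc : 0 ≤ c) : AM (fun _ => c) := by
  intro k j
  cases k with
  | zero => simpa using hc
  | succ k =>
    rw [Function.iterate_succ_apply]
    have : _root_.fwdDiff 1 (fun _ : ℕ => c) = fun _ : ℕ => (0 : ℝ) := by
      funext n; simp [fwdDiff]
    rw [this, fwdDiff_iter_zero_fun]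

lemma AM.mul {u w : ℕ → ℝ} (hu : AM u) (hw : AM w) : AM (fun n => u n * w n) := by
  intro k
  induction k generalizing u w with
  | zero => intro j; simpa using mul_nonneg (hu.nonneg j) (hw.nonneg j)
  | succ k ih =>
    intro j
    rw [Function.iterate_succ_apply]
    have h1 : _root_.fwdDiff 1 (fun n => u n * w n)
        = (fun n => _root_.fwdDiff 1 u n * w n) + ((fun n => u n * _root_.fwdDiff 1 w n)
          + fun n => _root_.fwdDiff 1 u n * _root_.fwdDiff 1 w n) := by
      funext n
      simp only [Pi.add_apply, fwdDiff]
      ring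
    rw [h1, fwdDiff_iter_add, fwdDiff_iter_add, Pi.add_apply, Pi.add_apply]
    have t1 := ih hu.fwd hw j
    have t2 := ih hu hw.fwd j
    have t3 := ih hu.fwd hw.fwd j
    linarith

lemma AM.prod {ι : Type*} (s : Finset ι) (M : ι → ℕ → ℝ) (h : ∀ l ∈ s, AM (M l)) :
    AM (fun n => ∏ l ∈ s, M l n) := by
  classical
  induction s using Finset.cons_induction with
  | empty => simpa using AM.const zero_le_one
  | cons a s ha ih =>
    simp only [Finset.prod_cons]
    exact (h a (Finset.mem_cons_self a s)).mul
      (ih fun l hl => h l (Finset.mem_cons_of_mem hl))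

/-- Iterated forward difference as an explicit alternating sum (real version). -/
lemma fwdDiff_iter_sum (u : ℕ → ℝ) (k j : ℕ) :
    (_root_.fwdDiff 1)^[k] u j = ∑ a ∈ range (k + 1), (-1 : ℝ) ^ (k - a) * (k.choose a : ℝ) * u (j + a) := by
  rw [fwdDiff_iter_eq_sum_shift]
  refine Finset.sum_congr rfl fun a _ => ?_
  rw [zsmul_eq_mul, smul_eq_mul, mul_one]
  push_cast
  ring



/-- exp(c(n²−n)). -/
noncomputable def EE (c : ℝ) (n : ℕ) : ℝ := Real.exp (c * ((n : ℝ) ^ 2 - (n : ℝ)))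

lemma gphi_even {σ : ℝ} (y : ℝ) : gphi σ 0 (-y) = gphi σ 0 y := by
  simp only [gphi]
  ring_nf

/-- Key pointwise inequality for the symmetrization argument. -/
lemma pw_key (α : ℝ) (k : ℕ) (hk : Odd k → 0 ≤ 2 * α + k) (y : ℝ) :
    0 ≤ Real.exp (α * y) * (Real.exp y - 1) ^ k
      + Real.exp (α * (-y)) * (Real.exp (-y) - 1) ^ k := by
  rcases Nat.even_or_odd k with he | ho
  · have h1 : (0:ℝ) ≤ (Real.exp y - 1) ^ k := he.pow_nonneg _
    have h2 : (0:ℝ) ≤ (Real.exp (-y) - 1) ^ k := he.pow_nonneg _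
    have := Real.exp_pos (α * y)
    have := Real.exp_pos (α * (-y))
    nlinarith
  · have hα := hk ho
    have hneg : Real.exp (-y) - 1 = -((Real.exp y - 1) * Real.exp (-y)) := by
      have h := Real.exp_ne_zero y
      rw [Real.exp_neg]
      field_simp
      ring
    have hodd : (Real.exp (-y) - 1) ^ k
        = -((Real.exp y - 1) ^ k * Real.exp (-((k : ℝ) * y))) := by
      rw [hneg, ho.neg_pow, mul_pow, ← Real.exp_nat_mul]
      ring_nf
    rw [hodd]
    have hcomb : Real.exp (α * y) * (Real.exp y - 1) ^ k
        + Real.exp (α * (-y)) * -((Real.exp y - 1) ^ k * Real.exp (-((k:ℝ) * y)))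
        = (Real.exp y - 1) ^ k * (Real.exp (α * y) - Real.exp (-(α + k) * y)) := by
      rw [show -(α + (k:ℝ)) * y = α * (-y) + -((k:ℝ) * y) by ring, Real.exp_add]
      ring
    rw [hcomb]
    rcases le_or_gt 0 y with hy | hy
    · have h1 : (0:ℝ) ≤ (Real.exp y - 1) ^ k := by
        have : (1:ℝ) ≤ Real.exp y := Real.one_le_exp (by linarith)
        exact pow_nonneg (by linarith) k
      refine mul_nonneg h1 (sub_nonneg.mpr (Real.exp_le_exp.mpr ?_))
      nlinarith
    · have h1 : (Real.exp y - 1) ^ k ≤ 0 := by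
        refine ho.pow_nonpos ?_
        have : Real.exp y < 1 := Real.exp_lt_one_iff.mpr hy
        linarith
      have h2 : Real.exp (α * y) - Real.exp (-(α + k) * y) ≤ 0 := by
        refine sub_nonpos.mpr (Real.exp_le_exp.mpr ?_)
        nlinarith
      nlinarith [mul_nonneg (neg_nonneg.mpr h1) (neg_nonneg.mpr h2)]

/-- Nonnegativity of alternating sums of `exp (c(n²−n))`. -/
lemma D_nonneg {c : ℝ} (hc : 0 ≤ c) (i k : ℕ) :
    0 ≤ ∑ a ∈ range (k + 1), (-1 : ℝ) ^ (k - a) * (k.choose a : ℝ) * EE c (i + a) := by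
  rcases hc.eq_or_lt with rfl | hc
  · -- c = 0
    have : ∀ a, EE (0:ℝ) (i + a) = 1 := by intro a; simp [EE]
    simp only [this, mul_one]
    have hb := add_pow (1 : ℝ) (-1) k
    have h0 : (0:ℝ) ≤ ((1:ℝ) + (-1)) ^ k := by
      rw [show (1:ℝ) + (-1) = 0 by ring]
      exact pow_nonneg le_rfl k
    rw [hb] at h0
    refine le_of_le_of_eq h0 (Finset.sum_congr rfl fun a _ => ?_)
    rw [one_pow, one_mul]
  · -- c > 0
    set σ' : ℝ := Real.sqrt (2 * c) with hσ'def
    have hσ' : 0 < σ' := Real.sqrt_pos.mpr (by linarith)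
    have hσ'sq : σ' ^ 2 = 2 * c := Real.sq_sqrt (by linarith)
    have hEE : ∀ n : ℕ, EE c n
        = Real.exp (-(c/4)) * ∫ y, gphi σ' 0 y * Real.exp (((n:ℝ) - 1/2) * y + 0) := by
      intro n
      rw [integral_gphi_exp hσ' 0 ((n:ℝ) - 1/2) 0, ← Real.exp_add, hσ'sq]
      simp only [EE, mul_zero, add_zero, zero_add]
      congr 1
      ring
    -- the symmetrized integrand
    set F : ℝ → ℝ := fun y =>
      gphi σ' 0 y * (Real.exp (((i:ℝ) - 1/2) * y) * (Real.exp y - 1) ^ k) with hFdef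
    have hFsum : F = fun y => ∑ a ∈ range (k + 1),
        ((-1:ℝ) ^ (k - a) * (k.choose a : ℝ))
          * (gphi σ' 0 y * Real.exp ((((i:ℝ) + a) - 1/2) * y + 0)) := by
      funext y
      have hb := add_pow (Real.exp y) (-1) k
      have : (Real.exp y - 1) ^ k = ∑ a ∈ range (k+1),
          Real.exp y ^ a * (-1:ℝ) ^ (k - a) * (k.choose a : ℝ) := by
        rw [sub_eq_add_neg, hb]
      rw [hFdef]
      simp only [this, Finset.mul_sum, Finset.sum_congr]
      refine Finset.sum_congr rfl fun a _ => ?_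
      rw [show (((i:ℝ) + a) - 1/2) * y + 0 = ((i:ℝ) - 1/2) * y + (a:ℝ) * y by ring,
        Real.exp_add, Real.exp_nat_mul]
      ring
    have hFint : Integrable F := by
      rw [hFsum]
      exact integrable_finset_sum _ fun a _ => (integrable_gphi_exp hσ' 0 _ _).const_mul _
    have hFnegint : Integrable (fun y => F (-y)) := hFint.comp_neg
    have hsum_eq : ∑ a ∈ range (k + 1), (-1 : ℝ) ^ (k - a) * (k.choose a : ℝ) * EE c (i + a)
        = Real.exp (-(c/4)) * ∫ y, F y := by
      rw [hFsum, integral_finset_sum _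
        (fun a _ => (integrable_gphi_exp hσ' 0 _ _).const_mul _)]
      rw [Finset.mul_sum]
      refine Finset.sum_congr rfl fun a _ => ?_
      rw [hEE (i + a), integral_const_mul]
      push_cast
      ring
    rw [hsum_eq]
    refine mul_nonneg (Real.exp_pos _).le ?_
    -- ∫ F ≥ 0 by symmetry
    have hflip : ∫ y, F (-y) = ∫ y, F y := integral_neg_eq_self F volume
    have hpos : 0 ≤ ∫ y, (F y + F (-y)) := by
      refine integral_nonneg fun y => ?_
      have hcond : Odd k → 0 ≤ 2 * ((i:ℝ) - 1/2) + (k:ℝ) := by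
        intro hodd
        have hk1 : (1:ℝ) ≤ (k:ℝ) := by exact_mod_cast hodd.pos
        have h0 : (0:ℝ) ≤ (i:ℝ) := Nat.cast_nonneg i
        nlinarith
      have hpw := pw_key ((i:ℝ) - 1/2) k hcond y
      calc (0:ℝ) ≤ gphi σ' 0 y * (Real.exp (((i:ℝ) - 1/2) * y) * (Real.exp y - 1) ^ k
            + Real.exp (((i:ℝ) - 1/2) * (-y)) * (Real.exp (-y) - 1) ^ k) :=
          mul_nonneg (gphi_pos hσ' 0 y).le hpw
      _ = F y + F (-y) := by rw [hFdef]; simp only [gphi_even]; ring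
    rw [integral_add hFint hFnegint, hflip] at hpos
    linarith


noncomputable def theta (σ κ0 s0 t : ℝ) : ℝ := (2 * (t - κ0) * s0 - s0 ^ 2) / (2 * σ ^ 2)

noncomputable def rho (σ q κ0 s0 t : ℝ) : ℝ := (1 - q) + q * Real.exp (theta σ κ0 s0 t)

variable {σ q κ0 s0 : ℝ}

lemma exp_theta_pow (hσ : 0 < σ) (n : ℕ) (t : ℝ) :
    Real.exp (theta σ κ0 s0 t) ^ n
      = Real.exp (((n : ℝ) * s0 / σ ^ 2) * t
          + (n : ℝ) * (-(2 * κ0 * s0) - s0 ^ 2) / (2 * σ ^ 2)) := by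
  rw [← Real.exp_nat_mul]
  congr 1
  unfold theta
  have : (σ:ℝ)^2 ≠ 0 := by positivity
  field_simp
  ring

lemma integrable_gphi_expθ (hσ : 0 < σ) (n : ℕ) :
    Integrable (fun t => gphi σ κ0 t * Real.exp (theta σ κ0 s0 t) ^ n) := by
  simp only [exp_theta_pow hσ]
  exact integrable_gphi_exp hσ _ _ _

lemma integral_gphi_expθ (hσ : 0 < σ) (n : ℕ) :
    ∫ t, gphi σ κ0 t * Real.exp (theta σ κ0 s0 t) ^ n = EE (s0 ^ 2 / (2 * σ ^ 2)) n := by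
  simp only [exp_theta_pow hσ]
  rw [integral_gphi_exp hσ]
  unfold EE
  congr 1
  have : (σ:ℝ)^2 ≠ 0 := by positivity
  field_simp
  ring

lemma rho_pow (n : ℕ) (t : ℝ) :
    rho σ q κ0 s0 t ^ n = ∑ i ∈ range (n + 1),
      (q ^ i * (1 - q) ^ (n - i) * (n.choose i : ℝ)) * Real.exp (theta σ κ0 s0 t) ^ i := by
  have h : rho σ q κ0 s0 t = q * Real.exp (theta σ κ0 s0 t) + (1 - q) := by
    unfold rho; ring
  rw [h, add_pow]
  exact Finset.sum_congr rfl fun i _ => by rw [mul_pow]; ring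

lemma gphi_rho_eq (n : ℕ) :
    (fun t => gphi σ κ0 t * rho σ q κ0 s0 t ^ n)
      = fun t => ∑ i ∈ range (n + 1),
          (q ^ i * (1 - q) ^ (n - i) * (n.choose i : ℝ))
            * (gphi σ κ0 t * Real.exp (theta σ κ0 s0 t) ^ i) := by
  funext t
  rw [rho_pow, Finset.mul_sum]
  exact Finset.sum_congr rfl fun i _ => by ring

lemma integrable_gphi_rho (hσ : 0 < σ) (n : ℕ) :
    Integrable (fun t => gphi σ κ0 t * rho σ q κ0 s0 t ^ n) := by
  rw [gphi_rho_eq]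
  exact integrable_finset_sum _ fun i _ => (integrable_gphi_expθ hσ i).const_mul _

/-- The alternating sums of the per-coordinate moments are nonnegative. -/
lemma Mdiff_nonneg (hσ : 0 < σ) (hq0 : 0 ≤ q) (hq1 : q ≤ 1) (j k : ℕ) :
    0 ≤ ∑ a ∈ range (k + 1), (-1 : ℝ) ^ (k - a) * (k.choose a : ℝ)
          * ∫ t, gphi σ κ0 t * rho σ q κ0 s0 t ^ (j + a) := by
  set c : ℝ := s0 ^ 2 / (2 * σ ^ 2) with hcdef
  have hc : 0 ≤ c := by positivity
  -- step 1: the alternating sum is ∫ gphi ρ^j (ρ-1)^k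
  have hstep1 : ∑ a ∈ range (k + 1), (-1 : ℝ) ^ (k - a) * (k.choose a : ℝ)
          * ∫ t, gphi σ κ0 t * rho σ q κ0 s0 t ^ (j + a)
      = ∫ t, gphi σ κ0 t * rho σ q κ0 s0 t ^ j * (rho σ q κ0 s0 t - 1) ^ k := by
    simp_rw [← integral_const_mul]
    rw [← integral_finset_sum _ fun a _ => ((integrable_gphi_rho hσ (j + a)).const_mul _)]
    congr 1
    funext t
    have h3 : (rho σ q κ0 s0 t - 1) ^ k
        = ∑ a ∈ range (k + 1), rho σ q κ0 s0 t ^ a * (-1 : ℝ) ^ (k - a) * (k.choose a : ℝ) := by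
      rw [sub_eq_add_neg, add_pow]
    rw [h3, Finset.mul_sum]
    refine Finset.sum_congr rfl fun a _ => ?_
    rw [pow_add]
    ring
  -- step 2/3: expand and integrate term by term
  have hpoint : (fun t => gphi σ κ0 t * rho σ q κ0 s0 t ^ j * (rho σ q κ0 s0 t - 1) ^ k)
      = fun t => ∑ i ∈ range (j + 1), ∑ a ∈ range (k + 1),
          ((q ^ i * (1 - q) ^ (j - i) * (j.choose i : ℝ) * q ^ k)
            * ((-1 : ℝ) ^ (k - a) * (k.choose a : ℝ)))
              * (gphi σ κ0 t * Real.exp (theta σ κ0 s0 t) ^ (i + a)) := by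
    funext t
    have h1 := rho_pow (σ := σ) (q := q) (κ0 := κ0) (s0 := s0) j t
    have h2 : (rho σ q κ0 s0 t - 1) ^ k = ∑ a ∈ range (k + 1),
        ((-1 : ℝ) ^ (k - a) * (k.choose a : ℝ) * q ^ k)
          * Real.exp (theta σ κ0 s0 t) ^ a := by
      have hr : rho σ q κ0 s0 t - 1 = q * Real.exp (theta σ κ0 s0 t) + (-q) := by
        unfold rho; ring
      rw [hr, add_pow]
      refine Finset.sum_congr rfl fun a ha => ?_
      have haq : (q : ℝ) ^ a * q ^ (k - a) = q ^ k := by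
        rw [← pow_add, Nat.add_sub_cancel' (Nat.lt_succ_iff.mp (Finset.mem_range.mp ha))]
      rw [mul_pow, neg_pow]
      linear_combination
        (Real.exp (theta σ κ0 s0 t) ^ a * (-1 : ℝ) ^ (k - a) * (k.choose a : ℝ)) * haq
    rw [mul_assoc, h1, h2, Finset.sum_mul_sum, Finset.mul_sum]
    refine Finset.sum_congr rfl fun i _ => ?_
    rw [Finset.mul_sum]
    refine Finset.sum_congr rfl fun a _ => ?_
    rw [pow_add]
    ring
  have hMint : ∫ t, gphi σ κ0 t * rho σ q κ0 s0 t ^ j * (rho σ q κ0 s0 t - 1) ^ k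
      = ∑ i ∈ range (j + 1), (q ^ i * (1 - q) ^ (j - i) * (j.choose i : ℝ) * q ^ k)
          * ∑ a ∈ range (k + 1), (-1 : ℝ) ^ (k - a) * (k.choose a : ℝ) * EE c (i + a) := by
    rw [hpoint]
    rw [integral_finset_sum _ fun i _ => integrable_finset_sum _
      fun a _ => (integrable_gphi_expθ hσ (i + a)).const_mul _]
    refine Finset.sum_congr rfl fun i _ => ?_
    rw [integral_finset_sum _ fun a _ => (integrable_gphi_expθ hσ (i + a)).const_mul _,
      Finset.mul_sum]
    refine Finset.sum_congr rfl fun a _ => ?_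
    rw [integral_const_mul, integral_gphi_expθ hσ (i + a)]
    ring
  rw [hstep1, hMint]
  refine Finset.sum_nonneg fun i _ => mul_nonneg ?_ (D_nonneg hc i (k := k))
  have h1 : (0:ℝ) ≤ q ^ i := pow_nonneg hq0 i
  have h2 : (0:ℝ) ≤ (1 - q) ^ (j - i) := pow_nonneg (by linarith) _
  have h3 : (0:ℝ) ≤ (j.choose i : ℝ) := Nat.cast_nonneg _
  have h4 : (0:ℝ) ≤ q ^ k := pow_nonneg hq0 k
  positivity




lemma gphi_shift {σ : ℝ} (hσ : 0 < σ) (κ0 s0 t : ℝ) :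
    gphi σ (κ0 + s0) t = gphi σ κ0 t * Real.exp (theta σ κ0 s0 t) := by
  unfold gphi theta
  rw [mul_assoc, ← Real.exp_add]
  congr 1
  have : (σ:ℝ)^2 ≠ 0 := by positivity
  field_simp
  ring

lemma one_sub_neg_one_pow_nonneg (k : ℕ) : (0:ℝ) ≤ 1 - (-1) ^ k := by
  rcases Nat.even_or_odd k with he | ho
  · rw [he.neg_one_pow]; norm_num
  · rw [ho.neg_one_pow]; norm_num

end Stmt12

open Stmt12 in
/-- For `f` a product of Gaussian densities `N(κ_l, σ²)` and `g` the
corresponding product of two-component Gaussian mixtures from q-coordinate-wise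
Poisson sampling, for every positive integer `v`,
`∫ f (2 − g/f)^v ≤ ∫ f (g/f)^v`. -/
theorem stmt_12 (d : ℕ) (σ q : ℝ) (hσ : 0 < σ) (hq0 : 0 ≤ q) (hq1 : q ≤ 1)
    (κ s : Fin d → ℝ)
    (φ : ℝ → ℝ → ℝ)
    (hφ : ∀ m x, φ m x =
      (1 / (Real.sqrt (2 * Real.pi) * σ)) * Real.exp (-(x - m) ^ 2 / (2 * σ ^ 2)))
    (f g : (Fin d → ℝ) → ℝ)
    (hf : ∀ x, f x = ∏ l, φ (κ l) (x l))
    (hg : ∀ x, g x = ∏ l, ((1 - q) * φ (κ l) (x l) + q * φ (κ l + s l) (x l))) :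
    ∀ v : ℕ, 0 < v →
      (∫ x : Fin d → ℝ, f x * (2 - g x / f x) ^ v)
        ≤ ∫ x : Fin d → ℝ, f x * (g x / f x) ^ v := by
  intro v _
  have hφg : ∀ m x, φ m x = gphi σ m x := fun m x => hφ m x
  have hfx : ∀ x : Fin d → ℝ, f x = ∏ l, gphi σ (κ l) (x l) := by
    intro x
    rw [hf]
    exact Finset.prod_congr rfl fun l _ => hφg _ _
  have hgx : ∀ x : Fin d → ℝ, g x = ∏ l, (gphi σ (κ l) (x l) * rho σ q (κ l) (s l) (x l)) := by
    intro x
    rw [hg]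
    refine Finset.prod_congr rfl fun l _ => ?_
    rw [hφg, hφg, gphi_shift hσ]
    unfold rho
    ring
  have hfpos : ∀ x : Fin d → ℝ, 0 < f x := by
    intro x
    rw [hfx]
    exact Finset.prod_pos fun l _ => gphi_pos hσ _ _
  have hR : ∀ x : Fin d → ℝ, g x / f x = ∏ l, rho σ q (κ l) (s l) (x l) := by
    intro x
    rw [hgx x, Finset.prod_mul_distrib, ← hfx x, mul_div_cancel_left₀ _ (hfpos x).ne']
  have hfR : ∀ n : ℕ, (fun x : Fin d → ℝ => f x * (g x / f x) ^ n)
      = fun x => ∏ l, (gphi σ (κ l) (x l) * rho σ q (κ l) (s l) (x l) ^ n) := by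
    intro n
    funext x
    rw [hR x, hfx x, ← Finset.prod_pow, ← Finset.prod_mul_distrib]
  set M : Fin d → ℕ → ℝ :=
    fun l n => ∫ t, gphi σ (κ l) t * rho σ q (κ l) (s l) t ^ n with hMdef
  set P : ℕ → ℝ := fun n => ∏ l, M l n with hPdef
  have hPint : ∀ n : ℕ, ∫ x : Fin d → ℝ, f x * (g x / f x) ^ n = P n := by
    intro n
    rw [hfR n]
    exact integral_fintype_prod_eq_prod (ι := Fin d)
      (f := fun l t => gphi σ (κ l) t * rho σ q (κ l) (s l) t ^ n)
  have hIntPow : ∀ n : ℕ, Integrable (fun x : Fin d → ℝ => f x * (g x / f x) ^ n) := by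
    intro n
    rw [hfR n]
    exact Integrable.fintype_prod fun l => integrable_gphi_rho hσ n
  have hfRm1 : ∀ k : ℕ, (fun x : Fin d → ℝ => f x * (g x / f x - 1) ^ k)
      = fun x => ∑ a ∈ range (k + 1),
          ((-1 : ℝ) ^ (k - a) * (k.choose a : ℝ)) * (f x * (g x / f x) ^ a) := by
    intro k
    funext x
    have hb : (g x / f x - 1) ^ k = ∑ a ∈ range (k + 1),
        (g x / f x) ^ a * (-1 : ℝ) ^ (k - a) * (k.choose a : ℝ) := by
      rw [sub_eq_add_neg, add_pow]
    rw [hb, Finset.mul_sum]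
    exact Finset.sum_congr rfl fun a _ => by ring
  have hIntRm1 : ∀ k : ℕ, Integrable (fun x : Fin d → ℝ => f x * (g x / f x - 1) ^ k) := by
    intro k
    rw [hfRm1 k]
    exact integrable_finset_sum _ fun a _ => (hIntPow a).const_mul _
  have hTval : ∀ k : ℕ, ∫ x : Fin d → ℝ, f x * (g x / f x - 1) ^ k
      = ∑ a ∈ range (k + 1), (-1 : ℝ) ^ (k - a) * (k.choose a : ℝ) * P a := by
    intro k
    rw [hfRm1 k, integral_finset_sum _ fun a _ => (hIntPow a).const_mul _]
    exact Finset.sum_congr rfl fun a _ => by rw [integral_const_mul, hPint a]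
  have hAM : ∀ l, AM (M l) := by
    intro l k j
    rw [fwdDiff_iter_sum]
    exact Mdiff_nonneg hσ hq0 hq1 j k
  have hAMP : AM P := AM.prod Finset.univ M fun l _ => hAM l
  have hT_nonneg : ∀ k : ℕ, 0 ≤ ∫ x : Fin d → ℝ, f x * (g x / f x - 1) ^ k := by
    intro k
    have h := fwdDiff_iter_sum P k 0
    simp only [zero_add] at h
    rw [hTval k, ← h]
    exact hAMP k 0
  have hpoly : ∀ t : ℝ, t ^ v - (2 - t) ^ v
      = ∑ k ∈ range (v + 1), (v.choose k : ℝ) * (1 - (-1) ^ k) * (t - 1) ^ k := by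
    intro t
    have h1 : t ^ v = ∑ k ∈ range (v + 1), (t - 1) ^ k * 1 ^ (v - k) * (v.choose k : ℝ) := by
      rw [← add_pow]
      norm_num
    have h2 : (2 - t) ^ v
        = ∑ k ∈ range (v + 1), (-(t - 1)) ^ k * 1 ^ (v - k) * (v.choose k : ℝ) := by
      rw [← add_pow]
      congr 1
      ring
    rw [h1, h2, ← Finset.sum_sub_distrib]
    exact Finset.sum_congr rfl fun k _ => by rw [neg_pow]; ring
  have hdiffeq : (fun x : Fin d → ℝ => f x * (g x / f x) ^ v - f x * (2 - g x / f x) ^ v)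
      = fun x => ∑ k ∈ range (v + 1),
          ((v.choose k : ℝ) * (1 - (-1) ^ k)) * (f x * (g x / f x - 1) ^ k) := by
    funext x
    rw [← mul_sub, hpoly (g x / f x), Finset.mul_sum]
    exact Finset.sum_congr rfl fun k _ => by ring
  have hInt2 : Integrable (fun x : Fin d → ℝ => f x * (2 - g x / f x) ^ v) := by
    have heq : (fun x : Fin d → ℝ => f x * (2 - g x / f x) ^ v)
        = fun x => f x * (g x / f x) ^ v - ∑ k ∈ range (v + 1),
            ((v.choose k : ℝ) * (1 - (-1) ^ k)) * (f x * (g x / f x - 1) ^ k) := by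
      funext x
      have := congrFun hdiffeq x
      linarith [this]
    rw [heq]
    exact (hIntPow v).sub (integrable_finset_sum _ fun k _ => (hIntRm1 k).const_mul _)
  have hsub : (∫ x : Fin d → ℝ, f x * (g x / f x) ^ v)
        - (∫ x : Fin d → ℝ, f x * (2 - g x / f x) ^ v)
      = ∑ k ∈ range (v + 1), ((v.choose k : ℝ) * (1 - (-1) ^ k))
          * ∫ x : Fin d → ℝ, f x * (g x / f x - 1) ^ k := by
    rw [← integral_sub (hIntPow v) hInt2, hdiffeq,
      integral_finset_sum _ fun k _ => (hIntRm1 k).const_mul _]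
    exact Finset.sum_congr rfl fun k _ => integral_const_mul _ _
  have hS : 0 ≤ ∑ k ∈ range (v + 1), ((v.choose k : ℝ) * (1 - (-1) ^ k))
      * ∫ x : Fin d → ℝ, f x * (g x / f x - 1) ^ k :=
    Finset.sum_nonneg fun k _ => mul_nonneg
      (mul_nonneg (Nat.cast_nonneg _) (one_sub_neg_one_pow_nonneg k)) (hT_nonneg k)
  linarith [hsub, hS]
end

section
/- Fix σ > 0, q ∈ [0,1], κ = (κ_1,…,κ_d) ∈ ℝ^d and s = (s_1,…,s_d) ∈ ℝ^d. For m ∈ ℝ let φ_m(x) = (1/(√(2π)σ)) exp(−(x−m)²/(2σ²)). Define densities on ℝ^d by f(x) = ∏_{l=1}^d φ_{κ_l}(x_l) and g(x) = ∏_{l=1}^d [ (1−q)φ_{κ_l}(x_l) + q φ_{κ_l + s_l}(x_l) ]. Then for every positive integer j, ∫_{ℝ^d} f(x) · (g(x)/f(x) − 1)^j dx ≥ 0. -/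
open Finset MeasureTheory
open scoped fwdDiff

namespace Stmt13Aux

/-- Absolutely monotone sequence: all iterated forward differences are nonnegative. -/
def AbsMono (m : ℕ → ℝ) : Prop := ∀ j k : ℕ, 0 ≤ (Δ_[1])^[j] m k

lemma AbsMono.nonneg {m : ℕ → ℝ} (h : AbsMono m) (k : ℕ) : 0 ≤ m k := h 0 k

lemma AbsMono.diff {m : ℕ → ℝ} (h : AbsMono m) : AbsMono (Δ_[1] m) := by
  intro j k
  have := h (j + 1) k
  rwa [Function.iterate_succ_apply] at this

lemma AbsMono.mul {m n : ℕ → ℝ} (hm : AbsMono m) (hn : AbsMono n) :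
    AbsMono (fun k => m k * n k) := by
  intro j
  induction j generalizing m n with
  | zero => intro k; exact mul_nonneg (hm.nonneg k) (hn.nonneg k)
  | succ j ih =>
    intro k
    rw [Function.iterate_succ_apply]
    have hd : Δ_[1] (fun k => m k * n k)
        = (fun k => Δ_[1] m k * Δ_[1] n k) +
          ((fun k => Δ_[1] m k * n k) + (fun k => m k * Δ_[1] n k)) := by
      funext t
      simp only [fwdDiff, Pi.add_apply]
      ring
    rw [hd, fwdDiff_iter_add, fwdDiff_iter_add, Pi.add_apply, Pi.add_apply]
    have h1 := ih hm.diff hn.diff k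
    have h2 := ih hm.diff hn k
    have h3 := ih hm hn.diff k
    linarith

lemma absMono_one : AbsMono (fun _ => (1 : ℝ)) := by
  intro j k
  cases j with
  | zero => norm_num
  | succ j =>
    rw [Function.iterate_succ_apply, fwdDiff_const]
    have : (Δ_[1])^[j] (fun _ => (0:ℝ)) = fun _ => (0:ℝ) := by
      induction j with
      | zero => rfl
      | succ j ih =>
        rw [Function.iterate_succ_apply]
        have : Δ_[(1:ℕ)] (fun _ => (0:ℝ)) = fun _ => (0:ℝ) := fwdDiff_const 1 0
        rw [this, ih]
    rw [this]

lemma absMono_prod {ι : Type*} (t : Finset ι) (m : ι → ℕ → ℝ)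
    (h : ∀ i ∈ t, AbsMono (m i)) : AbsMono (fun k => ∏ i ∈ t, m i k) := by
  classical
  induction t using Finset.induction with
  | empty => simpa using absMono_one
  | insert a u hnotmem ih =>
    have : (fun k => ∏ i ∈ insert a u, m i k) = fun k => m a k * ∏ i ∈ u, m i k := by
      funext k; rw [Finset.prod_insert hnotmem]
    rw [this]
    exact (h a (Finset.mem_insert_self a u)).mul
      (ih fun i hi => h i (Finset.mem_insert_of_mem hi))



noncomputable def Eseq (c a : ℝ) : ℕ → ℝ :=
  fun t => Real.exp (c * (t * a + t * (t - 1)))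

noncomputable def Tf (c : ℝ) (j : ℕ) (a : ℝ) : ℝ := (Δ_[1])^[j] (Eseq c a) 0

lemma Tf_zero (c a : ℝ) : Tf c 0 a = 1 := by
  simp [Tf, Eseq]

lemma Eseq_shift (c a : ℝ) (t : ℕ) :
    Eseq c a (t + 1) = Real.exp (c * a) * Eseq c (a + 2) t := by
  rw [Eseq, Eseq, ← Real.exp_add]
  congr 1
  push_cast
  ring

lemma fwdDiff_Eseq (c a : ℝ) :
    Δ_[1] (Eseq c a) = Real.exp (c * a) • Eseq c (a + 2) + (-1 : ℝ) • Eseq c a := by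
  funext t
  simp only [fwdDiff, Pi.add_apply, Pi.smul_apply, smul_eq_mul, Eseq_shift]
  ring

lemma Tf_succ (c : ℝ) (j : ℕ) (a : ℝ) :
    Tf c (j + 1) a = Real.exp (c * a) * Tf c j (a + 2) - Tf c j a := by
  rw [Tf, Function.iterate_succ_apply, fwdDiff_Eseq, fwdDiff_iter_add,
    fwdDiff_iter_const_smul, fwdDiff_iter_const_smul]
  simp only [Pi.add_apply, Pi.smul_apply, smul_eq_mul]
  rw [Tf, Tf]
  ring

lemma Tf_sum (c : ℝ) (j : ℕ) (a : ℝ) :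
    Tf c j a = ∑ t ∈ range (j + 1),
      ((-1 : ℝ) ^ (j - t) * (j.choose t : ℝ)) * Eseq c a t := by
  rw [Tf, fwdDiff_iter_eq_sum_shift]
  apply Finset.sum_congr rfl
  intro t _
  have h1 : (0 : ℕ) + t • 1 = t := by simp
  rw [h1, zsmul_eq_mul]
  push_cast
  ring

lemma Tf_hasDeriv (c : ℝ) (j : ℕ) (a : ℝ) :
    HasDerivAt (fun x => Tf c (j + 1) x)
      (c * (j + 1) * Real.exp (c * a) * Tf c j (a + 2)) a := by
  have hform : ∀ x, Tf c (j + 1) x = ∑ t ∈ range (j + 2),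
      ((-1 : ℝ) ^ (j + 1 - t) * ((j + 1).choose t : ℝ)) *
        Real.exp (c * (t * x + t * (t - 1))) := by
    intro x; rw [Tf_sum]; rfl
  have hderiv : HasDerivAt (fun x => ∑ t ∈ range (j + 2),
      ((-1 : ℝ) ^ (j + 1 - t) * ((j + 1).choose t : ℝ)) *
        Real.exp (c * (t * x + t * (t - 1))))
      (∑ t ∈ range (j + 2),
        ((-1 : ℝ) ^ (j + 1 - t) * ((j + 1).choose t : ℝ)) *
          (Real.exp (c * (t * a + t * (t - 1))) * (c * t))) a := by
    apply HasDerivAt.fun_sum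
    intro t _
    have hin : HasDerivAt (fun x : ℝ => c * ((t : ℝ) * x + (t : ℝ) * ((t : ℝ) - 1)))
        (c * t) a := by
      have := (((hasDerivAt_id a).const_mul (t : ℝ)).add_const
        ((t : ℝ) * ((t : ℝ) - 1))).const_mul c
      simpa using this
    exact (hin.exp).const_mul _
  have heq : (∑ t ∈ range (j + 2),
      ((-1 : ℝ) ^ (j + 1 - t) * ((j + 1).choose t : ℝ)) *
        (Real.exp (c * (t * a + t * (t - 1))) * (c * t)))
      = c * (j + 1) * Real.exp (c * a) * Tf c j (a + 2) := by
    rw [Finset.sum_range_succ']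
    simp only [Nat.cast_zero, mul_zero, zero_mul, add_zero]
    rw [Tf_sum, Finset.mul_sum]
    apply Finset.sum_congr rfl
    intro i hi
    have hi' : i ≤ j := by
      have := Finset.mem_range.mp hi; omega
    have hsub : j + 1 - (i + 1) = j - i := by omega
    have hch : (((j + 1).choose (i + 1) : ℝ)) * ((i : ℝ) + 1) = ((j + 1) : ℝ) * (j.choose i : ℝ) := by
      have := Nat.add_one_mul_choose_eq j i
      have h2 : ((j + 1) * j.choose i : ℕ) = ((j + 1).choose (i + 1) * (i + 1) : ℕ) := this
      exact_mod_cast congrArg (fun n : ℕ => (n : ℝ)) h2.symm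
    have hexp : Real.exp (c * (((i : ℝ) + 1) * a + ((i : ℝ) + 1) * (((i : ℝ) + 1) - 1)))
        = Real.exp (c * a) * Real.exp (c * ((i : ℝ) * (a + 2) + (i : ℝ) * ((i : ℝ) - 1))) := by
      rw [← Real.exp_add]; congr 1; ring
    rw [hsub]
    simp only [Eseq]
    push_cast
    rw [hexp]
    linear_combination ((-1:ℝ)^(j-i) * (c * Real.exp (c*a) *
      Real.exp (c * ((i:ℝ) * (a + 2) + (i:ℝ) * ((i:ℝ) - 1))))) * hch
  rw [← heq] at *
  have : (fun x => Tf c (j + 1) x) = (fun x => ∑ t ∈ range (j + 2),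
      ((-1 : ℝ) ^ (j + 1 - t) * ((j + 1).choose t : ℝ)) *
        Real.exp (c * (t * x + t * (t - 1)))) := funext hform
  rw [this]
  exact hderiv

lemma Tf_nonneg {c : ℝ} (hc : 0 ≤ c) : ∀ j : ℕ, ∀ a : ℝ, 0 ≤ a → 0 ≤ Tf c j a := by
  intro j
  induction j using Nat.strong_induction_on with
  | _ j ih =>
    match j with
    | 0 => intro a _; rw [Tf_zero]; norm_num
    | 1 =>
      intro a ha
      rw [Tf_succ, Tf_zero, Tf_zero, mul_one]
      have := Real.one_le_exp (mul_nonneg hc ha)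
      linarith
    | (m + 2) =>
      intro a ha
      have hmono : MonotoneOn (fun x => Tf c (m + 1) x) (Set.Ici (0 : ℝ)) := by
        apply monotoneOn_of_deriv_nonneg (convex_Ici 0)
        · exact (Differentiable.continuous
            (fun x => (Tf_hasDeriv c m x).differentiableAt)).continuousOn
        · intro x _
          exact (Tf_hasDeriv c m x).differentiableAt.differentiableWithinAt
        · intro x hx
          rw [interior_Ici] at hx
          rw [(Tf_hasDeriv c m x).deriv]
          have h1 : 0 ≤ Tf c m (x + 2) := ih m (by omega) (x + 2) (by
            have : (0:ℝ) < x := hx; linarith)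
          positivity
      have hx0 : a ∈ Set.Ici (0:ℝ) := ha
      have hx2 : a + 2 ∈ Set.Ici (0:ℝ) := by simp [Set.mem_Ici]; linarith
      have h1 : Tf c (m + 1) a ≤ Tf c (m + 1) (a + 2) := hmono hx0 hx2 (by linarith)
      have h2 : 0 ≤ Tf c (m + 1) (a + 2) := ih (m + 1) (by omega) (a + 2) (by linarith)
      have h3 : 1 ≤ Real.exp (c * a) := Real.one_le_exp (mul_nonneg hc ha)
      rw [Tf_succ]
      nlinarith

/-- The base sequence `i ↦ exp (c·i·(i−1))`. -/
noncomputable def eseq (c : ℝ) : ℕ → ℝ := fun i => Real.exp (c * i * (i - 1))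


lemma absMono_eseq {c : ℝ} (hc : 0 ≤ c) : AbsMono (eseq c) := by
  intro j k
  have key : (Δ_[1])^[j] (eseq c) k = Real.exp (c * k * (k - 1)) * Tf c j (2 * k) := by
    rw [fwdDiff_iter_eq_sum_shift, Tf_sum, Finset.mul_sum]
    apply Finset.sum_congr rfl
    intro t _
    have h1 : k + t • 1 = k + t := by simp
    rw [h1, zsmul_eq_mul]
    simp only [eseq, Eseq]
    rw [show Real.exp (c * (k:ℝ) * ((k:ℝ) - 1)) *
        ((-1:ℝ) ^ (j - t) * (j.choose t : ℝ) * Real.exp (c * ((t:ℝ) * (2 * (k:ℝ)) + (t:ℝ) * ((t:ℝ) - 1))))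
        = (-1:ℝ) ^ (j - t) * (j.choose t : ℝ) *
          (Real.exp (c * (k:ℝ) * ((k:ℝ) - 1)) * Real.exp (c * ((t:ℝ) * (2 * (k:ℝ)) + (t:ℝ) * ((t:ℝ) - 1)))) by ring,
      ← Real.exp_add]
    push_cast
    ring_nf
  rw [key]
  have := Tf_nonneg hc j (2 * (k:ℝ)) (by positivity)
  positivity




/-- binomial mixture of a moment sequence -/
noncomputable def mixSeq (p q : ℝ) (m : ℕ → ℝ) : ℕ → ℝ :=
  fun k => ∑ i ∈ range (k + 1), (k.choose i : ℝ) * p ^ (k - i) * q ^ i * m i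

lemma mixSeq_pascal (p q : ℝ) (m : ℕ → ℝ) (k : ℕ) :
    mixSeq p q m (k + 1)
      = p * mixSeq p q m k + q * mixSeq p q (fun i => m (i + 1)) k := by
  have hA : p * mixSeq p q m k
      = ∑ i ∈ range (k + 1), (k.choose i : ℝ) * p ^ (k + 1 - i) * q ^ i * m i := by
    rw [mixSeq, Finset.mul_sum]
    refine Finset.sum_congr rfl fun i hi => ?_
    have hik : i ≤ k := Nat.lt_succ_iff.mp (Finset.mem_range.mp hi)
    rw [show k + 1 - i = (k - i) + 1 from by omega]
    ring
  have hB : q * mixSeq p q (fun i => m (i + 1)) k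
      = ∑ i ∈ range (k + 1), (k.choose i : ℝ) * p ^ (k - i) * q ^ (i + 1) * m (i + 1) := by
    rw [mixSeq, Finset.mul_sum]
    exact Finset.sum_congr rfl fun i _ => by ring
  have hA' : p * mixSeq p q m k
      = ∑ i ∈ range (k + 1), (k.choose (i + 1) : ℝ) * p ^ (k - i) * q ^ (i + 1) * m (i + 1)
        + p ^ (k + 1) * m 0 := by
    rw [hA, Finset.sum_range_succ']
    rw [Finset.sum_range_succ]
    simp only [Nat.choose_succ_self, Nat.cast_zero, zero_mul, add_zero, Nat.choose_zero_right,
      Nat.cast_one, one_mul, Nat.sub_zero, pow_zero, mul_one]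
    congr 1
    refine Finset.sum_congr rfl fun i _ => ?_
    rw [Nat.succ_sub_succ]
  rw [mixSeq, Finset.sum_range_succ']
  simp only [Nat.choose_zero_right, Nat.cast_one, one_mul, Nat.sub_zero, pow_zero, mul_one]
  have step : ∀ i ∈ range (k + 1),
      (((k + 1).choose (i + 1) : ℝ)) * p ^ (k + 1 - (i + 1)) * q ^ (i + 1) * m (i + 1)
      = (k.choose i : ℝ) * p ^ (k - i) * q ^ (i + 1) * m (i + 1)
        + (k.choose (i + 1) : ℝ) * p ^ (k - i) * q ^ (i + 1) * m (i + 1) := by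
    intro i _
    rw [Nat.choose_succ_succ k i, Nat.succ_sub_succ]
    push_cast
    ring
  rw [Finset.sum_congr rfl step, Finset.sum_add_distrib, hA', hB]
  ring

lemma fwdDiff_mixSeq {p q : ℝ} (hpq : p + q = 1) (m : ℕ → ℝ) :
    Δ_[1] (mixSeq p q m) = fun k => q * mixSeq p q (Δ_[1] m) k := by
  funext k
  have : Δ_[1] (mixSeq p q m) k = mixSeq p q m (k + 1) - mixSeq p q m k := rfl
  rw [this, mixSeq_pascal]
  have hlin : mixSeq p q (Δ_[1] m) k
      = mixSeq p q (fun i => m (i + 1)) k - mixSeq p q m k := by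
    simp only [mixSeq, ← Finset.sum_sub_distrib]
    refine Finset.sum_congr rfl fun i _ => ?_
    have : Δ_[1] m i = m (i + 1) - m i := rfl
    rw [this]; ring
  rw [hlin]
  have hp : p = 1 - q := by linarith
  rw [hp]; ring

lemma fwdDiff_iter_mixSeq {p q : ℝ} (hpq : p + q = 1) (m : ℕ → ℝ) (j : ℕ) :
    (Δ_[1])^[j] (mixSeq p q m) = fun k => q ^ j * mixSeq p q ((Δ_[1])^[j] m) k := by
  induction j generalizing m with
  | zero => simp only [Function.iterate_zero, id_eq, pow_zero, one_mul]
  | succ j ih =>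
    rw [Function.iterate_succ_apply, fwdDiff_mixSeq hpq]
    have : (fun k => q * mixSeq p q (Δ_[1] m) k) = q • mixSeq p q (Δ_[1] m) := rfl
    rw [this, fwdDiff_iter_const_smul, ih]
    funext k
    simp only [Pi.smul_apply, smul_eq_mul, ← Function.iterate_succ_apply]
    rw [Function.iterate_succ_apply]
    ring

lemma AbsMono.mixSeq' {p q : ℝ} (hp : 0 ≤ p) (hq : 0 ≤ q) (hpq : p + q = 1)
    {m : ℕ → ℝ} (hm : AbsMono m) : AbsMono (mixSeq p q m) := by
  intro j k
  rw [fwdDiff_iter_mixSeq hpq]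
  have h1 : 0 ≤ mixSeq p q ((Δ_[1])^[j] m) k := by
    apply Finset.sum_nonneg
    intro i _
    have := hm j i
    positivity
  positivity



noncomputable def gφ (σ m : ℝ) : ℝ → ℝ :=
  fun x => (1 / (Real.sqrt (2 * Real.pi) * σ)) * Real.exp (-(x - m) ^ 2 / (2 * σ ^ 2))

lemma gφ_eq_gaussianPDFReal {σ : ℝ} (hσ : 0 < σ) (m : ℝ) :
    gφ σ m = ProbabilityTheory.gaussianPDFReal m (⟨σ ^ 2, sq_nonneg σ⟩ : NNReal) := by
  funext x
  rw [gφ]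
  show _ = (Real.sqrt (2 * Real.pi * σ ^ 2))⁻¹ * Real.exp (-(x - m) ^ 2 / (2 * σ ^ 2))
  have : Real.sqrt (2 * Real.pi * σ ^ 2) = Real.sqrt (2 * Real.pi) * σ := by
    rw [Real.sqrt_mul (by positivity) (σ ^ 2), Real.sqrt_sq hσ.le]
  rw [this, one_div]

lemma gφ_pos {σ : ℝ} (hσ : 0 < σ) (m x : ℝ) : 0 < gφ σ m x := by
  rw [gφ]
  have h2π : 0 < Real.sqrt (2 * Real.pi) := Real.sqrt_pos.mpr (by positivity)
  positivity

lemma gφ_integrable {σ : ℝ} (hσ : 0 < σ) (m : ℝ) : Integrable (gφ σ m) := by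
  rw [gφ_eq_gaussianPDFReal hσ]
  exact ProbabilityTheory.integrable_gaussianPDFReal m _

lemma gφ_integral {σ : ℝ} (hσ : 0 < σ) (m : ℝ) : ∫ x, gφ σ m x = 1 := by
  rw [gφ_eq_gaussianPDFReal hσ]
  refine ProbabilityTheory.integral_gaussianPDFReal_eq_one m (ne_of_gt ?_)
  exact NNReal.coe_pos (r := ⟨σ ^ 2, sq_nonneg σ⟩) |>.mp (show (0:ℝ) < σ ^ 2 by positivity)

lemma gφ_mul_ratio_pow {σ : ℝ} (hσ : 0 < σ) (κ s : ℝ) (i : ℕ) (x : ℝ) :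
    gφ σ κ x * (gφ σ (κ + s) x / gφ σ κ x) ^ i
      = Real.exp ((s ^ 2 / (2 * σ ^ 2)) * i * ((i : ℝ) - 1)) * gφ σ (κ + i * s) x := by
  have h2π : 0 < Real.sqrt (2 * Real.pi) := Real.sqrt_pos.mpr (by positivity)
  have hC : (0:ℝ) < 1 / (Real.sqrt (2 * Real.pi) * σ) := by positivity
  rw [gφ, gφ, gφ]
  rw [mul_div_mul_left _ _ (ne_of_gt hC)]
  rw [← Real.exp_sub, ← Real.exp_nat_mul, mul_assoc, ← Real.exp_add]
  rw [show Real.exp (s ^ 2 / (2 * σ ^ 2) * ↑i * ((i:ℝ) - 1)) *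
      (1 / (Real.sqrt (2 * Real.pi) * σ) * Real.exp (-(x - (κ + ↑i * s)) ^ 2 / (2 * σ ^ 2)))
      = 1 / (Real.sqrt (2 * Real.pi) * σ) *
        Real.exp (s ^ 2 / (2 * σ ^ 2) * ↑i * ((i:ℝ) - 1) + -(x - (κ + ↑i * s)) ^ 2 / (2 * σ ^ 2))
    from by rw [Real.exp_add]; ring]
  congr 1
  have hσ2 : σ ^ 2 ≠ 0 := by positivity
  field_simp
  ring

lemma F_expand {σ q : ℝ} (hσ : 0 < σ) (κ s : ℝ) (t : ℕ) (x : ℝ) :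
    gφ σ κ x * ((1 - q) + q * (gφ σ (κ + s) x / gφ σ κ x)) ^ t
      = ∑ i ∈ range (t + 1),
          ((t.choose i : ℝ) * (1 - q) ^ (t - i) * q ^ i *
            Real.exp ((s ^ 2 / (2 * σ ^ 2)) * i * ((i : ℝ) - 1))) * gφ σ (κ + i * s) x := by
  rw [add_comm ((1:ℝ) - q), add_pow, Finset.mul_sum]
  refine Finset.sum_congr rfl fun i _ => ?_
  rw [mul_pow]
  have h := gφ_mul_ratio_pow hσ κ s i x
  calc gφ σ κ x * (q ^ i * (gφ σ (κ + s) x / gφ σ κ x) ^ i * (1 - q) ^ (t - i) * (t.choose i : ℝ))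
      = (q ^ i * (1 - q) ^ (t - i) * (t.choose i : ℝ)) *
          (gφ σ κ x * (gφ σ (κ + s) x / gφ σ κ x) ^ i) := by ring
    _ = _ := by rw [h]; ring



lemma F_integral {σ q : ℝ} (hσ : 0 < σ) (κ s : ℝ) (t : ℕ) :
    ∫ x : ℝ, gφ σ κ x * ((1 - q) + q * (gφ σ (κ + s) x / gφ σ κ x)) ^ t
      = mixSeq (1 - q) q (eseq (s ^ 2 / (2 * σ ^ 2))) t := by
  rw [show (fun x : ℝ => gφ σ κ x * ((1 - q) + q * (gφ σ (κ + s) x / gφ σ κ x)) ^ t)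
      = fun x : ℝ => ∑ i ∈ range (t + 1),
          ((t.choose i : ℝ) * (1 - q) ^ (t - i) * q ^ i *
            Real.exp ((s ^ 2 / (2 * σ ^ 2)) * i * ((i : ℝ) - 1))) * gφ σ (κ + i * s) x
    from funext fun x => F_expand hσ κ s t x]
  rw [integral_finset_sum]
  · rw [mixSeq]
    refine Finset.sum_congr rfl fun i _ => ?_
    rw [integral_const_mul, gφ_integral hσ, eseq]
    ring
  · exact fun i _ => (gφ_integrable hσ (κ + i * s)).const_mul _

lemma F_integrable {σ q : ℝ} (hσ : 0 < σ) (κ s : ℝ) (t : ℕ) :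
    Integrable (fun x : ℝ => gφ σ κ x * ((1 - q) + q * (gφ σ (κ + s) x / gφ σ κ x)) ^ t) := by
  rw [show (fun x : ℝ => gφ σ κ x * ((1 - q) + q * (gφ σ (κ + s) x / gφ σ κ x)) ^ t)
      = fun x : ℝ => ∑ i ∈ range (t + 1),
          ((t.choose i : ℝ) * (1 - q) ^ (t - i) * q ^ i *
            Real.exp ((s ^ 2 / (2 * σ ^ 2)) * i * ((i : ℝ) - 1))) * gφ σ (κ + i * s) x
    from funext fun x => F_expand hσ κ s t x]
  exact integrable_finset_sum _ (fun i _ => (gφ_integrable hσ (κ + i * s)).const_mul _)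

lemma key_nonneg {M : ℕ → ℝ} (hM : AbsMono M) (j : ℕ) :
    0 ≤ ∑ t ∈ range (j + 1), ((-1 : ℝ) ^ (j - t) * (j.choose t : ℝ)) * M t := by
  have h0 := hM j 0
  rw [fwdDiff_iter_eq_sum_shift] at h0
  refine le_of_le_of_eq h0 (Finset.sum_congr rfl fun t _ => ?_)
  have h1 : (0 : ℕ) + t • 1 = t := by simp
  rw [h1, zsmul_eq_mul]
  push_cast
  ring

end Stmt13Aux

open Stmt13Aux

/-- Non-negativity of the product-form Pearson–Vajda
χ^j-pseudo-divergence: for `f` a product of Gaussian densities `N(κ_l, σ²)` and `g`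
the corresponding product of two-component Gaussian mixtures from q-coordinate-wise
Poisson sampling, for every positive integer `j`, `∫ f (g/f − 1)^j ≥ 0`. -/
theorem stmt_13 (d : ℕ) (σ q : ℝ) (hσ : 0 < σ) (hq0 : 0 ≤ q) (hq1 : q ≤ 1)
    (κ s : Fin d → ℝ)
    (φ : ℝ → ℝ → ℝ)
    (hφ : ∀ m x, φ m x =
      (1 / (Real.sqrt (2 * Real.pi) * σ)) * Real.exp (-(x - m) ^ 2 / (2 * σ ^ 2)))
    (f g : (Fin d → ℝ) → ℝ)
    (hf : ∀ x, f x = ∏ l, φ (κ l) (x l))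
    (hg : ∀ x, g x = ∏ l, ((1 - q) * φ (κ l) (x l) + q * φ (κ l + s l) (x l))) :
    ∀ j : ℕ, 0 < j →
      (0 : ℝ) ≤ ∫ x : Fin d → ℝ, f x * (g x / f x - 1) ^ j := by
  intro j _
  have hφg : ∀ m, φ m = gφ σ m := fun m => funext fun x => by rw [hφ]; rfl
  set F : Fin d → ℕ → ℝ → ℝ := fun l t x =>
    gφ σ (κ l) x * ((1 - q) + q * (gφ σ (κ l + s l) x / gφ σ (κ l) x)) ^ t with hF
  -- pointwise expansion of the integrand
  have hpt : ∀ x : Fin d → ℝ, f x * (g x / f x - 1) ^ j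
      = ∑ t ∈ range (j + 1), ((-1 : ℝ) ^ (j - t) * (j.choose t : ℝ)) * ∏ l, F l t (x l) := by
    intro x
    have hfx : f x = ∏ l, gφ σ (κ l) (x l) := by rw [hf]; simp only [hφg]
    have hgx : g x = ∏ l, (gφ σ (κ l) (x l) *
        ((1 - q) + q * (gφ σ (κ l + s l) (x l) / gφ σ (κ l) (x l)))) := by
      rw [hg]
      refine Finset.prod_congr rfl fun l _ => ?_
      have hpos := gφ_pos hσ (κ l) (x l)
      simp only [hφg]
      field_simp
    have hgf : g x / f x
        = ∏ l, ((1 - q) + q * (gφ σ (κ l + s l) (x l) / gφ σ (κ l) (x l))) := by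
      rw [hgx, hfx, ← Finset.prod_div_distrib]
      refine Finset.prod_congr rfl fun l _ => ?_
      have hpos := gφ_pos hσ (κ l) (x l)
      field_simp
    rw [hgf]
    set H := ∏ l, ((1 - q) + q * (gφ σ (κ l + s l) (x l) / gφ σ (κ l) (x l))) with hH
    have hsub : (H - 1 : ℝ) ^ j = ∑ t ∈ range (j + 1),
        H ^ t * (-1 : ℝ) ^ (j - t) * (j.choose t : ℝ) := by
      rw [sub_eq_add_neg, add_pow]
    rw [hsub, Finset.mul_sum]
    refine Finset.sum_congr rfl fun t _ => ?_
    have hprod : f x * H ^ t = ∏ l, F l t (x l) := by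
      rw [hfx, hH, ← Finset.prod_pow, ← Finset.prod_mul_distrib]
    calc f x * (H ^ t * (-1 : ℝ) ^ (j - t) * (j.choose t : ℝ))
        = ((-1 : ℝ) ^ (j - t) * (j.choose t : ℝ)) * (f x * H ^ t) := by ring
      _ = _ := by rw [hprod]
  rw [show (fun x : Fin d → ℝ => f x * (g x / f x - 1) ^ j)
      = fun x : Fin d → ℝ => ∑ t ∈ range (j + 1),
          ((-1 : ℝ) ^ (j - t) * (j.choose t : ℝ)) * ∏ l, F l t (x l)
    from funext hpt]
  have hFint : ∀ (t : ℕ) (l : Fin d), Integrable (F l t) :=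
    fun t l => F_integrable hσ (κ l) (s l) t
  rw [integral_finset_sum]
  swap
  · exact fun t _ => (Integrable.fintype_prod (f := fun l => F l t) (hFint t)).const_mul _
  have hM : ∀ t : ℕ, (∫ x : Fin d → ℝ, ∏ l, F l t (x l))
      = ∏ l, mixSeq (1 - q) q (eseq ((s l) ^ 2 / (2 * σ ^ 2))) t := by
    intro t
    rw [integral_fintype_prod_volume_eq_prod (f := fun l => F l t)]
    exact Finset.prod_congr rfl fun l _ => F_integral hσ (κ l) (s l) t
  have habs : AbsMono (fun t => ∏ l, mixSeq (1 - q) q (eseq ((s l) ^ 2 / (2 * σ ^ 2))) t) := by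
    apply absMono_prod
    intro l _
    refine AbsMono.mixSeq' (by linarith) hq0 (by ring) (absMono_eseq ?_)
    positivity
  have := key_nonneg habs j
  refine le_of_le_of_eq this (Finset.sum_congr rfl fun t _ => ?_)
  rw [integral_const_mul, hM t]
end

section
/- Fix an integer α ≥ 2 and reals q_1, q_2 ∈ (0,1) and τ > 0 with q_2² ≤ 1/(α(α−1)τ). Define ε(α) = (1/(α−1)) · log( (1−q_1)^α + ∑_{v=1}^{α} C(α,v)(1−q_1)^{α−v} q_1^v · exp( v(v−1) q_2² τ ) ). Then ε(α) ≤ (1/(α−1)) · log( 1 + 2α(α−1) q_1² q_2² τ ). In particular, as q_1, q_2 → 0, ε(α) = O(α q_1² q_2² τ). -/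
open Finset

lemma exp_le_one_add_two_mul {y : ℝ} (h0 : 0 ≤ y) (h1 : y ≤ 1) :
    Real.exp y ≤ 1 + 2 * y := by
  have h := convexOn_exp.2 (Set.mem_univ (0:ℝ)) (Set.mem_univ (1:ℝ))
    (by linarith : (0:ℝ) ≤ 1 - y) h0 (by ring)
  simp only [smul_eq_mul, mul_zero, mul_one, Real.exp_zero, zero_add] at h
  have he : Real.exp 1 ≤ 3 := by
    have := Real.exp_one_lt_d9; linarith
  nlinarith

lemma binom_sum (n : ℕ) (p : ℝ) :
    ∑ v ∈ range (n+1), (n.choose v : ℝ) * (1-p)^(n-v) * p^v = 1 := by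
  calc ∑ v ∈ range (n+1), (n.choose v : ℝ) * (1-p)^(n-v) * p^v
      = ∑ v ∈ range (n+1), p^v * (1-p)^(n-v) * (n.choose v : ℝ) := by
        apply Finset.sum_congr rfl; intros; ring
    _ = (p + (1-p))^n := (add_pow p (1-p) n).symm
    _ = 1 := by norm_num

lemma choose_id (m k : ℕ) :
    (k+2)*(k+1)*((m+2).choose (k+2)) = (m+2)*((m+1)*(m.choose k)) := by
  have h1 := Nat.add_one_mul_choose_eq m k
  have h2 := Nat.add_one_mul_choose_eq (m+1) (k+1)
  calc (k+2)*(k+1)*((m+2).choose (k+2)) = ((m+2).choose (k+2) * (k+2)) * (k+1) := by ring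
    _ = ((m+2) * ((m+1).choose (k+1))) * (k+1) := by rw [← h2]
    _ = (m+2) * ((m+1).choose (k+1) * (k+1)) := by ring
    _ = (m+2) * ((m+1) * (m.choose k)) := by rw [← h1]

lemma fact_moment (m : ℕ) (p : ℝ) :
    ∑ v ∈ range (m+2+1),
      (v:ℝ)*((v:ℝ)-1)*(((m+2).choose v : ℝ) * (1-p)^(m+2-v) * p^v)
    = ((m:ℝ)+2)*((m:ℝ)+1)*p^2 := by
  rw [Finset.sum_range_succ', Finset.sum_range_succ']
  have hstep : ∀ k ∈ range (m+1),
      ((k+1+1 : ℕ):ℝ)*(((k+1+1 : ℕ):ℝ)-1)*(((m+2).choose (k+1+1) : ℝ) * (1-p)^(m+2-(k+1+1)) * p^(k+1+1))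
      = ((m:ℝ)+2)*((m:ℝ)+1)*p^2 * ((m.choose k : ℝ) * (1-p)^(m-k) * p^k) := by
    intro k hk
    have hc : ((k:ℝ)+2)*((k:ℝ)+1)*(((m+2).choose (k+2)) : ℝ)
        = ((m:ℝ)+2)*(((m:ℝ)+1)*((m.choose k : ℝ))) := by
      exact_mod_cast congrArg (Nat.cast : ℕ → ℝ) (choose_id m k)
    have hsub : m+2-(k+1+1) = m-k := by omega
    rw [hsub]
    push_cast
    linear_combination ((1-p)^(m-k) * p^k * p^2) * hc
  rw [Finset.sum_congr rfl hstep, ← Finset.mul_sum, binom_sum m p]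
  norm_num

/-- Asymptotic RDP bound of (q₁,q₂)-twice sampling: if
`q₂² ≤ 1/(α(α−1)τ)`, then the twice-sampling RDP bound
`ε(α) = (1/(α−1)) log((1−q₁)^α + ∑_{v=1}^α C(α,v)(1−q₁)^{α−v} q₁^v e^{v(v−1)q₂²τ})`
satisfies `ε(α) ≤ (1/(α−1)) log(1 + 2α(α−1) q₁² q₂² τ)`. -/
theorem stmt_14 (α : ℕ) (hα : 2 ≤ α) (q1 q2 τ : ℝ)
    (hq10 : 0 < q1) (hq11 : q1 < 1) (hq20 : 0 < q2) (hq21 : q2 < 1) (hτ : 0 < τ)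
    (hq2 : q2 ^ 2 ≤ 1 / ((α : ℝ) * ((α : ℝ) - 1) * τ)) :
    (1 / ((α : ℝ) - 1)) *
        Real.log ((1 - q1) ^ α +
          ∑ v ∈ Finset.Icc 1 α, (α.choose v : ℝ) * (1 - q1) ^ (α - v) * q1 ^ v *
            Real.exp ((v : ℝ) * ((v : ℝ) - 1) * q2 ^ 2 * τ))
      ≤ (1 / ((α : ℝ) - 1)) *
        Real.log (1 + 2 * (α : ℝ) * ((α : ℝ) - 1) * q1 ^ 2 * q2 ^ 2 * τ) := by
  obtain ⟨m, rfl⟩ : ∃ m, α = m + 2 := ⟨α - 2, by omega⟩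
  set g : ℕ → ℝ := fun v => ((m+2).choose v : ℝ) * (1 - q1) ^ (m+2-v) * q1 ^ v *
      Real.exp ((v : ℝ) * ((v : ℝ) - 1) * q2 ^ 2 * τ) with hg
  have hA2 : (2:ℝ) ≤ ((m+2:ℕ):ℝ) := by push_cast; linarith [Nat.cast_nonneg (α := ℝ) m]
  have hApos : (0:ℝ) < ((m+2:ℕ):ℝ) * (((m+2:ℕ):ℝ) - 1) * τ := by
    have : (0:ℝ) < ((m+2:ℕ):ℝ) * (((m+2:ℕ):ℝ) - 1) := by nlinarith
    positivity
  have hAx : q2^2 * (((m+2:ℕ):ℝ) * (((m+2:ℕ):ℝ) - 1) * τ) ≤ 1 := by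
    exact (le_div_iff₀ hApos).mp hq2
  -- split off the v = 0 term
  have hsplit : (1 - q1) ^ (m+2) +
      ∑ v ∈ Finset.Icc 1 (m+2), ((m+2).choose v : ℝ) * (1 - q1) ^ (m+2-v) * q1 ^ v *
        Real.exp ((v : ℝ) * ((v : ℝ) - 1) * q2 ^ 2 * τ)
      = ∑ v ∈ range (m+3), g v := by
    rw [Finset.range_eq_Ico, Finset.sum_eq_sum_Ico_succ_bot (by omega : 0 < m+3) g]
    have : Finset.Ico 1 (m+3) = Finset.Icc 1 (m+2) := Finset.Ico_add_one_right_eq_Icc 1 (m+2)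
    rw [this, hg]
    norm_num
  rw [hsplit]
  have hpos : (0:ℝ) < ∑ v ∈ range (m+3), g v := by
    apply Finset.sum_pos
    · intro v hv
      simp only [Finset.mem_range] at hv
      have hcp : 0 < (m+2).choose v := Nat.choose_pos (by omega)
      have : (0:ℝ) < ((m+2).choose v : ℝ) := by exact_mod_cast hcp
      have h1q : (0:ℝ) < 1 - q1 := by linarith
      positivity
    · exact ⟨0, by simp⟩
  have hbound : ∀ v ∈ range (m+3), g v ≤
      ((m+2).choose v : ℝ) * (1 - q1) ^ (m+2-v) * q1 ^ v *
        (1 + 2 * ((v : ℝ) * ((v : ℝ) - 1) * q2 ^ 2 * τ)) := by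
    intro v hv
    simp only [Finset.mem_range] at hv
    have hvle : (v:ℝ) ≤ ((m+2:ℕ):ℝ) := by exact_mod_cast Nat.le_of_lt_succ hv
    have hv0 : (0:ℝ) ≤ (v:ℝ) := Nat.cast_nonneg v
    have h01 : (0:ℝ) ≤ (v:ℝ) * ((v:ℝ) - 1) := by
      rcases v with _ | k
      · norm_num
      · push_cast
        nlinarith [Nat.cast_nonneg (α := ℝ) k]
    have hy0 : (0:ℝ) ≤ (v:ℝ) * ((v:ℝ) - 1) * q2^2 * τ := by positivity
    have hy1 : (v:ℝ) * ((v:ℝ) - 1) * q2^2 * τ ≤ 1 := by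
      have hvv : (v:ℝ) * ((v:ℝ) - 1) ≤ ((m+2:ℕ):ℝ) * (((m+2:ℕ):ℝ) - 1) := by
        nlinarith
      have h2 := mul_le_mul_of_nonneg_right hvv (by positivity : (0:ℝ) ≤ q2^2*τ)
      nlinarith [h2, hAx]
    have hcoef : (0:ℝ) ≤ ((m+2).choose v : ℝ) * (1 - q1) ^ (m+2-v) * q1 ^ v := by
      have h1q : (0:ℝ) ≤ 1 - q1 := by linarith
      positivity
    calc g v = ((m+2).choose v : ℝ) * (1 - q1) ^ (m+2-v) * q1 ^ v *
          Real.exp ((v : ℝ) * ((v : ℝ) - 1) * q2 ^ 2 * τ) := rfl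
      _ ≤ _ := mul_le_mul_of_nonneg_left (exp_le_one_add_two_mul hy0 hy1) hcoef
  have hsum : ∑ v ∈ range (m+3), ((m+2).choose v : ℝ) * (1 - q1) ^ (m+2-v) * q1 ^ v *
        (1 + 2 * ((v : ℝ) * ((v : ℝ) - 1) * q2 ^ 2 * τ))
      = 1 + 2 * ((m+2:ℕ):ℝ) * (((m+2:ℕ):ℝ) - 1) * q1 ^ 2 * q2 ^ 2 * τ := by
    have hterm : ∀ v ∈ range (m+3),
        ((m+2).choose v : ℝ) * (1 - q1) ^ (m+2-v) * q1 ^ v *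
          (1 + 2 * ((v : ℝ) * ((v : ℝ) - 1) * q2 ^ 2 * τ))
        = ((m+2).choose v : ℝ) * (1 - q1) ^ (m+2-v) * q1 ^ v +
          (2 * q2 ^ 2 * τ) * ((v:ℝ) * ((v:ℝ) - 1) *
            (((m+2).choose v : ℝ) * (1 - q1) ^ (m+2-v) * q1 ^ v)) := by
      intro v _; ring
    rw [Finset.sum_congr rfl hterm, Finset.sum_add_distrib, ← Finset.mul_sum]
    have e1 := binom_sum (m+2) q1
    have e2 := fact_moment m q1
    rw [e1, e2]
    push_cast
    ring
  have hle := le_trans (Finset.sum_le_sum hbound) (le_of_eq hsum)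
  have hc : (0:ℝ) ≤ 1 / (((m+2:ℕ):ℝ) - 1) := by
    have : (0:ℝ) < ((m+2:ℕ):ℝ) - 1 := by linarith
    positivity
  exact mul_le_mul_of_nonneg_left (Real.log_le_log hpos hle) hc
end

section
/- Let W be a d × d real orthogonal matrix with entries w_{ij} and let s = (s_1,…,s_d) ∈ ℝ^d. Then ∑_{i=1}^d √( ∑_{j=1}^d s_j² w_{ij}² ) ≥ ∑_{i=1}^d |s_i|. -/
open Finset

/-- For a real orthogonal `d × d` matrix `W` and any `s ∈ ℝ^d`,
`∑ i, √(∑ j, s j² · W i j²) ≥ ∑ i, |s i|`. -/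
theorem stmt_17 (d : ℕ) (W : Matrix (Fin d) (Fin d) ℝ)
    (hW1 : W * W.transpose = 1) (hW2 : W.transpose * W = 1)
    (s : Fin d → ℝ) :
    ∑ i, Real.sqrt (∑ j, s j ^ 2 * W i j ^ 2) ≥ ∑ i, |s i| := by
  have hrow : ∀ i, ∑ j, W i j ^ 2 = 1 := by
    intro i
    have := congrFun (congrFun hW1 i) i
    simpa [Matrix.mul_apply, Matrix.one_apply, pow_two] using this
  have hcol : ∀ j, ∑ i, W i j ^ 2 = 1 := by
    intro j
    have := congrFun (congrFun hW2 j) j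
    simpa [Matrix.mul_apply, Matrix.one_apply, pow_two] using this
  have key : ∀ i, ∑ j, |s j| * W i j ^ 2 ≤ Real.sqrt (∑ j, s j ^ 2 * W i j ^ 2) := by
    intro i
    have h := Real.sum_mul_le_sqrt_mul_sqrt Finset.univ (fun j => W i j)
      (fun j => |s j| * W i j)
    have h1 : ∑ j, W i j * (|s j| * W i j) = ∑ j, |s j| * W i j ^ 2 := by
      apply Finset.sum_congr rfl; intro j _; ring
    have h2 : ∑ j, (|s j| * W i j) ^ 2 = ∑ j, s j ^ 2 * W i j ^ 2 := by
      apply Finset.sum_congr rfl; intro j _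
      rw [mul_pow, sq_abs]
    rw [h1, h2, hrow i, Real.sqrt_one, one_mul] at h
    exact h
  calc ∑ i, |s i| = ∑ j, |s j| * ∑ i, W i j ^ 2 := by
        simp [hcol]
    _ = ∑ i, ∑ j, |s j| * W i j ^ 2 := by
        rw [Finset.sum_comm]
        exact Finset.sum_congr rfl fun j _ => Finset.mul_sum _ _ _
    _ ≤ ∑ i, Real.sqrt (∑ j, s j ^ 2 * W i j ^ 2) :=
        Finset.sum_le_sum fun i _ => key i
end

section
/- Fix σ > 0, s ∈ ℝ, q ∈ [0,1], and a positive integer α. Let φ_m(x) = (1/(√(2π)σ)) exp(−(x−m)²/(2σ²)) denote the density of N(m,σ²). Then ∫_ℝ ( (1−q)φ_0(x) + q φ_s(x) )^α · φ_0(x)^{1−α} dx = ∑_{v=0}^{α} C(α,v)(1−q)^{α−v} q^v · exp( v(v−1)s² / (2σ²) ). In particular, ∫_ℝ φ_0(x) (φ_s(x)/φ_0(x))^v dx = exp( v(v−1)s²/(2σ²) ) for every non-negative integer v. -/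
open Finset MeasureTheory

/-- Closed-form moments of the one-dimensional q-Poisson-subsampled
Gaussian mechanism: with `φ_m` the density of `N(m,σ²)`,
`∫ ((1−q)φ₀ + qφ_s)^α φ₀^{1−α} = ∑_{v=0}^α C(α,v)(1−q)^{α−v} q^v e^{v(v−1)s²/(2σ²)}`,
and `∫ φ₀ (φ_s/φ₀)^v = e^{v(v−1)s²/(2σ²)}` for every natural `v`. -/
theorem stmt_19 (σ s q : ℝ) (hσ : 0 < σ) (hq0 : 0 ≤ q) (hq1 : q ≤ 1)
    (α : ℕ) (hα : 0 < α)
    (φ : ℝ → ℝ → ℝ)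
    (hφ : ∀ m x, φ m x =
      (1 / (Real.sqrt (2 * Real.pi) * σ)) * Real.exp (-(x - m) ^ 2 / (2 * σ ^ 2))) :
    (∫ x : ℝ, ((1 - q) * φ 0 x + q * φ s x) ^ (α : ℝ) * φ 0 x ^ (1 - (α : ℝ)))
      = ∑ v ∈ Finset.range (α + 1), (α.choose v : ℝ) * (1 - q) ^ (α - v) * q ^ v *
          Real.exp ((v : ℝ) * ((v : ℝ) - 1) * s ^ 2 / (2 * σ ^ 2))
    ∧ ∀ v : ℕ, (∫ x : ℝ, φ 0 x * (φ s x / φ 0 x) ^ v)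
        = Real.exp ((v : ℝ) * ((v : ℝ) - 1) * s ^ 2 / (2 * σ ^ 2)) := by
  have hσ2 : (0:ℝ) < 2 * σ ^ 2 := by positivity
  have hπ : (0:ℝ) < Real.sqrt (2 * Real.pi) * σ := by
    have : (0:ℝ) < Real.sqrt (2 * Real.pi) := Real.sqrt_pos.2 (by positivity)
    positivity
  set c : ℝ := 1 / (Real.sqrt (2 * Real.pi) * σ) with hc
  have hcpos : 0 < c := by positivity
  -- Gaussian integral with center μ
  have hb : (0:ℝ) < 1 / (2 * σ ^ 2) := by positivity
  have heq : ∀ μ x : ℝ, Real.exp (-(x - μ) ^ 2 / (2 * σ ^ 2))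
      = Real.exp (-(1 / (2 * σ ^ 2)) * (x - μ) ^ 2) := by
    intro μ x; congr 1; field_simp
  have hint : ∀ μ : ℝ, Integrable (fun x : ℝ => Real.exp (-(x - μ) ^ 2 / (2 * σ ^ 2))) := by
    intro μ
    simp only [heq]
    exact (integrable_exp_neg_mul_sq hb).comp_sub_right μ
  have hgauss : ∀ μ : ℝ, (∫ x : ℝ, Real.exp (-(x - μ) ^ 2 / (2 * σ ^ 2)))
      = Real.sqrt (2 * Real.pi) * σ := by
    intro μ
    simp only [heq]
    rw [integral_sub_right_eq_self (fun x : ℝ => Real.exp (-(1 / (2 * σ ^ 2)) * x ^ 2)) μ,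
      integral_gaussian]
    rw [show Real.pi / (1 / (2 * σ ^ 2)) = 2 * Real.pi * σ ^ 2 by field_simp]
    rw [Real.sqrt_mul (by positivity), Real.sqrt_sq hσ.le]
  have hφpos : ∀ m x, 0 < φ m x := by
    intro m x; rw [hφ]; positivity
  -- pointwise identity: φ 0 x * (φ s x / φ 0 x) ^ v equals const * shifted gaussian
  have hkey : ∀ (v : ℕ) (x : ℝ), φ 0 x * (φ s x / φ 0 x) ^ v
      = Real.exp ((v : ℝ) * ((v : ℝ) - 1) * s ^ 2 / (2 * σ ^ 2)) *
        (c * Real.exp (-(x - (v : ℝ) * s) ^ 2 / (2 * σ ^ 2))) := by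
    intro v x
    have h1 : φ s x / φ 0 x = Real.exp ((2 * s * x - s ^ 2) / (2 * σ ^ 2)) := by
      rw [hφ, hφ, mul_div_mul_left _ _ (by positivity), ← Real.exp_sub]
      congr 1; field_simp; ring
    rw [h1, hφ, ← Real.exp_nat_mul, mul_assoc, ← Real.exp_add, mul_left_comm, ← Real.exp_add]
    congr 2
    field_simp
    ring
  have hintv : ∀ v : ℕ, Integrable (fun x : ℝ => φ 0 x * (φ s x / φ 0 x) ^ v) := by
    intro v
    simp only [hkey]
    exact (((hint ((v:ℝ) * s)).const_mul c).const_mul _)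
  have hpart2 : ∀ v : ℕ, (∫ x : ℝ, φ 0 x * (φ s x / φ 0 x) ^ v)
      = Real.exp ((v : ℝ) * ((v : ℝ) - 1) * s ^ 2 / (2 * σ ^ 2)) := by
    intro v
    simp only [hkey]
    rw [integral_const_mul, integral_const_mul, hgauss]
    rw [hc]
    field_simp
  refine ⟨?_, hpart2⟩
  -- pointwise binomial expansion of the integrand
  have hpt : ∀ x : ℝ, ((1 - q) * φ 0 x + q * φ s x) ^ (α : ℝ) * φ 0 x ^ (1 - (α : ℝ))
      = ∑ v ∈ Finset.range (α + 1), (α.choose v : ℝ) * (1 - q) ^ (α - v) * q ^ v *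
          (φ 0 x * (φ s x / φ 0 x) ^ v) := by
    intro x
    have h0 : (0:ℝ) < φ 0 x := hφpos 0 x
    rw [Real.rpow_natCast, Real.rpow_sub h0, Real.rpow_one, Real.rpow_natCast]
    have hexp : ((1 - q) * φ 0 x + q * φ s x) ^ α
        = (q * (φ s x / φ 0 x) + (1 - q)) ^ α * φ 0 x ^ α := by
      rw [← mul_pow]
      congr 1
      field_simp
      ring
    rw [hexp, add_pow]
    rw [Finset.sum_mul, Finset.sum_mul]
    refine Finset.sum_congr rfl fun v hv => ?_
    rw [mul_pow]
    field_simp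
  calc (∫ x : ℝ, ((1 - q) * φ 0 x + q * φ s x) ^ (α : ℝ) * φ 0 x ^ (1 - (α : ℝ)))
      = ∫ x : ℝ, ∑ v ∈ Finset.range (α + 1), (α.choose v : ℝ) * (1 - q) ^ (α - v) * q ^ v *
          (φ 0 x * (φ s x / φ 0 x) ^ v) := by simp only [hpt]
    _ = ∑ v ∈ Finset.range (α + 1), ∫ x : ℝ, (α.choose v : ℝ) * (1 - q) ^ (α - v) * q ^ v *
          (φ 0 x * (φ s x / φ 0 x) ^ v) := by
        refine integral_finset_sum _ fun v _ => ?_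
        exact (hintv v).const_mul _
    _ = ∑ v ∈ Finset.range (α + 1), (α.choose v : ℝ) * (1 - q) ^ (α - v) * q ^ v *
          Real.exp ((v : ℝ) * ((v : ℝ) - 1) * s ^ 2 / (2 * σ ^ 2)) := by
        refine Finset.sum_congr rfl fun v _ => ?_
        rw [integral_const_mul, hpart2 v]
end
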